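/- arXiv:2307.15013 — 12 statements merged into one kernel-verified Lean document; each statement's English description precedes it below -/
import Mathlib

section
/- Let G be a locally compact, compactly generated group with Haar measure m and compact symmetric generating set Ω. Suppose there exist an integer d ≥ 0 and a constant c > 0 such that m(Ωⁿ)/n^d → c as n → ∞ (Breuillard's growth limit). Then for every a ∈ ℕ there exists N ∈ ℕ such that for all n ≥ N and every g ∈ G, the translate g·Ω^{an} can be covered by at most (a+1)^d translates of Ω^{2n}, i.e. there is a finite set F ⊆ G with |F| ≤ (a+1)^d and g·Ω^{an} ⊆ ⋃_{h∈F} h·Ω^{2n}. -/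
open scoped Pointwise ENNReal
open MeasureTheory Filter

lemma aux_compact_pow {G : Type*} [Group G] [TopologicalSpace G] [IsTopologicalGroup G]
    {Ω : Set G} (hΩc : IsCompact Ω) : ∀ k : ℕ, IsCompact (Ω ^ k)
  | 0 => by rw [pow_zero, ← Set.singleton_one]; exact isCompact_singleton
  | (k+1) => by rw [pow_succ]; exact (aux_compact_pow hΩc k).mul hΩc

lemma aux_cover {G : Type*} [Group G] [TopologicalSpace G] [IsTopologicalGroup G]
    [T2Space G] [MeasurableSpace G] [BorelSpace G]
    (m : Measure G) [m.IsHaarMeasure]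
    (Ω : Set G) (hΩc : IsCompact Ω) (hΩsymm : Ω⁻¹ = Ω)
    (K a n : ℕ) (hone : (1:G) ∈ Ω ^ (2*n))
    (hpos : 0 < (m (Ω ^ n)).toReal)
    (hlt : (m (Ω ^ ((a+1)*n))).toReal < (K+1) * (m (Ω ^ n)).toReal)
    (g : G) :
    ∃ F : Finset G, F.card ≤ K ∧ g • Ω ^ (a*n) ⊆ ⋃ h ∈ F, h • Ω ^ (2*n) := by
  classical
  have hfin : ∀ k : ℕ, m (Ω ^ k) ≠ ⊤ := fun k => (aux_compact_pow hΩc k).measure_lt_top.ne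
  set P : Finset G → Prop := fun F =>
    ↑F ⊆ g • Ω ^ (a*n) ∧ (F : Set G).PairwiseDisjoint (fun h => h • Ω ^ n) with hP
  -- cardinality bound for separated sets
  have hcard : ∀ F : Finset G, P F → F.card ≤ K := by
    intro F hF
    have hmeas : ∀ h : G, MeasurableSet (h • Ω ^ n) := fun h =>
      ((aux_compact_pow hΩc n).smul h).isClosed.measurableSet
    have hsub : (⋃ h ∈ F, h • Ω ^ n) ⊆ g • Ω ^ ((a+1)*n) := by
      intro x hx
      simp only [Set.mem_iUnion] at hx
      obtain ⟨h, hhF, hxh⟩ := hx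
      obtain ⟨w, hw, rfl⟩ := hF.1 hhF
      obtain ⟨p, hp, rfl⟩ := hxh
      refine ⟨w * p, ?_, by simp [mul_assoc]⟩
      have : w * p ∈ Ω ^ (a*n) * Ω ^ n := Set.mul_mem_mul hw hp
      rwa [← pow_add, ← add_one_mul] at this
    have hmu : m (⋃ h ∈ F, h • Ω ^ n) = F.card * m (Ω ^ n) := by
      rw [measure_biUnion_finset hF.2 (fun h _ => hmeas h)]
      simp [measure_smul, Finset.sum_const, nsmul_eq_mul]
    have hle : (F.card : ℝ≥0∞) * m (Ω ^ n) ≤ m (Ω ^ ((a+1)*n)) := by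
      rw [← hmu]
      calc m (⋃ h ∈ F, h • Ω ^ n) ≤ m (g • Ω ^ ((a+1)*n)) := measure_mono hsub
        _ = m (Ω ^ ((a+1)*n)) := measure_smul m g _
    have hleR : (F.card : ℝ) * (m (Ω ^ n)).toReal ≤ (m (Ω ^ ((a+1)*n))).toReal := by
      have := ENNReal.toReal_mono (hfin _) hle
      simpa [ENNReal.toReal_mul] using this
    have : (F.card : ℝ) < K + 1 := by
      by_contra hcon
      push_neg at hcon
      have : ((K:ℝ)+1) * (m (Ω ^ n)).toReal ≤ (F.card : ℝ) * (m (Ω ^ n)).toReal :=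
        mul_le_mul_of_nonneg_right hcon hpos.le
      linarith
    exact_mod_cast Nat.lt_add_one_iff.mp (by exact_mod_cast this)
  -- maximal separated set
  set T : Set ℕ := {k | ∃ F : Finset G, P F ∧ F.card = k} with hT
  have hTne : T.Nonempty := ⟨0, ∅, ⟨by simp, by simp⟩, rfl⟩
  have hTbdd : BddAbove T := ⟨K, fun k ⟨F, hF, hk⟩ => hk ▸ hcard F hF⟩
  obtain ⟨F, hF, hFcard⟩ := Nat.sSup_mem hTne hTbdd
  refine ⟨F, hFcard ▸ csSup_le hTne (fun k ⟨F', hF', hk⟩ => hk ▸ hcard F' hF'), ?_⟩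
  -- covering by maximality
  intro x hx
  by_contra hxc
  simp only [Set.mem_iUnion, not_exists] at hxc
  -- x • Ωⁿ is disjoint from all h • Ωⁿ, h ∈ F
  have hdisj : ∀ h ∈ F, Disjoint (x • Ω ^ n) (h • Ω ^ n) := by
    intro h hh
    rw [Set.disjoint_left]
    rintro y ⟨p, hp, rfl⟩ ⟨q, hq, hy⟩
    apply hxc h hh
    refine ⟨q * p⁻¹, ?_, ?_⟩
    · have hpinv : p⁻¹ ∈ Ω ^ n := by
        rw [← hΩsymm, inv_pow]
        exact Set.inv_mem_inv.mpr hp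
      have hmem : q * p⁻¹ ∈ Ω ^ n * Ω ^ n := Set.mul_mem_mul hq hpinv
      rwa [two_mul, pow_add]
    · have h1 : h * q = x * p := hy
      have h2 : x = h * q * p⁻¹ := by rw [h1, mul_inv_cancel_right]
      simp [smul_eq_mul, h2, mul_assoc]
  have hxF : x ∉ F := by
    intro hxF
    exact hxc x hxF ⟨1, hone, by simp⟩
  have hP' : P (insert x F) := by
    constructor
    · intro y hy
      simp only [Finset.coe_insert, Set.mem_insert_iff] at hy
      rcases hy with rfl | hy
      · exact hx
      · exact hF.1 hy
    · intro u hu v hv huv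
      simp only [Finset.coe_insert, Set.mem_insert_iff] at hu hv
      rcases hu with rfl | hu <;> rcases hv with rfl | hv
      · exact absurd rfl huv
      · exact hdisj v hv
      · exact (hdisj u hu).symm
      · exact hF.2 hu hv huv
  have hle2 : F.card + 1 ≤ sSup T := by
    have : F.card + 1 ∈ T := ⟨insert x F, hP', by rw [Finset.card_insert_of_notMem hxF]⟩
    exact le_csSup hTbdd this
  exact Nat.not_succ_le_self _ (hFcard ▸ hle2)

/-- **Covering by translates in groups of polynomial growth.**
Let `G` be a locally compact, compactly generated group with Haar measure `m` and compact
symmetric generating set `Ω`.  Suppose there are an integer `d ≥ 0` and a constant `c > 0`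
such that `m(Ωⁿ)/n^d → c` as `n → ∞`.  Then for every `a ∈ ℕ` there is `N` such that for all
`n ≥ N` and every `g ∈ G` the translate `g·Ω^(a*n)` can be covered by at most `(a+1)^d`
translates of `Ω^(2*n)`. -/
theorem stmt_0 {G : Type*} [Group G] [TopologicalSpace G] [IsTopologicalGroup G]
    [LocallyCompactSpace G] [T2Space G] [MeasurableSpace G] [BorelSpace G]
    (m : Measure G) [m.IsHaarMeasure]
    (Ω : Set G) (hΩc : IsCompact Ω) (hΩsymm : Ω⁻¹ = Ω)
    (hΩgen : ∀ g : G, ∃ n : ℕ, g ∈ Ω ^ n)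
    (d : ℕ) (c : ℝ) (hc : 0 < c)
    (hlim : Tendsto (fun n : ℕ => (m (Ω ^ n)).toReal / (n : ℝ) ^ d) atTop (nhds c))
    (a : ℕ) :
    ∃ N : ℕ, ∀ n : ℕ, N ≤ n → ∀ g : G, ∃ F : Finset G,
      F.card ≤ (a + 1) ^ d ∧ g • Ω ^ (a * n) ⊆ ⋃ h ∈ F, h • Ω ^ (2 * n) := by
  set f : ℕ → ℝ := fun n => (m (Ω ^ n)).toReal with hf
  set K : ℕ := (a + 1) ^ d with hK
  -- eventual positivity
  have hev_half : ∀ᶠ n : ℕ in atTop, c / 2 < f n / (n : ℝ) ^ d :=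
    hlim.eventually (lt_mem_nhds (by linarith : c / 2 < c))
  have hev_pos : ∀ᶠ n : ℕ in atTop, 0 < f n := by
    filter_upwards [hev_half, eventually_ge_atTop 1] with n h1 h2
    have hnd : (0:ℝ) < (n : ℝ) ^ d := by positivity
    have : 0 < f n / (n:ℝ)^d := lt_trans (by positivity) h1
    exact (div_pos_iff.mp this).resolve_right (fun h => absurd h.2 (not_lt.mpr hnd.le)) |>.1
  -- Ω is nonempty
  have hΩne : Ω.Nonempty := by
    by_contra hempty
    rw [Set.not_nonempty_iff_eq_empty] at hempty
    obtain ⟨n, hn1, hn2⟩ := (hev_pos.and (eventually_ge_atTop 1)).exists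
    rw [hf] at hn1
    simp only [hempty, Set.empty_pow (by omega : n ≠ 0), measure_empty] at hn1
    norm_num at hn1
  have hone : ∀ n : ℕ, (1:G) ∈ Ω ^ (2*n) := by
    intro n
    obtain ⟨x, hx⟩ := hΩne
    have h2 : (1:G) ∈ Ω ^ 2 := by
      rw [sq]
      exact ⟨x, hx, x⁻¹, hΩsymm ▸ Set.inv_mem_inv.mpr hx, mul_inv_cancel x⟩
    rw [pow_mul]
    exact Set.one_mem_pow h2
  -- growth ratio
  have hmul : Tendsto (fun n : ℕ => (a+1) * n) atTop atTop :=
    tendsto_atTop_atTop.mpr fun b => ⟨b, fun n hn =>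
      le_trans hn (Nat.le_mul_of_pos_left n (Nat.succ_pos a))⟩
  have h1 : Tendsto (fun n : ℕ => f ((a+1)*n) / (((a+1)*n : ℕ) : ℝ) ^ d) atTop (nhds c) :=
    hlim.comp hmul
  have h1' : Tendsto (fun n : ℕ => f ((a+1)*n) / (n : ℝ) ^ d) atTop
      (nhds (c * ((a:ℝ)+1) ^ d)) := by
    refine ((h1.mul_const (((a:ℝ)+1) ^ d)).congr' ?_)
    filter_upwards [eventually_ge_atTop 1] with n hn
    have hn0 : (0:ℝ) < (n:ℝ) := by exact_mod_cast hn
    have : (((a+1)*n : ℕ) : ℝ) ^ d = ((a:ℝ)+1)^d * (n:ℝ)^d := by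
      push_cast
      rw [mul_pow]
    rw [this]
    field_simp
  have h2 : Tendsto (fun n : ℕ => (((a:ℝ)+1)^d + 1) * (f n / (n : ℝ) ^ d)) atTop
      (nhds ((((a:ℝ)+1)^d + 1) * c)) := hlim.const_mul _
  have hltc : c * ((a:ℝ)+1)^d < (((a:ℝ)+1)^d + 1) * c := by nlinarith [pow_pos (by positivity : (0:ℝ) < (a:ℝ)+1) d]
  have hev_lt : ∀ᶠ n : ℕ in atTop, f ((a+1)*n) < ((K:ℝ) + 1) * f n := by
    filter_upwards [h1'.eventually_lt h2 hltc, eventually_ge_atTop 1] with n hlt hn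
    have hnd : (0:ℝ) < (n : ℝ) ^ d := by positivity
    have hKcast : ((K:ℝ)) = ((a:ℝ)+1)^d := by rw [hK]; push_cast; ring
    rw [mul_div_assoc' , div_lt_div_iff₀ hnd hnd] at hlt
    rw [hKcast]
    nlinarith
  obtain ⟨N, hN⟩ := eventually_atTop.mp (hev_pos.and hev_lt)
  refine ⟨N, fun n hn g => ?_⟩
  obtain ⟨hpos, hlt⟩ := hN n hn
  exact aux_cover m Ω hΩc hΩsymm K a n (hone n) hpos hlt g
end

section
/- Let K and K' be compact neighbourhoods of the identity in G such that a compact set S ⊆ X is both a K-slice and a K'-slice. Then S ∩ (K·S)° = S ∩ (K'·S)°, where (·)° denotes interior in X. -/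
open scoped Pointwise

/-- `S` is a `K`-slice for the action of `G` on `X`: `S` is compact and the action map
`K × S → X, (g, x) ↦ g • x` is injective. -/
def IsSlice {G X : Type*} [Group G] [TopologicalSpace G] [TopologicalSpace X]
    [MulAction G X] (K : Set G) (S : Set X) : Prop :=
  IsCompact S ∧ Set.InjOn (fun p : G × X => p.1 • p.2) (K ×ˢ S)

lemma slice_aux {G : Type*} [Group G] [TopologicalSpace G]
    {X : Type*} [TopologicalSpace X] [T2Space X]
    [MulAction G X] [ContinuousSMul G X]
    (K K' : Set G) (hKc : IsCompact K)
    (hK1 : (1 : G) ∈ K) (hK'n : K' ∈ nhds (1 : G))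
    (S : Set X) (hS : IsSlice K S) :
    S ∩ interior (K • S) ⊆ interior (K' • S) := by
  rintro x ⟨hxS, hxU⟩
  set N := interior K' with hN
  have h1N : (1 : G) ∈ N := mem_interior_iff_mem_nhds.2 hK'n
  set C := (fun p : G × X => p.1 • p.2) '' ((K \ N) ×ˢ S) with hC
  have hCc : IsCompact C :=
    ((hKc.diff isOpen_interior).prod hS.1).image continuous_smul
  have hxC : x ∉ C := by
    rintro ⟨⟨k, s⟩, ⟨⟨hk, hkN⟩, hs⟩, hks⟩
    have heq := hS.2 (Set.mk_mem_prod hk hs) (Set.mk_mem_prod hK1 hxS)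
      (by simpa using hks.trans (one_smul G x).symm)
    exact hkN (by rw [show k = 1 from congrArg Prod.fst heq]; exact h1N)
  apply mem_interior.2
  refine ⟨interior (K • S) \ C, ?_, isOpen_interior.sdiff hCc.isClosed, hxU, hxC⟩
  rintro y ⟨hyU, hyC⟩
  obtain ⟨k, hk, s, hs, rfl⟩ := Set.mem_smul.1 (interior_subset hyU)
  have hkN : k ∈ N := by
    by_contra hkN
    exact hyC ⟨⟨k, s⟩, ⟨⟨hk, hkN⟩, hs⟩, rfl⟩
  exact Set.mem_smul.2 ⟨k, interior_subset hkN, s, hs, rfl⟩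

/-- If a compact set `S ⊆ X` is both a `K`-slice and a `K'`-slice for compact identity
neighbourhoods `K, K' ⊆ G`, then `S ∩ (K·S)° = S ∩ (K'·S)°`. -/
theorem stmt_1 {G : Type*} [Group G] [TopologicalSpace G] [IsTopologicalGroup G]
    [LocallyCompactSpace G] [T2Space G]
    {X : Type*} [TopologicalSpace X] [LocallyCompactSpace X] [T2Space X]
    [MulAction G X] [ContinuousSMul G X]
    (K K' : Set G) (hKc : IsCompact K) (hK'c : IsCompact K')
    (hKn : K ∈ nhds (1 : G)) (hK'n : K' ∈ nhds (1 : G))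
    (S : Set X) (hS : IsSlice K S) (hS' : IsSlice K' S) :
    S ∩ interior (K • S) = S ∩ interior (K' • S) := by
  apply Set.Subset.antisymm
  · exact fun x hx => ⟨hx.1,
      slice_aux K K' hKc (mem_of_mem_nhds hKn) hK'n S hS hx⟩
  · exact fun x hx => ⟨hx.1,
      slice_aux K' K hK'c (mem_of_mem_nhds hK'n) hKn S hS' hx⟩
end

section
/- Assume G is second countable. Let K be a compact neighbourhood of the identity in G and let S be a K-slice in X. Then there exists a compact identity neighbourhood L ⊆ G with K contained in the interior of L such that S is an L-slice. -/
open scoped Pointwise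

/-- **Enlarging slices.** Assume `G` is second countable.  If `S` is a `K`-slice for a compact
identity neighbourhood `K ⊆ G`, then there is a compact identity neighbourhood `L` with
`K ⊆ L°` such that `S` is an `L`-slice. -/
theorem stmt_2 {G : Type*} [Group G] [TopologicalSpace G] [IsTopologicalGroup G]
    [LocallyCompactSpace G] [T2Space G] [SecondCountableTopology G]
    {X : Type*} [TopologicalSpace X] [LocallyCompactSpace X] [T2Space X]
    [MulAction G X] [ContinuousSMul G X]
    (K : Set G) (hKc : IsCompact K) (hKn : K ∈ nhds (1 : G))
    (S : Set X) (hS : IsSlice K S) :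
    ∃ L : Set G, IsCompact L ∧ L ∈ nhds (1 : G) ∧ K ⊆ interior L ∧ IsSlice L S := by
  obtain ⟨hSc, hSi⟩ := hS
  have h1K : (1 : G) ∈ K := mem_of_mem_nhds hKn
  have hSclosed : IsClosed S := hSc.isClosed
  -- the "return set" D
  set D : Set G := {m | ∃ x ∈ S, m • x ∈ S} with hD
  haveI : CompactSpace S := isCompact_iff_compactSpace.mp hSc
  have hDclosed : IsClosed D := by
    have himg : D = Prod.fst '' {p : G × S | p.1 • (p.2 : X) ∈ S} := by
      ext m
      constructor
      · rintro ⟨x, hxS, hmx⟩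
        exact ⟨(m, ⟨x, hxS⟩), hmx, rfl⟩
      · rintro ⟨⟨g, x⟩, hg, rfl⟩
        exact ⟨(x : X), x.2, hg⟩
    rw [himg]
    exact isClosedMap_fst_of_compactSpace _
      (hSclosed.preimage (continuous_fst.smul (continuous_subtype_val.comp continuous_snd)))
  -- key property of K
  have hU1 : ∀ m ∈ K⁻¹ * K, ∀ x ∈ S, m • x ∈ S → m = 1 := by
    rintro m hm x hxS hmxS
    obtain ⟨a, ha, b, hb, rfl⟩ := hm
    have ha' : a⁻¹ ∈ K := Set.mem_inv.mp ha
    have key : (fun p : G × X => p.1 • p.2) (b, x) = (fun p : G × X => p.1 • p.2) (a⁻¹, (a * b) • x) := by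
      show b • x = a⁻¹ • ((a * b) • x)
      rw [mul_smul, inv_smul_smul]
    have := hSi (Set.mk_mem_prod hb hxS)
      (Set.mk_mem_prod ha' (by simpa [mul_smul] using hmxS)) key
    have hba : b = a⁻¹ := congrArg Prod.fst this
    show a * b = 1
    rw [hba, mul_inv_cancel]
  -- U : open neighbourhood of 1 where D is trivial
  set U : Set G := interior (K⁻¹ * K) with hU
  have hKKnhds : K⁻¹ * K ∈ nhds (1 : G) := by
    refine Filter.mem_of_superset hKn fun k hk => ?_
    exact ⟨1, by simpa using h1K, k, hk, by simp⟩
  have h1U : (1 : G) ∈ U := mem_interior_iff_mem_nhds.mpr hKKnhds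
  -- Ω : open set containing K⁻¹K, meeting D only inside U
  set Ω : Set G := (D \ U)ᶜ with hΩ
  have hΩopen : IsOpen Ω := (hDclosed.sdiff isOpen_interior).isOpen_compl
  have hKKΩ : K⁻¹ * K ⊆ Ω := by
    rintro m hm ⟨hmD, hmU⟩
    obtain ⟨x, hxS, hmx⟩ := hmD
    exact hmU (hU1 m hm x hxS hmx ▸ h1U)
  -- find an open W ⊇ K with W⁻¹W ⊆ Ω via the tube lemma
  have hfc : Continuous fun p : G × G => p.1⁻¹ * p.2 :=
    (continuous_fst.inv).mul continuous_snd
  have hsub : K ×ˢ K ⊆ (fun p : G × G => p.1⁻¹ * p.2) ⁻¹' Ω := by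
    rintro ⟨a, b⟩ ⟨haK, hbK⟩
    exact hKKΩ ⟨a⁻¹, Set.inv_mem_inv.mpr haK, b, hbK, rfl⟩
  obtain ⟨u, v, huo, hvo, hKu, hKv, huv⟩ :=
    generalized_tube_lemma hKc hKc (hΩopen.preimage hfc) hsub
  set W : Set G := u ∩ v with hW
  have hWopen : IsOpen W := huo.inter hvo
  have hKW : K ⊆ W := Set.subset_inter hKu hKv
  have hWΩ : ∀ a ∈ W, ∀ b ∈ W, a⁻¹ * b ∈ Ω := fun a ha b hb =>
    huv (Set.mk_mem_prod ha.1 hb.2)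
  -- pick a compact L between K and W
  obtain ⟨L, hLc, hKL, hLW⟩ := exists_compact_between hKc hWopen hKW
  refine ⟨L, hLc, ?_, hKL, hSc, ?_⟩
  · exact Filter.mem_of_superset (isOpen_interior.mem_nhds (hKL h1K)) interior_subset
  · rintro ⟨g, x⟩ ⟨hgL, hxS⟩ ⟨h, y⟩ ⟨hhL, hyS⟩ heq
    simp only at heq
    have hmxy : (h⁻¹ * g) • x = y := by rw [mul_smul, heq, inv_smul_smul]
    have hmD : h⁻¹ * g ∈ D := ⟨x, hxS, hmxy ▸ hyS⟩
    have hmΩ : h⁻¹ * g ∈ Ω := hWΩ h (hLW hhL) g (hLW hgL)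
    have hmU : h⁻¹ * g ∈ U := by
      by_contra hc
      exact hmΩ ⟨hmD, hc⟩
    have hm1 : h⁻¹ * g = 1 := hU1 _ (interior_subset hmU) x hxS (hmxy ▸ hyS)
    have hgh : h = g := inv_mul_eq_one.mp hm1
    have hxy : x = y := by rw [← hmxy, hm1, one_smul]
    exact Prod.ext hgh.symm hxy
end

section
/- Assume G is second countable. Let K be a compact neighbourhood of the identity in G and let S be a K-slice in X. Then (K·S)° = K° · (S ∩ (K·S)°), where K° is the interior of K in G and (K·S)° is the interior of the tube K·S in X. -/
open scoped Pointwise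

/-- **Interior of a tube.** Assume `G` is second countable.  If `S` is a `K`-slice for a
compact identity neighbourhood `K ⊆ G`, then `(K·S)° = K° · (S ∩ (K·S)°)`. -/
theorem stmt_3 {G : Type*} [Group G] [TopologicalSpace G] [IsTopologicalGroup G]
    [LocallyCompactSpace G] [T2Space G] [SecondCountableTopology G]
    {X : Type*} [TopologicalSpace X] [LocallyCompactSpace X] [T2Space X]
    [MulAction G X] [ContinuousSMul G X]
    (K : Set G) (hKc : IsCompact K) (hKn : K ∈ nhds (1 : G))
    (S : Set X) (hS : IsSlice K S) :
    interior (K • S) = interior K • (S ∩ interior (K • S)) := by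
  obtain ⟨V, Vo, hV1, hVV⟩ := exists_open_nhds_one_mul_subset hKn
  have hVK : V ⊆ K := by
    intro v hv
    have : v * 1 ∈ V * V := Set.mul_mem_mul hv hV1
    simpa using hVV this
  have hSc := hS.1
  have hinj := hS.2
  have hK1 : (1 : G) ∈ K := mem_of_mem_nhds hKn
  -- Lemma B: for open P, (K ∩ P) • S is relatively open in K • S
  have lemB : ∀ P : Set G, IsOpen P → ∃ O : Set X, IsOpen O ∧ O ∩ (K • S) = (K ∩ P) • S := by
    intro P hP
    have hKP : IsCompact ((K \ P) • S) := (hKc.diff hP).smul_set hSc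
    refine ⟨((K \ P) • S)ᶜ, hKP.isClosed.isOpen_compl, ?_⟩
    ext t
    constructor
    · rintro ⟨htc, ht⟩
      obtain ⟨k, hk, s, hs, rfl⟩ := Set.mem_smul.1 ht
      refine Set.mem_smul.2 ⟨k, ⟨hk, ?_⟩, s, hs, rfl⟩
      by_contra hkP
      exact htc (Set.mem_smul.2 ⟨k, ⟨hk, hkP⟩, s, hs, rfl⟩)
    · intro ht
      obtain ⟨k, ⟨hkK, hkP⟩, s, hs, rfl⟩ := Set.mem_smul.1 ht
      refine ⟨?_, Set.mem_smul.2 ⟨k, hkK, s, hs, rfl⟩⟩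
      intro hmem
      obtain ⟨k', ⟨hk'K, hk'P⟩, s', hs', heq⟩ := Set.mem_smul.1 hmem
      have h1 : (k', s') ∈ K ×ˢ S := Set.mk_mem_prod hk'K hs'
      have h2 : (k, s) ∈ K ×ˢ S := Set.mk_mem_prod hkK hs
      have := hinj h1 h2 heq
      have hk'k : k' = k := congrArg Prod.fst this
      exact hk'P (hk'k ▸ hkP)
  ext y
  constructor
  · intro hy
    have hyT : y ∈ K • S := interior_subset hy
    obtain ⟨g, hg, x, hx, rfl⟩ := Set.mem_smul.1 hyT
    obtain ⟨O, hO, hOeq⟩ := lemB (g • V) (Vo.smul g)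
    have hgV : g ∈ g • V := ⟨1, hV1, mul_one g⟩
    have hyO : g • x ∈ O ∩ (K • S) := by
      rw [hOeq]
      exact Set.mem_smul.2 ⟨g, ⟨hg, hgV⟩, x, hx, rfl⟩
    set U : Set X := O ∩ interior (K • S) with hU
    have hUo : IsOpen U := hO.inter isOpen_interior
    have hyU : g • x ∈ U := ⟨hyO.1, hy⟩
    -- membership in U gives coordinate in g • V
    have hcoord : ∀ u ∈ U, u ∈ (K ∩ g • V) • S := by
      intro u hu
      rw [← hOeq]
      exact ⟨hu.1, interior_subset hu.2⟩
    -- Step 1: x ∈ interior (K • S)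
    have hxint : x ∈ interior (K • S) := by
      rw [mem_interior]
      refine ⟨g⁻¹ • U, ?_, hUo.smul g⁻¹, Set.mem_smul_set.2 ⟨g • x, hyU, inv_smul_smul g x⟩⟩
      rintro z ⟨u, hu, rfl⟩
      obtain ⟨κ, ⟨hκK, hκgV⟩, σ, hσ, rfl⟩ := Set.mem_smul.1 (hcoord u hu)
      obtain ⟨v, hv, hvκ⟩ := Set.mem_smul_set.1 hκgV
      show g⁻¹ • (κ • σ) ∈ K • S
      have : g⁻¹ • (κ • σ) = v • σ := by
        rw [← hvκ]
        simp [smul_smul, smul_eq_mul, inv_mul_cancel_left]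
      rw [this]
      exact Set.mem_smul.2 ⟨v, hVK hv, σ, hσ, rfl⟩
    -- Step 2: g ∈ interior K
    have hgint : g ∈ interior K := by
      rw [mem_interior]
      refine ⟨{h : G | h • x ∈ U} ∩ g • V⁻¹, ?_, ?_, ?_⟩
      · rintro h ⟨hhU, hhgV⟩
        obtain ⟨κ, ⟨hκK, hκgV⟩, σ, hσ, heq⟩ := Set.mem_smul.1 (hcoord (h • x) hhU)
        obtain ⟨v, hv, hvκ⟩ := Set.mem_smul_set.1 hκgV
        obtain ⟨w, hw, hwh⟩ := Set.mem_smul_set.1 hhgV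
        have hwV : w⁻¹ ∈ V := by simpa using hw
        have hmemK : h⁻¹ * κ ∈ K := by
          have : h⁻¹ * κ = w⁻¹ * v := by
            rw [← hvκ, ← hwh]
            simp [smul_eq_mul, mul_assoc]
          rw [this]
          exact hVV (Set.mul_mem_mul hwV hv)
        have heq2 : (h⁻¹ * κ) • σ = (1 : G) • x := by
          rw [one_smul, ← smul_smul]
          rw [heq]
          simp
        have h1 : (h⁻¹ * κ, σ) ∈ K ×ˢ S := Set.mk_mem_prod hmemK hσ
        have h2 : ((1 : G), x) ∈ K ×ˢ S := Set.mk_mem_prod hK1 hx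
        have := hinj h1 h2 heq2
        have hfst : h⁻¹ * κ = 1 := congrArg Prod.fst this
        have hhκ : κ = h := by
          have := congrArg (fun z => h * z) hfst
          simpa [mul_assoc] using this
        rw [← hhκ]
        exact hκK
      · exact ((continuous_id.smul continuous_const).isOpen_preimage U hUo).inter ((Vo.inv).smul g)
      · exact ⟨hyU, ⟨1, by simpa using hV1, mul_one g⟩⟩
    exact Set.mem_smul.2 ⟨g, hgint, x, ⟨hx, hxint⟩, rfl⟩
  · intro hy
    obtain ⟨g, hg, x, ⟨hxS, hxT⟩, rfl⟩ := Set.mem_smul.1 hy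
    obtain ⟨O, hO, hOeq⟩ := lemB (g⁻¹ • interior K) (isOpen_interior.smul g⁻¹)
    have h1W : (1 : G) ∈ g⁻¹ • interior K := ⟨g, hg, by simp [smul_eq_mul]⟩
    have hxO : x ∈ O ∩ (K • S) := by
      rw [hOeq]
      exact Set.mem_smul.2 ⟨1, ⟨hK1, h1W⟩, x, hxS, one_smul _ _⟩
    rw [mem_interior]
    refine ⟨g • (O ∩ interior (K • S)), ?_, (hO.inter isOpen_interior).smul g,
      Set.mem_smul_set.2 ⟨x, ⟨hxO.1, hxT⟩, rfl⟩⟩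
    rintro z ⟨u, ⟨huO, huT⟩, rfl⟩
    have hu : u ∈ (K ∩ g⁻¹ • interior K) • S := by
      rw [← hOeq]; exact ⟨huO, interior_subset huT⟩
    obtain ⟨κ, ⟨hκK, hκW⟩, σ, hσ, rfl⟩ := Set.mem_smul.1 hu
    obtain ⟨k, hk, hkκ⟩ := Set.mem_smul_set.1 hκW
    show g • (κ • σ) ∈ K • S
    have : g • (κ • σ) = k • σ := by
      rw [← hkκ]
      simp [smul_smul, smul_eq_mul, mul_inv_cancel_left]
    rw [this]
    exact Set.mem_smul.2 ⟨k, interior_subset hk, σ, hσ, rfl⟩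
end

section
/- Assume G is second countable. Let K be a compact neighbourhood of the identity in G and let S be a K-slice in X. Then the topological boundary of the tube K·S in X satisfies ∂(K·S) = (∂K)·S ∪ K·(S \ boxint(S)), where ∂K is the boundary of K in G and boxint(S) = S ∩ (K·S)°. -/
open scoped Pointwise

/-- Local control of representations: points of the tube near `g • s` have their (unique)
representation near `(g, s)`. -/
lemma slice_repr_control {G : Type*} [Group G] [TopologicalSpace G]
    {X : Type*} [TopologicalSpace X] [T2Space X]
    [MulAction G X] [ContinuousSMul G X]
    {K : Set G} (hKc : IsCompact K) {S : Set X} (hS : IsSlice K S)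
    {g : G} {s : X} (hg : g ∈ K) (hs : s ∈ S)
    {W : Set (G × X)} (hW : IsOpen W) (hgsW : (g, s) ∈ W) :
    ∃ V : Set X, IsOpen V ∧ g • s ∈ V ∧
      ∀ k ∈ K, ∀ t ∈ S, k • t ∈ V → (k, t) ∈ W := by
  set C : Set X := (fun p : G × X => p.1 • p.2) '' ((K ×ˢ S) \ W) with hC
  have hCcomp : IsCompact C :=
    (((hKc.prod hS.1).diff hW)).image continuous_smul
  have hgsC : g • s ∉ C := by
    rintro ⟨⟨k, t⟩, ⟨hktKS, hktW⟩, heq⟩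
    have : (k, t) = (g, s) := hS.2 hktKS (Set.mk_mem_prod hg hs) heq
    rw [this] at hktW
    exact hktW hgsW
  refine ⟨Cᶜ, hCcomp.isClosed.isOpen_compl, hgsC, ?_⟩
  intro k hk t ht hmem
  by_contra hktW
  exact hmem ⟨(k, t), ⟨Set.mk_mem_prod hk ht, hktW⟩, rfl⟩

/-- The key dichotomy: a point `g • s` of the tube (with `(g,s) ∈ K × S`) is interior to
the tube iff `g` is interior to `K` and `s` is interior to the tube. -/
lemma slice_interior_iff {G : Type*} [Group G] [TopologicalSpace G] [IsTopologicalGroup G]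
    {X : Type*} [TopologicalSpace X] [T2Space X]
    [MulAction G X] [ContinuousSMul G X]
    {K : Set G} (hKc : IsCompact K) (hKn : K ∈ nhds (1 : G))
    {S : Set X} (hS : IsSlice K S)
    {g : G} {s : X} (hg : g ∈ K) (hs : s ∈ S) :
    g • s ∈ interior (K • S) ↔ g ∈ interior K ∧ s ∈ interior (K • S) := by
  have h1K : (1 : G) ∈ interior K := mem_interior_iff_mem_nhds.2 hKn
  have h1K' : (1 : G) ∈ K := interior_subset h1K
  constructor
  · intro hmem
    constructor
    · -- g ∈ interior K
      -- choose open A ∋ g, B ∋ g with A⁻¹ * B ⊆ interior K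
      have hcont : Continuous fun p : G × G => p.1⁻¹ * p.2 := by continuity
      have : (fun p : G × G => p.1⁻¹ * p.2) ⁻¹' interior K ∈ nhds ((g, g) : G × G) := by
        apply hcont.continuousAt.preimage_mem_nhds
        simpa using isOpen_interior.mem_nhds h1K
      rcases mem_nhds_prod_iff'.1 this with ⟨A, B, hAo, hgA, hBo, hgB, hAB⟩
      obtain ⟨V, hVo, hgsV, hV⟩ :=
        slice_repr_control hKc hS hg hs (hAo.prod isOpen_univ)
          (Set.mk_mem_prod hgA (Set.mem_univ s))
      set N : Set G := B ∩ ((fun h : G => h • s) ⁻¹' (V ∩ interior (K • S))) with hN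
      have hNo : IsOpen N :=
        hBo.inter ((hVo.inter isOpen_interior).preimage (continuous_id.smul continuous_const))
      have hgN : g ∈ N := ⟨hgB, hgsV, hmem⟩
      have hNK : N ⊆ K := by
        rintro h ⟨hhB, hhsV, hhsInt⟩
        have hhsKS : h • s ∈ K • S := interior_subset hhsInt
        rcases Set.mem_smul.1 hhsKS with ⟨k, hkK, t, htS, hkt⟩
        have hkA : k ∈ A := (hV k hkK t htS (hkt ▸ hhsV)).1
        have hu : k⁻¹ * h ∈ interior K := hAB (Set.mk_mem_prod hkA hhB)
        have huK : k⁻¹ * h ∈ K := interior_subset hu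
        have hut : (k⁻¹ * h) • s = t := by
          rw [mul_smul, ← hkt, inv_smul_smul]
        have : ((k⁻¹ * h : G), s) = ((1 : G), t) := by
          apply hS.2 (Set.mk_mem_prod huK hs) (Set.mk_mem_prod h1K' htS)
          simpa using hut
        have : k⁻¹ * h = 1 := congrArg Prod.fst this
        have : h = k := (inv_mul_eq_one.1 this).symm
        rw [this]; exact hkK
      exact mem_interior_iff_mem_nhds.2 (Filter.mem_of_superset (hNo.mem_nhds hgN) hNK)
    · -- s ∈ interior (K • S)
      have hWo : IsOpen (((fun k : G => g⁻¹ * k) ⁻¹' interior K) ×ˢ (Set.univ : Set X)) :=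
        (isOpen_interior.preimage (by continuity)).prod isOpen_univ
      obtain ⟨V, hVo, hgsV, hV⟩ := slice_repr_control hKc hS hg hs hWo
        (Set.mk_mem_prod (by simpa using h1K) (Set.mem_univ s))
      set M : Set X := (fun y : X => g • y) ⁻¹' (V ∩ interior (K • S)) with hM
      have hMo : IsOpen M :=
        (hVo.inter isOpen_interior).preimage (continuous_const.smul continuous_id)
      have hsM : s ∈ M := ⟨hgsV, hmem⟩
      have hMKS : M ⊆ K • S := by
        rintro y ⟨hyV, hyInt⟩
        rcases Set.mem_smul.1 (interior_subset hyInt : g • y ∈ K • S) with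
          ⟨k, hkK, t, htS, hkt⟩
        have : g⁻¹ * k ∈ interior K := (hV k hkK t htS (hkt ▸ hyV)).1
        have hy : (g⁻¹ * k) • t = y := by
          rw [mul_smul, hkt, inv_smul_smul]
        exact hy ▸ Set.smul_mem_smul (interior_subset this) htS
      exact mem_interior_iff_mem_nhds.2 (Filter.mem_of_superset (hMo.mem_nhds hsM) hMKS)
  · rintro ⟨hgInt, hsInt⟩
    have hWo : IsOpen (((fun k : G => g * k) ⁻¹' interior K) ×ˢ (Set.univ : Set X)) :=
      (isOpen_interior.preimage (by continuity)).prod isOpen_univ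
    obtain ⟨V, hVo, hsV, hV⟩ := slice_repr_control hKc hS h1K' hs hWo
      (Set.mk_mem_prod (by simpa using hgInt) (Set.mem_univ s))
    rw [one_smul] at hsV
    set U : Set X := g • (V ∩ interior (K • S)) with hU
    have hUo : IsOpen U := (hVo.inter isOpen_interior).smul g
    have hgsU : g • s ∈ U := Set.smul_mem_smul_set ⟨hsV, hsInt⟩
    have hUKS : U ⊆ K • S := by
      rintro z ⟨y, ⟨hyV, hyInt⟩, rfl⟩
      rcases Set.mem_smul.1 (interior_subset hyInt : y ∈ K • S) with ⟨k, hkK, t, htS, hkt⟩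
      have : g * k ∈ interior K := (hV k hkK t htS (hkt ▸ hyV)).1
      have heq : (g * k) • t = g • y := by rw [mul_smul, hkt]
      show g • y ∈ K • S
      rw [← heq]
      exact Set.smul_mem_smul (interior_subset ‹g * k ∈ interior K›) htS
    exact mem_interior_iff_mem_nhds.2 (Filter.mem_of_superset (hUo.mem_nhds hgsU) hUKS)

/-- **Boundary of a tube.** Assume `G` is second countable.  If `S` is a `K`-slice for a
compact identity neighbourhood `K ⊆ G`, then the topological boundary of the tube `K·S` in
`X` satisfies `∂(K·S) = (∂K)·S ∪ K·(S \ boxint S)`, where `boxint S = S ∩ (K·S)°`. -/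
theorem stmt_4 {G : Type*} [Group G] [TopologicalSpace G] [IsTopologicalGroup G]
    [LocallyCompactSpace G] [T2Space G] [SecondCountableTopology G]
    {X : Type*} [TopologicalSpace X] [LocallyCompactSpace X] [T2Space X]
    [MulAction G X] [ContinuousSMul G X]
    (K : Set G) (hKc : IsCompact K) (hKn : K ∈ nhds (1 : G))
    (S : Set X) (hS : IsSlice K S) :
    frontier (K • S) = frontier K • S ∪ K • (S \ (S ∩ interior (K • S))) := by
  have hKSc : IsCompact (K • S) := hKc.smul_set hS.1
  have hfr : frontier (K • S) = (K • S) \ interior (K • S) := by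
    rw [frontier, hKSc.isClosed.closure_eq]
  have hfrK : frontier K = K \ interior K := by
    rw [frontier, hKc.isClosed.closure_eq]
  ext y
  rw [hfr, hfrK]
  constructor
  · rintro ⟨hyKS, hyInt⟩
    rcases Set.mem_smul.1 hyKS with ⟨g, hgK, s, hsS, rfl⟩
    have := (slice_interior_iff hKc hKn hS hgK hsS).not.1 hyInt
    by_cases hgi : g ∈ interior K
    · right
      refine Set.smul_mem_smul hgK ⟨hsS, fun hsmem => ?_⟩
      exact this ⟨hgi, hsmem.2⟩
    · exact Or.inl (Set.smul_mem_smul ⟨hgK, hgi⟩ hsS)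
  · rintro (hy | hy)
    · rcases Set.mem_smul.1 hy with ⟨g, hgK, s, hsS, rfl⟩
      refine ⟨Set.smul_mem_smul hgK.1 hsS, fun hmem => ?_⟩
      exact hgK.2 ((slice_interior_iff hKc hKn hS hgK.1 hsS).1 hmem).1
    · rcases Set.mem_smul.1 hy with ⟨g, hgK, s, hsS, rfl⟩
      refine ⟨Set.smul_mem_smul hgK hsS.1, fun hmem => ?_⟩
      exact hsS.2 ⟨hsS.1, ((slice_interior_iff hKc hKn hS hgK hsS.1).1 hmem).2⟩
end

section
/- Assume G is second countable. Let K be a compact neighbourhood of the identity in G, let S be a K-slice in X, and let B ⊆ boxint(S) be a subset of S which is regular open in S (i.e. B equals the interior, taken in S, of its closure). Denote by cl(B) the closure of B (in S, equivalently in X). Then: (i) boxint(cl(B)) = B; (ii) the tube boundary of cl(B) equals ∂_S B, the boundary of B in S; (iii) the boundary of the tube K·cl(B) in X satisfies ∂(K·cl(B)) = (K·cl(B)) \ (K°·B) = (∂K)·cl(B) ∪ K·(∂_S B). -/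
open scoped Pointwise

open Filter Set Topology

lemma tendsto_of_injOn_of_isCompact {α β γ : Type*} [TopologicalSpace β] [TopologicalSpace γ]
    [T2Space γ] {f : β → γ} {C : Set β} (hC : IsCompact C) (hf : Continuous f)
    (hinj : InjOn f C) {l : Filter α} {p : α → β} {b : β} (hb : b ∈ C)
    (hpC : ∀ᶠ a in l, p a ∈ C) (hfp : Tendsto (f ∘ p) l (𝓝 (f b))) : Tendsto p l (𝓝 b) :=
  hC.tendsto_nhds_of_unique_mapClusterPt hpC fun _ hc hcp =>
    hinj hc hb <| eq_of_nhds_neBot <|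
      Filter.NeBot.mono (hcp.continuousAt_comp hf.continuousAt) (inf_le_inf_left _ hfp)

namespace IsSlice

variable {G X : Type*} [Group G] [TopologicalSpace G] [TopologicalSpace X] [MulAction G X]
  {K : Set G} {S : Set X}

lemma eq_of_smul_eq (hS : IsSlice K S) {g k : G} {u v : X} (hg : g ∈ K) (hu : u ∈ S)
    (hk : k ∈ K) (hv : v ∈ S) (h : g • u = k • v) : g = k ∧ u = v :=
  Prod.ext_iff.1 (hS.2 (mk_mem_prod hg hu) (mk_mem_prod hk hv) h)

lemma subset (hS : IsSlice K S) {T : Set X} (hT : IsCompact T) (hTS : T ⊆ S) : IsSlice K T :=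
  ⟨hT, hS.2.mono (prod_mono subset_rfl hTS)⟩

section Tubes

variable {K' : Set G} {B : Set X}

lemma mem_and_mem_of_smul_mem (hS : IsSlice K S) (hK' : K' ⊆ K) (hB : B ⊆ S) {g : G} {s : X}
    (hg : g ∈ K) (hs : s ∈ S) (h : g • s ∈ K' • B) : g ∈ K' ∧ s ∈ B := by
  obtain ⟨k, hk, b, hb, hkb⟩ := h
  obtain ⟨rfl, rfl⟩ := hS.eq_of_smul_eq (hK' hk) (hB hb) hg hs hkb
  exact ⟨hk, hb⟩

lemma inter_smul_eq (hS : IsSlice K S) (hK' : K' ⊆ K) (hB : B ⊆ S) (h1 : (1 : G) ∈ K') :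
    S ∩ K' • B = B := by
  refine Subset.antisymm (fun x ⟨hxS, hx⟩ => ?_) fun x hx =>
    ⟨hB hx, 1, h1, x, hx, one_smul G x⟩
  rw [← one_smul G x] at hx
  exact (hS.mem_and_mem_of_smul_mem hK' hB (hK' h1) hxS hx).2

lemma smul_diff_smul (hS : IsSlice K S) (hK' : K' ⊆ K) (hB : B ⊆ S) :
    K • S \ K' • B = (K \ K') • S ∪ K • (S \ B) := by
  apply Subset.antisymm
  · rintro _ ⟨⟨g, hg, s, hs, rfl⟩, hgs⟩
    by_cases hg' : g ∈ K'
    · exact Or.inr (smul_mem_smul hg ⟨hs, fun hsB => hgs (smul_mem_smul hg' hsB)⟩)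
    · exact Or.inl (smul_mem_smul ⟨hg, hg'⟩ hs)
  · rintro _ (⟨g, hg, s, hs, rfl⟩ | ⟨g, hg, s, hs, rfl⟩)
    · exact ⟨smul_mem_smul hg.1 hs,
        fun h => hg.2 (hS.mem_and_mem_of_smul_mem hK' hB hg.1 hs h).1⟩
    · exact ⟨smul_mem_smul hg hs.1,
        fun h => hs.2 (hS.mem_and_mem_of_smul_mem hK' hB hg hs.1 h).2⟩

end Tubes

lemma smul_inter_mem_nhds [ContinuousSMul G X] [T2Space X] (hS : IsSlice K S)
    (hKc : IsCompact K) (hK1 : (1 : G) ∈ K) {U : Set X} (hU : IsOpen U) {V : Set G}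
    (hV : IsOpen V) (hV1 : (1 : G) ∈ V) {x : X} (hx : x ∈ S ∩ U) (hxS : x ∈ interior (K • S)) :
    (K ∩ V) • (S ∩ U) ∈ 𝓝 x := by
  -- off the compact image `C` of `K × S \ V × U`, tube points have coordinates in `V × U`
  set C := (fun p : G × X => p.1 • p.2) '' (K ×ˢ S \ V ×ˢ U)
  have hC : IsClosed C := (((hKc.prod hS.1).diff (hV.prod hU)).image continuous_smul).isClosed
  have hxC : x ∉ C := by
    rintro ⟨⟨k, s⟩, ⟨⟨hk, hs⟩, hks⟩, hksx⟩
    obtain ⟨rfl, rfl⟩ := hS.eq_of_smul_eq hk hs hK1 hx.1 (hksx.trans (one_smul G x).symm)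
    exact hks ⟨hV1, hx.2⟩
  filter_upwards [hC.isOpen_compl.mem_nhds hxC, mem_interior_iff_mem_nhds.1 hxS]
    with _ hyC ⟨k, hk, s, hs, hks⟩
  by_contra hy
  exact hyC ⟨(k, s), ⟨⟨hk, hs⟩, fun h => hy (hks ▸ smul_mem_smul ⟨hk, h.1⟩ ⟨hs, h.2⟩)⟩, hks⟩

lemma isOpen_smul_inter [ContinuousMul G] [ContinuousSMul G X] [T2Space X]
    (hS : IsSlice K S) (hKc : IsCompact K) (hK1 : (1 : G) ∈ K) {U : Set X} (hU : IsOpen U)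
    (hSU : S ∩ U ⊆ interior (K • S)) {W : Set G} (hW : IsOpen W) :
    IsOpen (W • (S ∩ U)) := by
  rw [isOpen_iff_mem_nhds]
  rintro _ ⟨g, hg, x, hx, rfl⟩
  -- translate by `g` a neighbourhood of `x` whose group coordinates lie in `g⁻¹ W`
  have hV : IsOpen ((g * ·) ⁻¹' W) := hW.preimage (continuous_const_mul g)
  have hx' := hS.smul_inter_mem_nhds hKc hK1 hU hV (by simpa using hg) hx (hSU hx)
  refine mem_of_superset ((smul_mem_nhds_smul_iff g).2 hx') ?_
  rintro _ ⟨_, ⟨v, hv, y, hy, rfl⟩, rfl⟩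
  exact ⟨g * v, hv.2, y, hy, mul_smul g v y⟩

lemma notMem_closure_diff_of_smul_mem_interior [ContinuousConstSMul G X] (hS : IsSlice K S)
    {T : Set X} (hTS : T ⊆ S) {g : G} {t : X} (hg : g ∈ K)
    (h : g • t ∈ interior (K • T)) : t ∉ closure (S \ T) := by
  intro ht
  obtain ⟨s, hs, hsS, hsT⟩ := mem_closure_iff.1 ht _
    (isOpen_interior.preimage (continuous_const_smul g)) h
  obtain ⟨k, hk, u, hu, hku⟩ := interior_subset hs
  exact hsT ((hS.eq_of_smul_eq hg hsS hk (hTS hu) hku.symm).2 ▸ hu)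

lemma mem_interior_of_smul_mem_interior [IsTopologicalGroup G] [ContinuousSMul G X]
    [T2Space X] (hS : IsSlice K S) (hKc : IsCompact K) (hK1 : K ∈ 𝓝 (1 : G)) {g : G} {t : X}
    (hg : g ∈ K) (ht : t ∈ S) (h : g • t ∈ interior (K • S)) : g ∈ interior K := by
  have hnear : ∀ᶠ h in 𝓝 g, h • t ∈ K • S :=
    (continuous_id.smul continuous_const).continuousAt.preimage_mem_nhds
      (mem_interior_iff_mem_nhds.1 h)
  have : Nonempty X := ⟨t⟩
  choose! k hk u hu hku using fun (h : G) (hh : h • t ∈ K • S) => hh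
  -- the slice coordinates of `h • t` depend continuously on `h`
  have hlim : Tendsto (fun h => (k h, u h)) (𝓝 g) (𝓝 (g, t)) :=
    tendsto_of_injOn_of_isCompact (hKc.prod hS.1) continuous_smul hS.2 ⟨hg, ht⟩
      (hnear.mono fun h hh => ⟨hk h hh, hu h hh⟩)
      (((continuous_id.smul continuous_const).tendsto g).congr' <|
        hnear.mono fun h hh => (hku h hh).symm)
  have hone : Tendsto (fun h => (k h)⁻¹ * h) (𝓝 g) (𝓝 1) := by
    simpa using (hlim.fst_nhds.inv.mul tendsto_id)
  rw [mem_interior_iff_mem_nhds]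
  filter_upwards [hnear, hone hK1] with h hh hkh
  have heq : ((k h)⁻¹ * h) • t = (1 : G) • u h := by
    rw [one_smul, mul_smul, ← hku h hh, inv_smul_smul]
  rw [← inv_mul_eq_one.1 (hS.eq_of_smul_eq hkh ht (mem_of_mem_nhds hK1) (hu h hh) heq).1]
  exact hk h hh

lemma interior_smul_closure [IsTopologicalGroup G] [ContinuousSMul G X] [T2Space X]
    (hS : IsSlice K S) (hKc : IsCompact K) (hK1 : K ∈ 𝓝 (1 : G)) {B : Set X}
    (hBsub : B ⊆ interior (K • S)) (hBreg : B = S \ closure (S \ closure B)) :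
    interior (K • closure B) = interior K • B := by
  have hTS : closure B ⊆ S := closure_minimal (hBreg.subset.trans sdiff_subset) hS.1.isClosed
  have hT : IsSlice K (closure B) :=
    hS.subset (hS.1.of_isClosed_subset isClosed_closure hTS) hTS
  have hBU : B = S ∩ (closure (S \ closure B))ᶜ := hBreg.trans (sdiff_eq _ _)
  refine Subset.antisymm (fun x hx => ?_) <|
    interior_maximal (smul_subset_smul interior_subset subset_closure) ?_
  · obtain ⟨g, hg, t, ht, rfl⟩ := interior_subset hx
    refine smul_mem_smul (hT.mem_interior_of_smul_mem_interior hKc hK1 hg ht hx) ?_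
    rw [hBreg]
    exact ⟨hTS ht, hS.notMem_closure_diff_of_smul_mem_interior hTS hg hx⟩
  · rw [hBU]
    exact hS.isOpen_smul_inter hKc (mem_of_mem_nhds hK1) isClosed_closure.isOpen_compl
      (hBU.symm.subset.trans hBsub) isOpen_interior

end IsSlice

theorem stmt_5_general {G : Type*} [Group G] [TopologicalSpace G] [IsTopologicalGroup G]
    [T2Space G]
    {X : Type*} [TopologicalSpace X] [T2Space X]
    [MulAction G X] [ContinuousSMul G X]
    (K : Set G) (hKc : IsCompact K) (hKn : K ∈ nhds (1 : G))
    (S : Set X) (hS : IsSlice K S)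
    (B : Set X) (hBsub : B ⊆ S ∩ interior (K • S))
    (hBreg : B = S \ closure (S \ closure B)) :
    closure B ∩ interior (K • closure B) = B ∧
    closure B \ (closure B ∩ interior (K • closure B)) = closure B ∩ closure (S \ B) ∧
    frontier (K • closure B) = (K • closure B) \ (interior K • B) ∧
    frontier (K • closure B)
      = frontier K • closure B ∪ K • (closure B ∩ closure (S \ B)) := by
  have hTS : closure B ⊆ S := closure_minimal (hBsub.trans inter_subset_left) hS.1.isClosed
  have hT : IsSlice K (closure B) :=
    hS.subset (hS.1.of_isClosed_subset isClosed_closure hTS) hTS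
  have hint : interior (K • closure B) = interior K • B :=
    hS.interior_smul_closure hKc hKn (hBsub.trans inter_subset_right) hBreg
  have hboxint : closure B ∩ interior (K • closure B) = B := by
    rw [hint]
    exact hT.inter_smul_eq interior_subset subset_closure (mem_interior_iff_mem_nhds.2 hKn)
  have hSB : IsClosed (S \ B) := by
    rw [hBreg, sdiff_sdiff_right_self]
    exact hS.1.isClosed.inter isClosed_closure
  have hTB : closure B ∩ closure (S \ B) = closure B \ B := by
    rw [hSB.closure_eq, ← inter_sdiff_assoc, inter_eq_left.2 hTS]
  have hfr : frontier (K • closure B) = K • closure B \ interior K • B := by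
    rw [(hKc.smul_set hT.1).isClosed.frontier_eq, hint]
  refine ⟨hboxint, by rw [hboxint, hTB], hfr, ?_⟩
  rw [hfr, hT.smul_diff_smul interior_subset subset_closure, hKc.isClosed.frontier_eq, hTB]

/-- Since a slice `S` is compact, hence closed, in the Hausdorff space `X`, for a subset
`B ⊆ S` the interior of `B` relative to the subspace `S` is `S \ closure (S \ B)`, the
closure of `B` relative to `S` is `closure B`, and the boundary of `B` relative to `S` is
`closure B ∩ closure (S \ B)`.

**Tubes over regular open subsets of a slice.** Assume `G` is second countable.  Let `S` be a
`K`-slice, and let `B ⊆ boxint S = S ∩ (K·S)°` be regular open in `S`, i.e. `B` equals the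
interior, relative to `S`, of its closure.  Then
(i) `boxint (closure B) = B`;
(ii) the tube boundary `closure B \ boxint (closure B)` equals the boundary `∂_S B` of `B`
in `S`;
(iii) `∂(K·closure B) = (K·closure B) \ (K°·B) = (∂K)·closure B ∪ K·(∂_S B)`. -/
theorem stmt_5 {G : Type*} [Group G] [TopologicalSpace G] [IsTopologicalGroup G]
    [LocallyCompactSpace G] [T2Space G] [SecondCountableTopology G]
    {X : Type*} [TopologicalSpace X] [LocallyCompactSpace X] [T2Space X]
    [MulAction G X] [ContinuousSMul G X]
    (K : Set G) (hKc : IsCompact K) (hKn : K ∈ nhds (1 : G))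
    (S : Set X) (hS : IsSlice K S)
    (B : Set X) (hBsub : B ⊆ S ∩ interior (K • S))
    (hBreg : B = S \ closure (S \ closure B)) :
    closure B ∩ interior (K • closure B) = B ∧
    closure B \ (closure B ∩ interior (K • closure B)) = closure B ∩ closure (S \ B) ∧
    frontier (K • closure B) = (K • closure B) \ (interior K • B) ∧
    frontier (K • closure B)
      = frontier K • closure B ∪ K • (closure B ∩ closure (S \ B)) :=
  stmt_5_general K hKc hKn S hS B hBsub hBreg
end

section
/- Let G be a locally compact Hausdorff group with left Haar measure, acting freely and continuously on a locally compact Hausdorff space X. Let V be a finite dimensional real vector space carrying a continuous linear G-action, and let v ∈ V be a vector whose stabiliser in G is trivial. Then for every x ∈ X, every neighbourhood A of x in X, and every relatively compact identity neighbourhood U ⊆ G, there exists a continuous compactly supported function f : X → ℝ with support contained in A such that ∫_U f(g⁻¹·x) (g·v) dg = v, the integral being taken with respect to Haar measure. -/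
open scoped Pointwise
open MeasureTheory

/-- **Averaging a bump function into a finite dimensional representation.**
Let `G` be a locally compact Hausdorff group with left Haar measure `m`, acting freely and
continuously on a locally compact Hausdorff space `X`.  Let `V` be a finite dimensional real
vector space carrying a continuous linear `G`-action `ρ`, and let `v ∈ V` have trivial
stabiliser.  Then for every `x ∈ X`, every neighbourhood `A` of `x` and every relatively
compact identity neighbourhood `U ⊆ G` there is a continuous compactly supported function
`f : X → ℝ` supported in `A` with `∫_U f(g⁻¹·x) (g·v) dg = v`. -/
theorem stmt_8 {G : Type*} [Group G] [TopologicalSpace G] [IsTopologicalGroup G]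
    [LocallyCompactSpace G] [T2Space G] [MeasurableSpace G] [BorelSpace G]
    (m : Measure G) [m.IsHaarMeasure]
    {X : Type*} [TopologicalSpace X] [LocallyCompactSpace X] [T2Space X]
    [MulAction G X] [ContinuousSMul G X]
    (hfree : ∀ (g : G) (x : X), g • x = x → g = 1)
    {V : Type*} [NormedAddCommGroup V] [NormedSpace ℝ V] [FiniteDimensional ℝ V]
    (ρ : G →* (V →L[ℝ] V)) (hρ : Continuous fun p : G × V => ρ p.1 p.2)
    (v : V) (hv : ∀ g : G, ρ g v = v → g = 1)
    (x : X) (A : Set X) (hA : A ∈ nhds x)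
    (U : Set G) (hU : U ∈ nhds (1 : G)) (hUc : IsCompact (closure U)) :
    ∃ f : X → ℝ, Continuous f ∧ HasCompactSupport f ∧ tsupport f ⊆ A ∧
      (∫ g in U, f (g⁻¹ • x) • ρ g v ∂m) = v := by
  classical
  -- basic continuity facts
  have hcρ : Continuous fun g : G => ρ g v :=
    hρ.comp (continuous_id.prodMk continuous_const)
  have he : Continuous fun g : G => g⁻¹ • x :=
    continuous_inv.smul continuous_const
  set e : G → X := fun g => g⁻¹ • x with he_def
  -- the small open neighbourhood of 1 inside U whose orbit lands in A
  set N₀ : Set G := interior U ∩ (e ⁻¹' interior A) with hN₀_def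
  have hN₀o : IsOpen N₀ := isOpen_interior.inter (isOpen_interior.preimage he)
  have h1N₀ : (1 : G) ∈ N₀ := by
    constructor
    · exact mem_interior_iff_mem_nhds.2 hU
    · show e 1 ∈ interior A
      have : e 1 = x := by simp [he_def]
      rw [this]
      exact mem_interior_iff_mem_nhds.2 hA
  obtain ⟨K, hKc, h1K, hKN₀⟩ := exists_compact_subset hN₀o h1N₀
  have hKU : K ⊆ U := fun g hg => interior_subset (hKN₀ hg).1
  have hKcl : K ⊆ closure U := hKU.trans subset_closure
  -- the submodule of continuous functions supported in K
  set M : Submodule ℝ C(G, ℝ) :=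
    { carrier := {φ : C(G, ℝ) | tsupport ⇑φ ⊆ K}
      add_mem' := by
        intro a b ha hb
        simp only [Set.mem_setOf_eq, ContinuousMap.coe_add] at *
        calc tsupport (⇑a + ⇑b)
            ⊆ closure (Function.support ⇑a ∪ Function.support ⇑b) :=
              closure_mono (Function.support_add _ _)
          _ = tsupport ⇑a ∪ tsupport ⇑b := closure_union
          _ ⊆ K := Set.union_subset ha hb
      zero_mem' := by
        simp only [Set.mem_setOf_eq, ContinuousMap.coe_zero, tsupport,
          Function.support_zero, closure_empty]
        exact Set.empty_subset _
      smul_mem' := by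
        intro c φ hφ
        have hφ' : tsupport ⇑φ ⊆ K := hφ
        show tsupport ⇑(c • φ) ⊆ K
        refine subset_trans ?_ hφ'
        simp only [ContinuousMap.coe_smul]
        exact tsupport_smul_subset_right (fun _ => c) ⇑φ } with hM_def
  have hMsupp : ∀ φ : M, tsupport ⇑(φ : C(G, ℝ)) ⊆ K := fun φ => φ.2
  -- integrability of the relevant integrands
  have hint : ∀ φ : C(G, ℝ), tsupport ⇑φ ⊆ K →
      Integrable (fun g => φ g • ρ g v) (m.restrict U) := by
    intro φ hφ
    have hc : Continuous fun g => φ g • ρ g v := φ.continuous.smul hcρ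
    have hcs : HasCompactSupport fun g => φ g • ρ g v := by
      apply HasCompactSupport.intro hKc
      intro g hg
      have : φ g = 0 := image_eq_zero_of_notMem_tsupport (fun h => hg (hφ h))
      simp [this]
    exact (hc.integrable_of_hasCompactSupport hcs).restrict
  have hintR : ∀ φ : C(G, ℝ), HasCompactSupport ⇑φ →
      Integrable ⇑φ (m.restrict U) := fun φ h =>
    (φ.continuous.integrable_of_hasCompactSupport h).restrict
  -- the averaging linear map
  set L : M →ₗ[ℝ] V :=
    { toFun := fun φ => ∫ g in U, (φ : C(G, ℝ)) g • ρ g v ∂m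
      map_add' := by
        intro φ ψ
        have h1 := hint _ (hMsupp φ)
        have h2 := hint _ (hMsupp ψ)
        rw [← integral_add h1 h2]
        congr 1
        funext g
        simp [add_smul]
      map_smul' := by
        intro c φ
        rw [← integral_smul]
        congr 1
        funext g
        simp [mul_smul] } with hL_def
  set S : Submodule ℝ V := LinearMap.range L with hS_def
  haveI hSfd : FiniteDimensional ℝ ↥S := FiniteDimensional.finiteDimensional_submodule S
  have hSclosed : IsClosed (S : Set V) := S.closed_of_finiteDimensional
  -- v is in the closure of the range
  have hvcl : v ∈ closure (S : Set V) := by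
    rw [Metric.mem_closure_iff]
    intro ε hε
    -- small neighbourhood where ρ g v is ε/2-close to v
    set W : Set G := interior K ∩ {g : G | ‖ρ g v - v‖ < ε / 2} with hW_def
    have hWo : IsOpen W := by
      apply isOpen_interior.inter
      have : {g : G | ‖ρ g v - v‖ < ε / 2}
          = (fun g => ‖ρ g v - v‖) ⁻¹' Set.Iio (ε / 2) := rfl
      rw [this]
      exact isOpen_Iio.preimage ((hcρ.sub continuous_const).norm)
    have h1W : (1 : G) ∈ W := by
      refine ⟨h1K, ?_⟩
      show ‖ρ 1 v - v‖ < ε / 2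
      simp only [map_one, ContinuousLinearMap.one_apply, sub_self, norm_zero]
      linarith
    obtain ⟨K₁, hK₁c, h1K₁, hK₁W⟩ := exists_compact_subset hWo h1W
    obtain ⟨L', hL'c, hL'cl, hK₁L', hL'W⟩ :=
      exists_compact_closed_between hK₁c hWo hK₁W
    obtain ⟨φ₀, hφ₀1, hφ₀0, hφ₀cs, hφ₀01⟩ :=
      exists_continuous_one_zero_of_isCompact hK₁c
        isOpen_interior.isClosed_compl
        (disjoint_compl_right.mono_left hK₁L')
    have hφ₀supp : tsupport ⇑φ₀ ⊆ L' := by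
      have h1 : Function.support ⇑φ₀ ⊆ interior L' := by
        intro g hg
        by_contra h
        exact hg (hφ₀0 h)
      calc tsupport ⇑φ₀ ⊆ closure (interior L') := closure_mono h1
        _ ⊆ L' := closure_minimal interior_subset hL'cl
    have hφ₀W : tsupport ⇑φ₀ ⊆ W := hφ₀supp.trans hL'W
    have hφ₀K : tsupport ⇑φ₀ ⊆ K :=
      hφ₀W.trans (Set.inter_subset_left.trans interior_subset)
    have hφ₀int : Integrable ⇑φ₀ (m.restrict U) := hintR φ₀ hφ₀cs
    set c : ℝ := ∫ g in U, φ₀ g ∂m with hc_def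
    have hintK₁ : interior K₁ ⊆ U := by
      refine subset_trans interior_subset (subset_trans hK₁W ?_)
      exact subset_trans (Set.inter_subset_left.trans interior_subset)
        (hKN₀.trans (Set.inter_subset_left.trans interior_subset))
    have hcpos : 0 < c := by
      have h2 : ∫ g in interior K₁, φ₀ g ∂m = (m (interior K₁)).toReal := by
        rw [setIntegral_congr_fun isOpen_interior.measurableSet
          (fun g hg => hφ₀1 (interior_subset hg))]
        simp [setIntegral_const, measureReal_def]
      have h1 : ∫ g in interior K₁, φ₀ g ∂m ≤ c := by
        apply integral_mono_measure (Measure.restrict_mono hintK₁ le_rfl)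
        · exact Filter.Eventually.of_forall fun g => (hφ₀01 g).1
        · exact hφ₀int
      have hpos : 0 < m (interior K₁) :=
        isOpen_interior.measure_pos m ⟨1, h1K₁⟩
      have hfin : m (interior K₁) ≠ ⊤ :=
        ((measure_mono interior_subset).trans_lt hK₁c.measure_lt_top).ne
      have := ENNReal.toReal_pos hpos.ne' hfin
      linarith [h1, h2 ▸ this]
    set φ₁ : C(G, ℝ) := c⁻¹ • φ₀ with hφ₁_def
    have hφ₁supp : tsupport ⇑φ₁ ⊆ tsupport ⇑φ₀ := by
      simp only [hφ₁_def, ContinuousMap.coe_smul]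
      exact tsupport_smul_subset_right (fun _ => c⁻¹) ⇑φ₀
    have hφ₁M : φ₁ ∈ M := hφ₁supp.trans hφ₀K
    have hφ₁eval : ∀ g : G, φ₁ g = c⁻¹ * φ₀ g := fun g => rfl
    have hφ₁nonneg : ∀ g : G, 0 ≤ φ₁ g := fun g =>
      mul_nonneg (inv_nonneg.2 hcpos.le) (hφ₀01 g).1
    have hφ₁int : Integrable ⇑φ₁ (m.restrict U) := by
      have : HasCompactSupport ⇑φ₁ :=
        IsCompact.of_isClosed_subset hφ₀cs (isClosed_tsupport _) hφ₁supp
      exact hintR φ₁ this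
    have hone : ∫ g in U, φ₁ g ∂m = 1 := by
      have : (fun g => φ₁ g) = fun g => c⁻¹ * φ₀ g := funext hφ₁eval
      rw [this, integral_const_mul, ← hc_def, inv_mul_cancel₀ hcpos.ne']
    refine ⟨L ⟨φ₁, hφ₁M⟩, ⟨⟨φ₁, hφ₁M⟩, rfl⟩, ?_⟩
    have hLval : L ⟨φ₁, hφ₁M⟩ = ∫ g in U, φ₁ g • ρ g v ∂m := rfl
    have hvint : v = ∫ g in U, φ₁ g • v ∂m := by
      rw [integral_smul_const, hone, one_smul]
    have hint1 : Integrable (fun g => φ₁ g • v) (m.restrict U) :=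
      hφ₁int.smul_const v
    have hint2 : Integrable (fun g => φ₁ g • ρ g v) (m.restrict U) :=
      hint φ₁ hφ₁M
    have hdiff : v - L ⟨φ₁, hφ₁M⟩ = ∫ g in U, φ₁ g • (v - ρ g v) ∂m := by
      have h4 : ∫ g in U, φ₁ g • (v - ρ g v) ∂m
          = (∫ g in U, φ₁ g • v ∂m) - ∫ g in U, φ₁ g • ρ g v ∂m := by
        rw [← integral_sub hint1 hint2]
        congr 1
        funext g
        rw [smul_sub]
      rw [h4, ← hvint, hLval]
    have hbound : ‖v - L ⟨φ₁, hφ₁M⟩‖ ≤ ε / 2 := by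
      rw [hdiff]
      have h1 : ‖∫ g in U, φ₁ g • (v - ρ g v) ∂m‖
          ≤ ∫ g in U, ‖φ₁ g • (v - ρ g v)‖ ∂m := norm_integral_le_integral_norm _
      have h2 : ∫ g in U, ‖φ₁ g • (v - ρ g v)‖ ∂m
          ≤ ∫ g in U, (ε / 2) * φ₁ g ∂m := by
        have hintnorm : Integrable (fun g => ‖φ₁ g • (v - ρ g v)‖) (m.restrict U) := by
          have hcn : Continuous fun g => ‖φ₁ g • (v - ρ g v)‖ :=
            (φ₁.continuous.smul (continuous_const.sub hcρ)).norm
          have hcsn : HasCompactSupport fun g => ‖φ₁ g • (v - ρ g v)‖ := by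
            apply HasCompactSupport.intro hKc
            intro g hg
            have hz : φ₁ g = 0 :=
              image_eq_zero_of_notMem_tsupport fun h => hg (hφ₁M h)
            simp [hz]
          exact (hcn.integrable_of_hasCompactSupport hcsn).restrict
        apply integral_mono
        · exact hintnorm
        · exact hφ₁int.const_mul _
        · intro g
          dsimp only
          rw [norm_smul, Real.norm_eq_abs, abs_of_nonneg (hφ₁nonneg g)]
          by_cases hg : φ₁ g = 0
          · simp [hg]
          · have hgW : g ∈ W := hφ₀W (hφ₁supp (subset_closure hg))
            have : ‖v - ρ g v‖ ≤ ε / 2 := by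
              rw [norm_sub_rev]
              exact le_of_lt hgW.2
            calc φ₁ g * ‖v - ρ g v‖ ≤ φ₁ g * (ε / 2) :=
                  mul_le_mul_of_nonneg_left this (hφ₁nonneg g)
              _ = ε / 2 * φ₁ g := mul_comm _ _
      have h3 : ∫ g in U, (ε / 2) * φ₁ g ∂m = ε / 2 := by
        rw [integral_const_mul, hone, mul_one]
      calc ‖∫ g in U, φ₁ g • (v - ρ g v) ∂m‖
          ≤ ∫ g in U, ‖φ₁ g • (v - ρ g v)‖ ∂m := h1
        _ ≤ ∫ g in U, (ε / 2) * φ₁ g ∂m := h2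
        _ = ε / 2 := h3
    rw [dist_eq_norm]
    linarith
  have hvS : v ∈ S := by
    have := hSclosed.closure_eq ▸ hvcl
    exact this
  obtain ⟨⟨φ, hφK⟩, hLφ⟩ := hvS
  have hLφ' : ∫ g in U, φ g • ρ g v ∂m = v := hLφ
  -- the orbit map is injective
  have heinj : Function.Injective e := by
    intro g h hgh
    have h1 : (h * g⁻¹) • x = x := by
      have h2 := congrArg (fun y => h • y) hgh
      simpa [he_def, mul_smul] using h2
    have h2 : h * g⁻¹ = 1 := hfree _ _ h1
    exact (mul_inv_eq_one.mp h2).symm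
  -- geometry: transfer φ to a function on X
  set C : Set X := e '' closure U with hC_def
  have hCc : IsCompact C := hUc.image he
  obtain ⟨D, hDc, hCD⟩ := exists_compact_superset hCc
  haveI : CompactSpace (D : Set X) := isCompact_iff_compactSpace.mp hDc
  haveI : CompactSpace (closure U : Set G) := isCompact_iff_compactSpace.mp hUc
  have hCD' : C ⊆ D := hCD.trans interior_subset
  set e' : ↥(closure U) → ↥D :=
    fun g => ⟨e g.1, hCD' ⟨g.1, g.2, rfl⟩⟩ with he'_def
  have he'c : Continuous e' :=
    Continuous.subtype_mk (he.comp continuous_subtype_val) _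
  have he'inj : Function.Injective e' := by
    intro g h hgh
    apply Subtype.ext
    apply heinj
    exact congrArg Subtype.val hgh
  have hclemb := he'c.isClosedEmbedding he'inj
  obtain ⟨ψ, hψ⟩ := ContinuousMap.exists_extension hclemb
    (φ.comp ⟨Subtype.val, continuous_subtype_val⟩)
  have hψeval : ∀ g : (closure U : Set G), ψ (e' g) = φ g.1 := by
    intro g
    have := congrFun (congrArg DFunLike.coe hψ) g
    simpa using this
  -- the compact set where the transferred function should equal φ
  set C' : Set X := e '' K with hC'_def
  have hC'c : IsCompact C' := hKc.image he
  set O : Set X := interior A ∩ interior D with hO_def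
  have hOo : IsOpen O := isOpen_interior.inter isOpen_interior
  have hC'O : C' ⊆ O := by
    rintro y ⟨g, hg, rfl⟩
    exact ⟨(hKN₀ hg).2, hCD ⟨g, hKcl hg, rfl⟩⟩
  obtain ⟨L₂, hL₂c, hL₂cl, hC'L₂, hL₂O⟩ :=
    exists_compact_closed_between hC'c hOo hC'O
  obtain ⟨χ, hχ1, hχ0, hχcs, hχ01⟩ :=
    exists_continuous_one_zero_of_isCompact hC'c
      isOpen_interior.isClosed_compl
      (disjoint_compl_right.mono_left hC'L₂)
  have hχsupp : tsupport ⇑χ ⊆ L₂ := by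
    have h1 : Function.support ⇑χ ⊆ interior L₂ := by
      intro y hy
      by_contra h
      exact hy (hχ0 h)
    calc tsupport ⇑χ ⊆ closure (interior L₂) := closure_mono h1
      _ ⊆ L₂ := closure_minimal interior_subset hL₂cl
  have hχO : tsupport ⇑χ ⊆ O := hχsupp.trans hL₂O
  -- the function Ψ extending ψ by zero, and the final function f
  set Ψ : X → ℝ := fun y => if h : y ∈ D then ψ ⟨y, h⟩ else 0 with hΨ_def
  have hΨD : ContinuousOn Ψ D := by
    rw [continuousOn_iff_continuous_restrict]
    have : D.domRestrict Ψ = ⇑ψ := by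
      funext y
      exact dif_pos y.2
    rw [this]
    exact ψ.continuous
  set f : X → ℝ := fun y => Ψ y * χ y with hf_def
  have hfc : Continuous f := by
    rw [continuous_iff_continuousAt]
    intro y
    by_cases hy : y ∈ interior D
    · have hD : D ∈ nhds y := mem_nhds_iff.2 ⟨interior D, interior_subset, isOpen_interior, hy⟩
      exact (hΨD.continuousAt hD).mul χ.continuous.continuousAt
    · have hy' : y ∉ tsupport ⇑χ := fun h => hy (hχO h).2
      have heq : f =ᶠ[nhds y] fun _ => (0 : ℝ) := by
        filter_upwards [(isClosed_tsupport ⇑χ).isOpen_compl.mem_nhds hy'] with z hz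
        have : χ z = 0 := image_eq_zero_of_notMem_tsupport hz
        simp [hf_def, this]
      exact (continuousAt_congr heq).2 continuousAt_const
  have hfsupp : tsupport f ⊆ tsupport ⇑χ := by
    apply closure_mono
    intro y hy
    simp only [hf_def, Function.mem_support] at hy ⊢
    intro h
    apply hy
    simp [h]
  have hfcs : HasCompactSupport f :=
    IsCompact.of_isClosed_subset hχcs (isClosed_tsupport f) hfsupp
  have hfA : tsupport f ⊆ A :=
    hfsupp.trans (hχO.trans (Set.inter_subset_left.trans interior_subset))
  -- key property: f ∘ e = φ on closure U
  have hfeq : ∀ g ∈ closure U, f (g⁻¹ • x) = φ g := by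
    intro g hg
    have hD : e g ∈ D := hCD' ⟨g, hg, rfl⟩
    have h1 : Ψ (e g) = φ g := by
      have h2 : Ψ (e g) = ψ ⟨e g, hD⟩ := dif_pos hD
      rw [h2]
      have h3 : (⟨e g, hD⟩ : (D : Set X)) = e' ⟨g, hg⟩ := Subtype.ext rfl
      rw [h3, hψeval ⟨g, hg⟩]
    show Ψ (e g) * χ (e g) = φ g
    rw [h1]
    by_cases hg' : φ g = 0
    · simp [hg']
    · have hgK : g ∈ tsupport ⇑φ := subset_closure hg'
      have : e g ∈ C' := ⟨g, hφK hgK, rfl⟩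
      rw [hχ1 this]
      · simp
  -- final computation of the integral
  refine ⟨f, hfc, hfcs, hfA, ?_⟩
  set F₂ : G → V := fun g => φ g • ρ g v with hF₂_def
  set Gd : G → V := fun g => f (g⁻¹ • x) • ρ g v - F₂ g with hGd_def
  have hGd0 : ∀ g ∈ closure U, Gd g = 0 := by
    intro g hg
    simp only [hGd_def, hF₂_def]
    rw [hfeq g hg]
    simp
  have hGind : Gd = Set.indicator ((closure U)ᶜ) Gd := by
    funext g
    by_cases hg : g ∈ closure U
    · rw [Set.indicator_of_notMem (by simpa using hg), hGd0 g hg]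
    · rw [Set.indicator_of_mem (by simpa using hg)]
  have hmeas : MeasurableSet ((closure U)ᶜ) := isClosed_closure.isOpen_compl.measurableSet
  have hμ0 : (m.restrict U).restrict ((closure U)ᶜ) = 0 := by
    rw [Measure.restrict_restrict hmeas]
    have : (closure U)ᶜ ∩ U = ∅ := by
      apply Set.eq_empty_iff_forall_notMem.2
      intro g hg
      exact hg.1 (subset_closure hg.2)
    rw [this, Measure.restrict_empty]
  have hGint0 : ∫ g in U, Set.indicator ((closure U)ᶜ) Gd g ∂m = 0 := by
    rw [integral_indicator hmeas]
    show ∫ g, Gd g ∂((m.restrict U).restrict ((closure U)ᶜ)) = 0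
    rw [hμ0]
    exact integral_zero_measure _
  have hGintegrable : Integrable (Set.indicator ((closure U)ᶜ) Gd) (m.restrict U) := by
    rw [integrable_indicator_iff hmeas]
    show Integrable Gd ((m.restrict U).restrict ((closure U)ᶜ))
    rw [hμ0]
    exact integrable_zero_measure
  have hF₂int : Integrable F₂ (m.restrict U) := hint φ hφK
  have hsplit : (fun g => f (g⁻¹ • x) • ρ g v)
      = fun g => F₂ g + Set.indicator ((closure U)ᶜ) Gd g := by
    funext g
    rw [← hGind]
    simp [hGd_def]
  rw [hsplit, integral_add hF₂int hGintegrable, hGint0, add_zero]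
  exact hLφ'
end

section
/- Let G be a locally compact Hausdorff group with left Haar measure acting freely and continuously on a second countable, locally compact Hausdorff space X. Let V be a finite dimensional real vector space carrying a continuous linear G-action, and let v ∈ V be a vector whose stabiliser in G is trivial. Then for every relatively compact identity neighbourhood K ⊆ G and every x₀ ∈ X there exist a neighbourhood A of x₀ in X and a continuous map F : X → V such that F(x₀) = v and F(k·x) = k·F(x) for all k ∈ K and all x ∈ A. -/
open scoped Pointwise
open MeasureTheory

lemma recurrence_control {G : Type*} [Group G] [TopologicalSpace G]
    {X : Type*} [TopologicalSpace X] [T2Space X] [MulAction G X] [ContinuousSMul G X]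
    (hfree : ∀ (g : G) (x : X), g • x = x → g = 1)
    (Q : Set G) (hQ : IsCompact Q) (U : Set G) (hU : U ∈ nhds (1 : G)) (x₀ : X) :
    ∃ A₀ ∈ nhds x₀, ∀ g ∈ Q, ∀ x ∈ A₀, g • x ∈ A₀ → g ∈ U := by
  have hC : IsCompact (Q \ interior U) := hQ.diff isOpen_interior
  have key : ∀ g ∈ Q \ interior U,
      ∃ N ∈ nhds g, ∃ A ∈ nhds x₀, ∀ h ∈ N, ∀ x ∈ A, h • x ∉ A := by
    intro g hg
    have hg1 : g • x₀ ≠ x₀ := by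
      intro h
      exact hg.2 (by rw [hfree g x₀ h]; exact mem_interior_iff_mem_nhds.2 hU)
    obtain ⟨O₁, O₂, hO₁, hO₂, hgx, hx, hd⟩ := t2_separation hg1
    have hcont : (fun p : G × X => p.1 • p.2) ⁻¹' O₁ ∈ nhds (g, x₀) :=
      (continuous_smul.tendsto (g, x₀)) (hO₁.mem_nhds hgx)
    rw [mem_nhds_prod_iff] at hcont
    obtain ⟨N, hN, M, hM, hNM⟩ := hcont
    refine ⟨N, hN, M ∩ O₂, Filter.inter_mem hM (hO₂.mem_nhds hx), ?_⟩
    intro h hh x hx' hcontra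
    have h1 : h • x ∈ O₁ := hNM (Set.mk_mem_prod hh hx'.1)
    exact Set.disjoint_left.mp hd h1 hcontra.2
  choose N hN A hA hprop using key
  obtain ⟨t, hcover⟩ := hC.elim_nhds_subcover' (fun g hg => N g hg) (fun g hg => hN g hg)
  refine ⟨⋂ g ∈ t, A g.1 g.2, ?_, ?_⟩
  · exact (Filter.biInter_finset_mem t).2 fun g _ => hA g.1 g.2
  · intro g hgQ x hx hgx
    by_contra hgU
    have hgC : g ∈ Q \ interior U := ⟨hgQ, fun h => hgU (interior_subset h)⟩
    have hm := hcover hgC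
    rw [Set.mem_iUnion₂] at hm
    obtain ⟨i, hit, hgN⟩ := hm
    exact hprop i.1 i.2 g hgN x (Set.mem_iInter₂.mp hx i hit) (Set.mem_iInter₂.mp hgx i hit)

lemma rho_cont {G : Type*} [TopologicalSpace G] {V : Type*} [NormedAddCommGroup V]
    [NormedSpace ℝ V] [FiniteDimensional ℝ V] (ρ : G → (V →L[ℝ] V))
    (hρ : Continuous fun p : G × V => ρ p.1 p.2) :
    Continuous ρ := by
  set n := Module.finrank ℝ V
  set b : Module.Basis (Fin n) ℝ V := Module.finBasis ℝ V with hb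
  set Φ : (V →L[ℝ] V) →ₗ[ℝ] (Fin n → V) :=
    LinearMap.pi (fun i => (ContinuousLinearMap.apply ℝ V (b i)).toLinearMap) with hΦ
  have hΦinj : Function.Injective Φ := by
    intro f g h
    have h' : ∀ i, f (b i) = g (b i) := fun i => congrFun h i
    exact ContinuousLinearMap.coe_injective (b.ext h')
  obtain ⟨Ψ, hΨ⟩ := Φ.exists_leftInverse_of_injective (by rwa [LinearMap.ker_eq_bot])
  have hΨc : Continuous Ψ := Ψ.continuous_of_finiteDimensional
  have hcoord : Continuous fun g => Φ (ρ g) := by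
    refine continuous_pi fun i => ?_
    exact hρ.comp (continuous_id.prodMk continuous_const)
  have hρeq : ρ = fun g => Ψ (Φ (ρ g)) := funext fun g => (LinearMap.congr_fun hΨ (ρ g)).symm
  rw [hρeq]
  exact hΨc.comp hcoord

lemma exists_bump {X : Type*} [TopologicalSpace X] [LocallyCompactSpace X] [T2Space X]
    (A₀ : Set X) (x₀ : X) (hA₀n : A₀ ∈ nhds x₀) :
    ∃ φ : X → ℝ, Continuous φ ∧ φ x₀ = 1 ∧ (∀ x, φ x ∈ Set.Icc (0:ℝ) 1) ∧
      (∀ x, φ x ≠ 0 → x ∈ A₀) := by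
  have hx₀ : x₀ ∈ interior A₀ := mem_interior_iff_mem_nhds.2 hA₀n
  obtain ⟨f, hf0, hf1, hf01⟩ := exists_continuous_zero_one_of_isCompact
    (isCompact_singleton (x := x₀)) (isClosed_compl_iff.2 isOpen_interior)
    (by
      rw [Set.disjoint_left]
      rintro y rfl hy
      exact hy hx₀)
  refine ⟨fun x => 1 - f x, (continuous_const.sub f.continuous), ?_, ?_, ?_⟩
  · simp [hf0 rfl]
  · intro x
    have h1 := (hf01 x).1
    have h2 := (hf01 x).2
    constructor <;> simp <;> linarith
  · intro x hx
    by_contra hxA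
    have : f x = 1 := hf1 (fun h => hxA (interior_subset h))
    simp [this] at hx

set_option synthInstance.maxHeartbeats 1000000 in
lemma clm_norm_smul {V : Type*} [NormedAddCommGroup V] [NormedSpace ℝ V]
    (r : ℝ) (T : V →L[ℝ] V) : ‖r • T‖ = ‖r‖ * ‖T‖ := norm_smul r T

set_option synthInstance.maxHeartbeats 1000000 in
lemma clm_smul_mul {V : Type*} [NormedAddCommGroup V] [NormedSpace ℝ V]
    (a b : ℝ) : (a • (1 : V →L[ℝ] V)) * (b • (1 : V →L[ℝ] V)) = (a * b) • 1 := by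
  rw [smul_mul_assoc, one_mul, smul_smul]

set_option maxHeartbeats 4000000 in
set_option synthInstance.maxHeartbeats 1000000 in
/-- **Locally equivariant maps into a finite dimensional representation.**
Let `G` be a locally compact Hausdorff group with left Haar measure, acting freely and
continuously on a second countable, locally compact Hausdorff space `X`.  Let `V` be a
finite dimensional real vector space carrying a continuous linear `G`-action `ρ`, and let
`v ∈ V` have trivial stabiliser.  Then for every relatively compact identity neighbourhood
`K ⊆ G` and every `x₀ ∈ X` there exist a neighbourhood `A` of `x₀` and a continuous map
`F : X → V` with `F x₀ = v` and `F (k • x) = k • F x` for all `k ∈ K`, `x ∈ A`. -/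
theorem stmt_9 {G : Type*} [Group G] [TopologicalSpace G] [IsTopologicalGroup G]
    [LocallyCompactSpace G] [T2Space G] [MeasurableSpace G] [BorelSpace G]
    (m : Measure G) [m.IsHaarMeasure]
    {X : Type*} [TopologicalSpace X] [LocallyCompactSpace X] [T2Space X]
    [SecondCountableTopology X]
    [MulAction G X] [ContinuousSMul G X]
    (hfree : ∀ (g : G) (x : X), g • x = x → g = 1)
    {V : Type*} [NormedAddCommGroup V] [NormedSpace ℝ V] [FiniteDimensional ℝ V]
    (ρ : G →* (V →L[ℝ] V)) (hρ : Continuous fun p : G × V => ρ p.1 p.2)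
    (v : V) (hv : ∀ g : G, ρ g v = v → g = 1)
    (K : Set G) (hK : K ∈ nhds (1 : G)) (hKc : IsCompact (closure K))
    (x₀ : X) :
    ∃ A ∈ nhds x₀, ∃ F : X → V, Continuous F ∧ F x₀ = v ∧
      ∀ k ∈ K, ∀ x ∈ A, F (k • x) = ρ k (F x) := by
  rcases subsingleton_or_nontrivial V with hV | hV
  · exact ⟨Set.univ, Filter.univ_mem, fun _ => v, continuous_const, rfl,
      fun _ _ _ _ => Subsingleton.elim _ _⟩
  obtain ⟨W, hWc, hWn⟩ := exists_compact_mem_nhds (1 : G)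
  set L := closure K with hL
  have h1K : (1:G) ∈ K := mem_of_mem_nhds hK
  have h1L : (1:G) ∈ L := subset_closure h1K
  have hKL : K ⊆ L := subset_closure
  set B := L * W with hB
  have hBc : IsCompact B := hKc.mul hWc
  have hWB : W ⊆ B := fun w hw => ⟨1, h1L, w, hw, one_mul w⟩
  have hρc : Continuous fun g => (ρ g : V →L[ℝ] V) := rho_cont _ hρ
  set Q : Set G := (L⁻¹ * B ∪ B)⁻¹ with hQ
  have hQc : IsCompact Q := ((hKc.inv.mul hBc).union hBc).inv
  set U : Set G := (interior W ∩ {g : G | ‖(ρ g : V →L[ℝ] V) - 1‖ < 1/2})⁻¹ with hU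
  have hUn : U ∈ nhds (1:G) := by
    have h1 : interior W ∈ nhds (1:G) := interior_mem_nhds.2 hWn
    have h2 : {g : G | ‖(ρ g : V →L[ℝ] V) - 1‖ < 1/2} ∈ nhds (1:G) := by
      have hc : Continuous fun g : G => ‖(ρ g : V →L[ℝ] V) - 1‖ :=
        (hρc.sub continuous_const).norm
      refine (isOpen_lt hc continuous_const).mem_nhds ?_
      simp [map_one ρ]
    exact inv_mem_nhds_one G (Filter.inter_mem h1 h2)
  obtain ⟨A₀, hA₀n, hA₀⟩ := recurrence_control hfree Q hQc U hUn x₀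
  have hx₀A₀ : x₀ ∈ A₀ := mem_of_mem_nhds hA₀n
  have hkeyB : ∀ g ∈ L⁻¹ * B ∪ B, ∀ x ∈ A₀, g⁻¹ • x ∈ A₀ →
      g ∈ interior W ∩ {g : G | ‖(ρ g : V →L[ℝ] V) - 1‖ < 1/2} := by
    intro g hg x hx hgx
    have hq : g⁻¹ ∈ Q := by rw [hQ, Set.mem_inv, inv_inv]; exact hg
    have := hA₀ g⁻¹ hq x hx hgx
    rwa [hU, Set.mem_inv, inv_inv] at this
  obtain ⟨φ, hφc, hφx₀, hφ01, hφsupp⟩ := exists_bump A₀ x₀ hA₀n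
  have hBm : MeasurableSet B := hBc.isClosed.measurableSet
  -- the operator-valued integrand
  set fI : X → G → (V →L[ℝ] V) :=
    fun y => B.indicator (fun g => φ (g⁻¹ • y) • (ρ g : V →L[ℝ] V)) with hfI
  have hgc : ∀ y : X, Continuous fun g : G => φ (g⁻¹ • y) • (ρ g : V →L[ℝ] V) :=
    fun y => ((hφc.comp (continuous_inv.smul continuous_const)).smul hρc)
  have hfint : ∀ y, Integrable (fI y) m :=
    fun y => (((hgc y).continuousOn).integrableOn_compact hBc).integrable_indicator hBm
  set Fhat : X → (V →L[ℝ] V) := fun y => ∫ g, fI y g ∂m with hFhat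
  -- continuity of Fhat
  obtain ⟨Cρ, hCρ⟩ := hBc.exists_bound_of_continuousOn hρc.continuousOn
  have hFc : Continuous Fhat := by
    refine continuous_of_dominated (bound := B.indicator fun _ => max Cρ 0)
      (fun y => (hfint y).aestronglyMeasurable)
      (fun y => Filter.Eventually.of_forall fun g => ?_)
      ((integrableOn_const hBc.measure_lt_top.ne).integrable_indicator hBm)
      (Filter.Eventually.of_forall fun g => ?_)
    · by_cases hg : g ∈ B
      · rw [hfI]
        simp only [Set.indicator_of_mem hg]
        have h1 : ‖φ (g⁻¹ • y)‖ ≤ 1 := by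
          rw [Real.norm_eq_abs, abs_le]
          exact ⟨by linarith [(hφ01 (g⁻¹ • y)).1], (hφ01 (g⁻¹ • y)).2⟩
        have h2 : ‖(ρ g : V →L[ℝ] V)‖ ≤ max Cρ 0 := le_trans (hCρ g hg) (le_max_left _ _)
        calc ‖φ (g⁻¹ • y) • (ρ g : V →L[ℝ] V)‖
            = ‖φ (g⁻¹ • y)‖ * ‖(ρ g : V →L[ℝ] V)‖ := clm_norm_smul _ _
          _ ≤ 1 * max Cρ 0 := mul_le_mul h1 h2 (norm_nonneg _) zero_le_one
          _ = max Cρ 0 := one_mul _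
      · simp [hfI, Set.indicator_of_notMem hg]
    · by_cases hg : g ∈ B
      · simp only [hfI, Set.indicator_of_mem hg]
        exact (hφc.comp (continuous_const_smul _)).smul continuous_const
      · simp only [hfI, Set.indicator_of_notMem hg]
        exact continuous_const
  -- the scalar integrand at the base point
  set ψ : G → ℝ := fun g => B.indicator (fun g => φ (g⁻¹ • x₀)) g with hψ
  have hψc : Continuous fun g : G => φ (g⁻¹ • x₀) :=
    hφc.comp (continuous_inv.smul continuous_const)
  have hψi : Integrable ψ m :=
    ((hψc.continuousOn).integrableOn_compact hBc).integrable_indicator hBm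
  set c : ℝ := ∫ g, ψ g ∂m with hc
  have hψnn : ∀ g, 0 ≤ ψ g := fun g =>
    Set.indicator_nonneg (fun g _ => (hφ01 (g⁻¹ • x₀)).1) g
  -- positivity of c
  have hc_pos : 0 < c := by
    set Nn : Set G := interior W ∩ ((fun g : G => g⁻¹ • x₀) ⁻¹' {y | 1/2 < φ y}) with hNn
    have hNo : IsOpen Nn := isOpen_interior.inter
      ((isOpen_lt continuous_const hφc).preimage (continuous_inv.smul continuous_const))
    have h1N : (1:G) ∈ Nn := by
      refine ⟨mem_interior_iff_mem_nhds.2 hWn, ?_⟩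
      simp [hφx₀]
      norm_num
    have hNW : Nn ⊆ W := fun g hg => interior_subset hg.1
    have hNfin : m Nn < ⊤ := (measure_mono hNW).trans_lt hWc.measure_lt_top
    have hNi : Integrable (Nn.indicator fun _ => (1/2:ℝ)) m :=
      (integrableOn_const hNfin.ne).integrable_indicator hNo.measurableSet
    have hle : ∀ g, Nn.indicator (fun _ => (1/2:ℝ)) g ≤ ψ g := by
      intro g
      by_cases hg : g ∈ Nn
      · rw [Set.indicator_of_mem hg]
        have hgB : g ∈ B := hWB (interior_subset hg.1)
        rw [hψ]
        simp only [Set.indicator_of_mem hgB]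
        exact le_of_lt hg.2
      · rw [Set.indicator_of_notMem hg]
        exact hψnn g
    have hNpos : 0 < (m Nn).toReal :=
      ENNReal.toReal_pos (hNo.measure_pos m ⟨1, h1N⟩).ne' hNfin.ne
    calc (0:ℝ) < (m Nn).toReal • (1/2 : ℝ) := by simpa using by positivity
      _ = ∫ g, Nn.indicator (fun _ => (1/2:ℝ)) g ∂m :=
          (integral_indicator_const _ hNo.measurableSet).symm
      _ ≤ c := integral_mono hNi hψi hle
  have hcne : c ≠ 0 := ne_of_gt hc_pos
  -- the error term
  set fE : G → (V →L[ℝ] V) :=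
    B.indicator (fun g => φ (g⁻¹ • x₀) • ((ρ g : V →L[ℝ] V) - 1)) with hfE
  have hEi : Integrable fE m :=
    (((hψc.smul (hρc.sub continuous_const)).continuousOn).integrableOn_compact
      hBc).integrable_indicator hBm
  set E : V →L[ℝ] V := ∫ g, fE g ∂m with hE
  have hT₀ : Fhat x₀ = c • (1 : V →L[ℝ] V) + E := by
    have hsplit : ∀ g, fI x₀ g = ψ g • (1 : V →L[ℝ] V) + fE g := by
      intro g
      by_cases hg : g ∈ B
      · simp only [hfI, hψ, hfE, Set.indicator_of_mem hg, smul_sub]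
        abel
      · simp [hfI, hψ, hfE, Set.indicator_of_notMem hg]
    calc Fhat x₀ = ∫ g, (ψ g • (1 : V →L[ℝ] V) + fE g) ∂m := by
          rw [hFhat]
          exact integral_congr_ae (Filter.Eventually.of_forall hsplit)
      _ = (∫ g, ψ g • (1 : V →L[ℝ] V) ∂m) + E := integral_add (hψi.smul_const _) hEi
      _ = c • (1 : V →L[ℝ] V) + E := by rw [integral_smul_const]
  have hEnorm : ‖E‖ ≤ 2⁻¹ * c := by
    have hpt : ∀ g, ‖fE g‖ ≤ 2⁻¹ * ψ g := by
      intro g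
      by_cases hg : g ∈ B
      · simp only [hfE, hψ, Set.indicator_of_mem hg]
        rw [clm_norm_smul, Real.norm_eq_abs, abs_of_nonneg (hφ01 (g⁻¹ • x₀)).1]
        by_cases hφ0 : φ (g⁻¹ • x₀) = 0
        · simp [hφ0]
        · have hmem : g⁻¹ • x₀ ∈ A₀ := hφsupp _ hφ0
          have hlt : ‖(ρ g : V →L[ℝ] V) - 1‖ < 1/2 :=
            (hkeyB g (Or.inr hg) x₀ hx₀A₀ hmem).2
          have hnn := (hφ01 (g⁻¹ • x₀)).1
          nlinarith [norm_nonneg ((ρ g : V →L[ℝ] V) - 1)]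
      · simp [hfE, hψ, Set.indicator_of_notMem hg]
    calc ‖E‖ ≤ ∫ g, ‖fE g‖ ∂m := norm_integral_le_integral_norm _
      _ ≤ ∫ g, 2⁻¹ * ψ g ∂m := integral_mono hEi.norm (hψi.const_mul _) hpt
      _ = 2⁻¹ * c := by rw [integral_const_mul]
  -- Fhat x₀ is invertible
  have hone : ((c • (1 : V →L[ℝ] V)) * (c⁻¹ • (1 : V →L[ℝ] V))) = 1 := by
    rw [clm_smul_mul, mul_inv_cancel₀ hcne, one_smul]
  have hone' : ((c⁻¹ • (1 : V →L[ℝ] V)) * (c • (1 : V →L[ℝ] V))) = 1 := by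
    rw [clm_smul_mul, inv_mul_cancel₀ hcne, one_smul]
  set u₀ : (V →L[ℝ] V)ˣ := ⟨c • 1, c⁻¹ • 1, hone, hone'⟩ with hu₀
  have hu₀inv : ‖((u₀⁻¹ : (V →L[ℝ] V)ˣ) : V →L[ℝ] V)‖ = c⁻¹ := by
    show ‖c⁻¹ • (1 : V →L[ℝ] V)‖ = c⁻¹
    rw [clm_norm_smul, Real.norm_eq_abs, abs_of_pos (by positivity), norm_one, mul_one]
  have hsmall : ‖E‖ < ‖((u₀⁻¹ : (V →L[ℝ] V)ˣ) : V →L[ℝ] V)‖⁻¹ := by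
    rw [hu₀inv, inv_inv]
    linarith
  set u : (V →L[ℝ] V)ˣ := u₀.add E hsmall with hu
  have huval : (u : V →L[ℝ] V) = Fhat x₀ := by
    rw [hT₀, hu, Units.val_add]
  set w : V := ((u⁻¹ : (V →L[ℝ] V)ˣ) : V →L[ℝ] V) v with hw
  refine ⟨A₀, hA₀n, fun y => Fhat y w, ?_, ?_, ?_⟩
  · exact (ContinuousLinearMap.apply ℝ V w).continuous.comp hFc
  · show Fhat x₀ w = v
    rw [← huval, hw, ← ContinuousLinearMap.mul_apply, Units.mul_inv,
      ContinuousLinearMap.one_apply]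
  · intro k hk x hx
    have happly : ∀ y : X, Fhat y w = ∫ g, (fI y g) w ∂m :=
      fun y => ContinuousLinearMap.integral_apply (hfint y) w
    have hpt : ∀ h : G, fI (k • x) (k * h) = (ρ k : V →L[ℝ] V).comp (fI x h) := by
      intro h
      have hsmul : (k * h)⁻¹ • (k • x) = h⁻¹ • x := by
        rw [mul_inv_rev, mul_smul, inv_smul_smul]
      by_cases hφ0 : φ (h⁻¹ • x) = 0
      · have l1 : fI (k • x) (k * h) = 0 := by
          by_cases hm : k * h ∈ B
          · show B.indicator (fun g => φ (g⁻¹ • (k • x)) • (ρ g : V →L[ℝ] V)) (k * h) = 0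
            rw [Set.indicator_of_mem hm, hsmul, hφ0, zero_smul]
          · exact Set.indicator_of_notMem hm _
        have l2 : fI x h = 0 := by
          by_cases hm : h ∈ B
          · show B.indicator (fun g => φ (g⁻¹ • x) • (ρ g : V →L[ℝ] V)) h = 0
            rw [Set.indicator_of_mem hm, hφ0, zero_smul]
          · exact Set.indicator_of_notMem hm _
        rw [l1, l2]
        simp
      · have hxh : h⁻¹ • x ∈ A₀ := hφsupp _ hφ0
        by_cases hm : k * h ∈ B ∨ h ∈ B
        · have hhW : h ∈ interior W := by
            refine (hkeyB h ?_ x hx hxh).1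
            rcases hm with h1 | h2
            · exact Or.inl ⟨k⁻¹, Set.inv_mem_inv.2 (hKL hk), k * h, h1, by group⟩
            · exact Or.inr h2
          have hhB : h ∈ B := hWB (interior_subset hhW)
          have hkhB : k * h ∈ B := ⟨k, hKL hk, h, interior_subset hhW, rfl⟩
          simp only [hfI, Set.indicator_of_mem hkhB, Set.indicator_of_mem hhB, hsmul]
          rw [map_mul]
          ext w'
          simp [ContinuousLinearMap.smul_apply, ContinuousLinearMap.mul_apply]
        · push_neg at hm
          simp [hfI, Set.indicator_of_notMem hm.1, Set.indicator_of_notMem hm.2]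
    calc Fhat (k • x) w = ∫ g, (fI (k • x) g) w ∂m := happly _
      _ = ∫ h, (fI (k • x) (k * h)) w ∂m :=
          (integral_mul_left_eq_self (fun g => (fI (k • x) g) w) k).symm
      _ = ∫ h, (ρ k) ((fI x h) w) ∂m := by
          refine integral_congr_ae (Filter.Eventually.of_forall fun h => ?_)
          show (fI (k • x) (k * h)) w = (ρ k) ((fI x h) w)
          rw [hpt h]
          rfl
      _ = (ρ k) (∫ h, (fI x h) w ∂m) :=
          ContinuousLinearMap.integral_comp_comm _ ((hfint x).apply_continuousLinearMap w)
      _ = (ρ k) (Fhat x w) := by rw [← happly]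
end

section
/- Let G be a locally compact, second countable Hausdorff group with Haar measure m acting continuously on a locally compact Hausdorff space X, and assume G satisfies the Følner condition: for every compact K ⊆ G and every δ > 0 there is a compact set B ⊆ G with m(B) > 0 and m(gB △ B) ≤ δ·m(B) for all g ∈ K. Suppose the tube dimension of the action is at most d. Then for every compact K ⊆ G, every ε > 0, and every compact A ⊆ X there exists a finite partition of unity (φ_i)_{i∈I} for A ⊆ X such that: (a) each φ_i is (K, ε)-Følner; (b) each φ_i is supported in the interior of a tube; (c) there is a partition I = I⁽⁰⁾ ⊔ … ⊔ I⁽ᵈ⁾ such that for every l ∈ {0,…,d} and all distinct i, j ∈ I⁽ˡ⁾ the supports of φ_i and φ_j are disjoint. -/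
open scoped Pointwise symmDiff
open MeasureTheory

/-- `T ⊆ X` is a tube for the action of `G`: `T = K·S` for some compact identity
neighbourhood `K ⊆ G` and some `K`-slice `S`. -/
def IsTube (G : Type*) {X : Type*} [Group G] [TopologicalSpace G] [TopologicalSpace X]
    [MulAction G X] (T : Set X) : Prop :=
  ∃ (K : Set G) (S : Set X), IsCompact K ∧ K ∈ nhds (1 : G) ∧ IsSlice K S ∧ T = K • S

/-- The tube dimension of `G ↷ X` is at most `d`: for all compact `K ⊆ G` and compact
`Y ⊆ X` there is a family `𝒰` of open subsets of `X` such that (i) for every `x ∈ Y` some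
`U ∈ 𝒰` contains `K·x`; (ii) every `U ∈ 𝒰` is contained in a tube; (iii) any `d+2`
pairwise distinct members of `𝒰` have empty intersection. -/
def TubeDimLE (G X : Type*) [Group G] [TopologicalSpace G] [TopologicalSpace X]
    [MulAction G X] (d : ℕ) : Prop :=
  ∀ K : Set G, IsCompact K → ∀ Y : Set X, IsCompact Y →
    ∃ 𝒰 : Set (Set X),
      (∀ x ∈ Y, ∃ U ∈ 𝒰, ∀ g ∈ K, g • x ∈ U) ∧
      (∀ U ∈ 𝒰, IsOpen U ∧ ∃ T : Set X, IsTube G T ∧ U ⊆ T) ∧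
      (∀ 𝒱 : Finset (Set X), ↑𝒱 ⊆ 𝒰 → d + 2 ≤ 𝒱.card → ⋂₀ (𝒱 : Set (Set X)) = ∅)

section Comb

variable {ι : Type*} [Fintype ι] [DecidableEq ι]

noncomputable def mnF (f : ι → ℝ) (M : Finset ι) : ℝ := M.fold min 1 f

noncomputable def mxF (f : ι → ℝ) (M : Finset ι) : ℝ := Mᶜ.fold max 0 f

noncomputable def thF (d : ℕ) (η : ℝ) (f : ι → ℝ) (M : Finset ι) : ℝ :=
  if M.Nonempty ∧ M.card ≤ d + 1 then max 0 (mnF f M - mxF f M - η) else 0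

omit [Fintype ι] [DecidableEq ι] in
lemma fold_min_attain (M : Finset ι) (f : ι → ℝ) :
    M.fold min 1 f = 1 ∨ ∃ i ∈ M, M.fold min 1 f = f i := by
  induction M using Finset.cons_induction with
  | empty => exact Or.inl (Finset.fold_empty)
  | cons a s ha ih =>
      rw [Finset.fold_cons]
      rcases min_choice (f a) (s.fold min 1 f) with h | h
      · exact Or.inr ⟨a, Finset.mem_cons_self a s, h⟩
      · rcases ih with h1 | ⟨i, hi, h2⟩
        · exact Or.inl (by rw [h, h1])
        · exact Or.inr ⟨i, Finset.mem_cons_of_mem hi, by rw [h, h2]⟩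

omit [Fintype ι] [DecidableEq ι] in
lemma fold_max_attain (M : Finset ι) (f : ι → ℝ) :
    M.fold max 0 f = 0 ∨ ∃ i ∈ M, M.fold max 0 f = f i := by
  induction M using Finset.cons_induction with
  | empty => exact Or.inl (Finset.fold_empty)
  | cons a s ha ih =>
      rw [Finset.fold_cons]
      rcases max_choice (f a) (s.fold max 0 f) with h | h
      · exact Or.inr ⟨a, Finset.mem_cons_self a s, h⟩
      · rcases ih with h1 | ⟨i, hi, h2⟩
        · exact Or.inl (by rw [h, h1])
        · exact Or.inr ⟨i, Finset.mem_cons_of_mem hi, by rw [h, h2]⟩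

omit [Fintype ι] [DecidableEq ι] in
lemma mnF_le {f : ι → ℝ} {M : Finset ι} {i : ι} (hi : i ∈ M) : mnF f M ≤ f i :=
  (Finset.fold_min_le _).2 (Or.inr ⟨i, hi, le_rfl⟩)

omit [Fintype ι] [DecidableEq ι] in
lemma mnF_le_one {f : ι → ℝ} {M : Finset ι} : mnF f M ≤ 1 :=
  (Finset.fold_min_le _).2 (Or.inl le_rfl)

omit [Fintype ι] [DecidableEq ι] in
lemma le_mnF {f : ι → ℝ} {M : Finset ι} {c : ℝ} (hc : c ≤ 1) (h : ∀ i ∈ M, c ≤ f i) :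
    c ≤ mnF f M :=
  (Finset.le_fold_min _).2 ⟨hc, h⟩

omit [Fintype ι] [DecidableEq ι] in
lemma mnF_attain {f : ι → ℝ} {M : Finset ι} (hM : M.Nonempty) (hf1 : ∀ i, f i ≤ 1) :
    ∃ i ∈ M, mnF f M = f i := by
  rcases fold_min_attain M f with h | h
  · obtain ⟨i, hi⟩ := hM
    refine ⟨i, hi, le_antisymm (mnF_le hi) ?_⟩
    rw [mnF, h]; exact hf1 i
  · exact h

lemma mxF_nonneg {f : ι → ℝ} {M : Finset ι} : 0 ≤ mxF f M :=
  (Finset.le_fold_max _).2 (Or.inl le_rfl)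

lemma le_mxF {f : ι → ℝ} {M : Finset ι} {i : ι} (hi : i ∉ M) : f i ≤ mxF f M :=
  (Finset.le_fold_max _).2 (Or.inr ⟨i, Finset.mem_compl.2 hi, le_rfl⟩)

lemma mxF_le {f : ι → ℝ} {M : Finset ι} {c : ℝ} (hc : 0 ≤ c) (h : ∀ i ∉ M, f i ≤ c) :
    mxF f M ≤ c :=
  (Finset.fold_max_le _).2 ⟨hc, fun i hi => h i (Finset.mem_compl.1 hi)⟩

lemma mxF_attain {f : ι → ℝ} {M : Finset ι} :
    mxF f M = 0 ∨ ∃ i ∉ M, mxF f M = f i := by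
  rcases fold_max_attain Mᶜ f with h | ⟨i, hi, h2⟩
  · exact Or.inl h
  · exact Or.inr ⟨i, Finset.mem_compl.1 hi, h2⟩

omit [Fintype ι] [DecidableEq ι] in
lemma mnF_lip {f g : ι → ℝ} {M : Finset ι} {δ : ℝ} (hδ : 0 ≤ δ)
    (h : ∀ i, |f i - g i| ≤ δ) : |mnF f M - mnF g M| ≤ δ := by
  have hfa : mnF f M ≤ 1 := mnF_le_one
  have hga : mnF g M ≤ 1 := mnF_le_one
  rw [abs_sub_le_iff]
  constructor
  · rcases fold_min_attain M g with hg1 | ⟨i, hi, hgi⟩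
    · have h3 : mnF g M = 1 := hg1
      linarith
    · have h3 : mnF g M = g i := hgi
      have h1 : mnF f M ≤ f i := mnF_le hi
      have h2 := (abs_sub_le_iff.1 (h i)).1
      linarith
  · rcases fold_min_attain M f with hf1 | ⟨i, hi, hfi⟩
    · have h3 : mnF f M = 1 := hf1
      linarith
    · have h3 : mnF f M = f i := hfi
      have h1 : mnF g M ≤ g i := mnF_le hi
      have h2 := (abs_sub_le_iff.1 (h i)).2
      linarith

lemma mxF_lip {f g : ι → ℝ} {M : Finset ι} {δ : ℝ} (hδ : 0 ≤ δ)
    (h : ∀ i, |f i - g i| ≤ δ) : |mxF f M - mxF g M| ≤ δ := by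
  rw [abs_sub_le_iff]
  constructor
  · rcases mxF_attain (f := f) (M := M) with hf1 | ⟨i, hi, hfi⟩
    · have : (0:ℝ) ≤ mxF g M := mxF_nonneg
      rw [hf1]; linarith
    · have h1 : g i ≤ mxF g M := le_mxF hi
      have h2 := (abs_sub_le_iff.1 (h i)).1
      rw [hfi]; linarith
  · rcases mxF_attain (f := g) (M := M) with hg1 | ⟨i, hi, hgi⟩
    · have : (0:ℝ) ≤ mxF f M := mxF_nonneg
      rw [hg1]; linarith
    · have h1 : f i ≤ mxF f M := le_mxF hi
      have h2 := (abs_sub_le_iff.1 (h i)).2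
      rw [hgi]; linarith

lemma thF_nonneg {d : ℕ} {η : ℝ} {f : ι → ℝ} {M : Finset ι} : 0 ≤ thF d η f M := by
  rw [thF]; split_ifs
  · exact le_max_left _ _
  · exact le_refl 0

lemma thF_lip {d : ℕ} {η : ℝ} {f g : ι → ℝ} {M : Finset ι} {δ : ℝ} (hδ : 0 ≤ δ)
    (h : ∀ i, |f i - g i| ≤ δ) : |thF d η f M - thF d η g M| ≤ 2 * δ := by
  rw [thF, thF]
  split_ifs with hM
  · have h1 := mnF_lip (M := M) hδ h
    have h2 := mxF_lip (M := M) hδ h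
    calc |max 0 (mnF f M - mxF f M - η) - max 0 (mnF g M - mxF g M - η)|
        ≤ max |0 - 0| |(mnF f M - mxF f M - η) - (mnF g M - mxF g M - η)| :=
          abs_max_sub_max_le_max _ _ _ _
      _ ≤ 2 * δ := by
          rw [sub_zero, abs_zero]
          refine max_le (by linarith) ?_
          have e : (mnF f M - mxF f M - η) - (mnF g M - mxF g M - η)
              = (mnF f M - mnF g M) - (mxF f M - mxF g M) := by ring
          rw [e]
          calc |(mnF f M - mnF g M) - (mxF f M - mxF g M)|
              ≤ |mnF f M - mnF g M| + |mxF f M - mxF g M| := abs_sub _ _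
            _ ≤ 2 * δ := by linarith
  · simpa using by linarith

lemma mxF_shift {f : ι → ℝ} {v : ℝ} (hv : 0 ≤ v) (M : Finset ι)
    (hge : v ≤ mxF f M) :
    mxF (fun i => max 0 (f i - v)) M = mxF f M - v := by
  apply le_antisymm
  · refine mxF_le (by linarith) fun i hi => ?_
    have := le_mxF (f := f) hi
    exact max_le (by linarith) (by linarith)
  · rw [sub_le_iff_le_add]
    refine mxF_le (by have := mxF_nonneg (f := fun i => max 0 (f i - v)) (M := M); linarith)
      fun i hi => ?_
    have h1 : f i - v ≤ max 0 (f i - v) := le_max_right _ _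
    have h2 := le_mxF (f := fun i => max 0 (f i - v)) hi
    linarith

lemma mnF_shift {f : ι → ℝ} {v : ℝ} (hv : 0 ≤ v) (hf1 : ∀ i, f i ≤ 1) {M : Finset ι}
    (hM : M.Nonempty) (hfv : ∀ i ∈ M, v < f i) :
    mnF (fun i => max 0 (f i - v)) M = mnF f M - v := by
  apply le_antisymm
  · obtain ⟨i, hi, hif⟩ := mnF_attain hM hf1
    have h1 : mnF (fun i => max 0 (f i - v)) M ≤ max 0 (f i - v) := mnF_le hi
    have h2 : max 0 (f i - v) = f i - v := max_eq_right (by have := hfv i hi; linarith)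
    rw [hif]; rw [h2] at h1; exact h1
  · refine le_mnF ?_ fun i hi => ?_
    · have : mnF f M ≤ f (hM.choose) := mnF_le hM.choose_spec
      have := hf1 hM.choose
      linarith
    · have h2 : max 0 (f i - v) = f i - v := max_eq_right (by have := hfv i hi; linarith)
      have := mnF_le (f := f) hi
      rw [h2]; linarith

lemma comb (d : ℕ) (η : ℝ) (hη : 0 ≤ η) (N : ℕ) :
    ∀ f : ι → ℝ, (∀ i, 0 ≤ f i) → (∀ i, f i ≤ 1) →
      (Finset.univ.filter fun i => 0 < f i).card = N → N ≤ d + 1 →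
      (∑ M : Finset ι, thF d η f M ≤ mxF f ∅) ∧
      (mxF f ∅ - N * η ≤ ∑ M : Finset ι, thF d η f M) := by
  induction N using Nat.strong_induction_on with
  | _ N ih =>
    intro f hf0 hf1 hPcard hNd
    set P : Finset ι := Finset.univ.filter fun i => 0 < f i with hP
    by_cases hPne : P.Nonempty
    · -- positive case
      obtain ⟨i₀, hi₀P, hi₀⟩ := mnF_attain hPne hf1
      set v : ℝ := mnF f P with hv
      have hv0 : 0 < v := by
        rw [hi₀]
        exact (Finset.mem_filter.1 hi₀P).2
      have hv1 : v ≤ 1 := by rw [hi₀]; exact hf1 i₀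
      have hfP : ∀ i, i ∉ P → f i = 0 := by
        intro i hi
        have : ¬ 0 < f i := fun h => hi (Finset.mem_filter.2 ⟨Finset.mem_univ i, h⟩)
        linarith [hf0 i]
      have hvle : ∀ i ∈ P, v ≤ f i := fun i hi => mnF_le hi
      set f' : ι → ℝ := fun i => max 0 (f i - v) with hf'
      have hf'0 : ∀ i, 0 ≤ f' i := fun i => le_max_left _ _
      have hf'1 : ∀ i, f' i ≤ 1 := fun i => max_le (by norm_num) (by have := hf1 i; linarith)
      set P' : Finset ι := Finset.univ.filter fun i => 0 < f' i with hP'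
      have hP'sub : P' ⊂ P := by
        constructor
        · intro i hi
          have h1 : 0 < f' i := (Finset.mem_filter.1 hi).2
          have h2 : 0 < f i := by
            by_contra h
            have hneg : f i - v < 0 := by push_neg at h; linarith
            have : f' i = 0 := max_eq_left (by linarith)
            rw [this] at h1; exact lt_irrefl 0 h1
          exact Finset.mem_filter.2 ⟨Finset.mem_univ i, h2⟩
        · intro hcon
          have : i₀ ∈ P' := hcon hi₀P
          have h1 : 0 < f' i₀ := (Finset.mem_filter.1 this).2
          have : f' i₀ = 0 := max_eq_left (by rw [← hi₀]; linarith)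
          rw [this] at h1; exact lt_irrefl 0 h1
      have hcardlt : P'.card < N := by rw [← hPcard]; exact Finset.card_lt_card hP'sub
      have hP'v : ∀ i ∈ P', v < f i := by
        intro i hi
        have h1 : 0 < f' i := (Finset.mem_filter.1 hi).2
        by_contra h
        push_neg at h
        have : f' i = 0 := max_eq_left (by linarith)
        rw [this] at h1; exact lt_irrefl 0 h1
      obtain ⟨IHA, IHB⟩ := ih P'.card hcardlt f' hf'0 hf'1 rfl (le_trans (Nat.le_of_lt hcardlt) hNd)
      -- mx of univ shift
      have hmx0 : v ≤ mxF f ∅ := by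
        rw [hi₀]; exact le_mxF (Finset.notMem_empty i₀)
      have hmxshift : mxF f' ∅ = mxF f ∅ - v := mxF_shift hv0.le ∅ hmx0
      -- θ_P for f
      have hPcard' : P.card ≤ d + 1 := by rw [hPcard]; exact hNd
      have hthP : thF d η f P = max 0 (v - η) := by
        rw [thF, if_pos ⟨hPne, hPcard'⟩]
        have h2 : mxF f P = 0 := le_antisymm (mxF_le le_rfl fun i hi => (hfP i hi).le) mxF_nonneg
        rw [h2, ← hv, sub_zero]
      -- θ_P for f' is zero
      have hthP' : thF d η f' P = 0 := by
        rw [thF, if_pos ⟨hPne, hPcard'⟩]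
        have h1 : mnF f' P ≤ 0 := by
          have hz : f' i₀ = 0 := max_eq_left (by rw [← hi₀]; linarith)
          have := mnF_le (f := f') hi₀P
          linarith
        have h2 : (0:ℝ) ≤ mxF f' P := mxF_nonneg
        exact max_eq_left (by linarith)
      -- all other θ agree
      have hkey : ∀ M : Finset ι, M ≠ P → thF d η f M = thF d η f' M := by
        intro M hMP
        rw [thF, thF]
        split_ifs with hM
        · obtain ⟨hMne, hMcard⟩ := hM
          by_cases hsub : ∀ i ∈ M, v < f i
          · -- shift case; M ⊆ P', and i₀ ∉ M
            have hi₀M : i₀ ∉ M := fun h => by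
              have := hsub i₀ h; rw [hi₀] at this; exact lt_irrefl _ this
            have hgeM : v ≤ mxF f M := by rw [hi₀]; exact le_mxF hi₀M
            rw [mnF_shift hv0.le hf1 hMne hsub, mxF_shift hv0.le M hgeM]
            ring_nf
          · push_neg at hsub
            obtain ⟨i, hiM, hfi⟩ := hsub
            -- both sides are zero
            have hside2 : max 0 (mnF f' M - mxF f' M - η) = 0 := by
              have h1 : mnF f' M ≤ 0 := by
                have hz : f' i = 0 := max_eq_left (by linarith)
                have := mnF_le (f := f') hiM
                linarith
              have h2 : (0:ℝ) ≤ mxF f' M := mxF_nonneg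
              exact max_eq_left (by linarith)
            have hside1 : max 0 (mnF f M - mxF f M - η) = 0 := by
              by_cases hiP : i ∈ P
              · by_cases hMsubP : ∀ j ∈ M, j ∈ P
                · have hMP' : ∃ j ∈ P, j ∉ M := by
                    by_contra hcon
                    push_neg at hcon
                    exact hMP (Finset.Subset.antisymm hMsubP hcon)
                  obtain ⟨j, hjP, hjM⟩ := hMP'
                  have h1 : mnF f M ≤ f i := mnF_le hiM
                  have h2 : v ≤ f j := hvle j hjP
                  have h3 : f j ≤ mxF f M := le_mxF hjM
                  exact max_eq_left (by linarith)
                · push_neg at hMsubP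
                  obtain ⟨j, hjM, hjP⟩ := hMsubP
                  have h1 : mnF f M ≤ f j := mnF_le hjM
                  have h2 : f j = 0 := hfP j hjP
                  have h3 : (0:ℝ) ≤ mxF f M := mxF_nonneg
                  exact max_eq_left (by linarith)
              · have h1 : mnF f M ≤ f i := mnF_le hiM
                have h2 : f i = 0 := hfP i hiP
                have h3 : (0:ℝ) ≤ mxF f M := mxF_nonneg
                exact max_eq_left (by linarith)
            rw [hside1, hside2]
        · rfl
      -- sum decomposition
      have hsum : ∑ M : Finset ι, thF d η f M = max 0 (v - η) + ∑ M : Finset ι, thF d η f' M := by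
        have hPuniv : P ∈ (Finset.univ : Finset (Finset ι)) := Finset.mem_univ P
        rw [← Finset.add_sum_erase _ _ hPuniv, ← Finset.add_sum_erase _ (thF d η f') hPuniv]
        rw [hthP, hthP', zero_add]
        congr 1
        apply Finset.sum_congr rfl
        intro M hM
        exact hkey M (Finset.ne_of_mem_erase hM)
      rw [hsum]
      constructor
      · have h1 : max 0 (v - η) ≤ v := max_le hv0.le (by linarith)
        have := hmxshift
        linarith
      · have h1 : v - η ≤ max 0 (v - η) := le_max_right _ _
        have h2 : (P'.card : ℝ) + 1 ≤ N := by
          have : P'.card + 1 ≤ N := hcardlt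
          exact_mod_cast this
        have := hmxshift
        have hη' : 0 ≤ η := hη
        nlinarith [hη']
    · -- base case: P empty, all f = 0
      have hf : ∀ i, f i = 0 := by
        intro i
        by_contra h
        have : 0 < f i := lt_of_le_of_ne (hf0 i) (Ne.symm h)
        exact hPne ⟨i, Finset.mem_filter.2 ⟨Finset.mem_univ i, this⟩⟩
      have hmx : mxF f ∅ = 0 :=
        le_antisymm (mxF_le le_rfl fun i _ => (hf i).le) mxF_nonneg
      have hsum : ∑ M : Finset ι, thF d η f M = 0 := by
        apply Finset.sum_eq_zero
        intro M _
        rw [thF]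
        split_ifs with hM
        · obtain ⟨hMne, _⟩ := hM
          have h1 : mnF f M ≤ 0 := by
            have := mnF_le (f := f) hMne.choose_spec
            rw [hf hMne.choose] at this; exact this
          have h2 : (0:ℝ) ≤ mxF f M := mxF_nonneg
          exact max_eq_left (by linarith)
        · rfl
      rw [hsum, hmx]
      have hN : N = 0 := by
        rw [← hPcard]
        simp only [Finset.card_eq_zero]
        exact Finset.not_nonempty_iff_eq_empty.1 hPne
      rw [hN]
      norm_num

end Comb

section ContHelpers

variable {ι : Type*} [Fintype ι] [DecidableEq ι] {X : Type*} [TopologicalSpace X]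

omit [Fintype ι] [DecidableEq ι] in
lemma cont_fold_min (M : Finset ι) (b : ℝ) (g : ι → X → ℝ) (hg : ∀ i, Continuous (g i)) :
    Continuous fun x => M.fold min b (fun i => g i x) := by
  induction M using Finset.cons_induction with
  | empty => simp only [Finset.fold_empty]; exact continuous_const
  | cons a s ha ih =>
      simp only [Finset.fold_cons]
      exact (hg a).min ih

omit [Fintype ι] [DecidableEq ι] in
lemma cont_fold_max (M : Finset ι) (b : ℝ) (g : ι → X → ℝ) (hg : ∀ i, Continuous (g i)) :
    Continuous fun x => M.fold max b (fun i => g i x) := by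
  induction M using Finset.cons_induction with
  | empty => simp only [Finset.fold_empty]; exact continuous_const
  | cons a s ha ih =>
      simp only [Finset.fold_cons]
      exact (hg a).max ih

omit [Fintype ι] [DecidableEq ι] in
lemma cont_mnF (M : Finset ι) (g : ι → X → ℝ) (hg : ∀ i, Continuous (g i)) :
    Continuous fun x => mnF (fun i => g i x) M :=
  cont_fold_min M 1 g hg

lemma cont_mxF (M : Finset ι) (g : ι → X → ℝ) (hg : ∀ i, Continuous (g i)) :
    Continuous fun x => mxF (fun i => g i x) M :=
  cont_fold_max Mᶜ 0 g hg

lemma cont_thF (d : ℕ) (η : ℝ) (M : Finset ι) (g : ι → X → ℝ) (hg : ∀ i, Continuous (g i)) :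
    Continuous fun x => thF d η (fun i => g i x) M := by
  rw [show (fun x => thF d η (fun i => g i x) M)
      = if M.Nonempty ∧ M.card ≤ d + 1 then
          (fun x => max 0 (mnF (fun i => g i x) M - mxF (fun i => g i x) M - η))
        else (fun _ => 0) from ?_]
  · split_ifs with h
    · exact continuous_const.max (((cont_mnF M g hg).sub (cont_mxF M g hg)).sub continuous_const)
    · exact continuous_const
  · ext x; rw [thF]; split_ifs with h <;> rfl

end ContHelpers

lemma div_lip {a₁ a₂ s₁ s₂ co : ℝ} (hco : 0 < co) (h1 : co ≤ s₁) (h2 : co ≤ s₂)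
    (ha₂0 : 0 ≤ a₂) (hb₂ : a₂ ≤ s₂) :
    |a₁ / s₁ - a₂ / s₂| ≤ (|a₁ - a₂| + |s₁ - s₂|) / co := by
  have hs₁ : 0 < s₁ := lt_of_lt_of_le hco h1
  have hs₂ : 0 < s₂ := lt_of_lt_of_le hco h2
  have e : a₁ / s₁ - a₂ / s₂ = (a₁ - a₂) / s₁ + (a₂ / s₂) * ((s₂ - s₁) / s₁) := by
    field_simp
    ring
  rw [e]
  have hr : a₂ / s₂ ≤ 1 := (div_le_one hs₂).2 hb₂
  have hr0 : 0 ≤ a₂ / s₂ := div_nonneg ha₂0 hs₂.le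
  have A1 : |(a₁ - a₂) / s₁| = |a₁ - a₂| / s₁ := by rw [abs_div, abs_of_pos hs₁]
  have A2 : |(a₂ / s₂) * ((s₂ - s₁) / s₁)| = (a₂ / s₂) * (|s₂ - s₁| / s₁) := by
    rw [abs_mul, abs_of_nonneg hr0, abs_div, abs_of_pos hs₁]
  calc |(a₁ - a₂) / s₁ + (a₂ / s₂) * ((s₂ - s₁) / s₁)|
      ≤ |(a₁ - a₂) / s₁| + |(a₂ / s₂) * ((s₂ - s₁) / s₁)| := abs_add_le _ _
    _ = |a₁ - a₂| / s₁ + (a₂ / s₂) * (|s₂ - s₁| / s₁) := by rw [A1, A2]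
    _ ≤ |a₁ - a₂| / co + 1 * (|s₁ - s₂| / co) := by
        have b1 : |a₁ - a₂| / s₁ ≤ |a₁ - a₂| / co :=
          div_le_div_of_nonneg_left (abs_nonneg _) hco h1
        have b2 : |s₂ - s₁| / s₁ ≤ |s₁ - s₂| / co := by
          rw [abs_sub_comm]
          exact div_le_div_of_nonneg_left (abs_nonneg _) hco h1
        have b3 : (a₂ / s₂) * (|s₂ - s₁| / s₁) ≤ 1 * (|s₁ - s₂| / co) := by
          apply mul_le_mul hr b2 (div_nonneg (abs_nonneg _) hs₁.le) zero_le_one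
        linarith
    _ = (|a₁ - a₂| + |s₁ - s₂|) / co := by ring

set_option maxHeartbeats 4000000 in
/-- **Finite tube dimension yields Følner partitions of unity.**
Let `G` be a locally compact second countable Hausdorff group satisfying the Følner
condition, acting continuously on a locally compact Hausdorff space `X` with tube dimension
at most `d`.  Then for every compact `K ⊆ G`, `ε > 0` and compact `A ⊆ X` there is a finite
partition of unity `(φ_i)` for `A ⊆ X` consisting of `(K, ε)`-Følner functions, each
supported in the interior of a tube, admitting a colouring into `d+1` classes within each
of which the supports are pairwise disjoint. -/
theorem stmt_13 {G : Type*} [Group G] [TopologicalSpace G] [IsTopologicalGroup G]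
    [LocallyCompactSpace G] [T2Space G] [SecondCountableTopology G]
    [MeasurableSpace G] [BorelSpace G]
    (m : Measure G) [m.IsHaarMeasure]
    {X : Type*} [TopologicalSpace X] [LocallyCompactSpace X] [T2Space X]
    [MulAction G X] [ContinuousSMul G X]
    (hFolner : ∀ K : Set G, IsCompact K → ∀ δ : ℝ, 0 < δ →
      ∃ B : Set G, IsCompact B ∧ 0 < m B ∧
        ∀ g ∈ K, m ((g • B) ∆ B) ≤ ENNReal.ofReal δ * m B)
    (d : ℕ) (htube : TubeDimLE G X d)
    (K : Set G) (hK : IsCompact K) (ε : ℝ) (hε : 0 < ε)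
    (A : Set X) (hA : IsCompact A) :
    ∃ (n : ℕ) (φ : Fin n → X → ℝ) (cls : Fin n → Fin (d + 1)),
      (∀ i, Continuous (φ i)) ∧
      (∀ i, ∀ x : X, 0 ≤ φ i x ∧ φ i x ≤ 1) ∧
      (∀ x : X, ∑ i, φ i x ≤ 1) ∧
      (∀ x ∈ A, ∑ i, φ i x = 1) ∧
      (∀ i, ∀ g ∈ K, ∀ x : X, |φ i (g • x) - φ i x| < ε) ∧
      (∀ i, ∃ T : Set X, IsTube G T ∧ tsupport (φ i) ⊆ interior T) ∧
      (∀ i j, i ≠ j → cls i = cls j → Disjoint (tsupport (φ i)) (tsupport (φ j))) := by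
  classical
  -- a trivial (empty) tube
  obtain ⟨K₀, hK₀c, hK₀n⟩ := exists_compact_mem_nhds (1 : G)
  have htriv : ∃ T : Set X, IsTube G T ∧ (∅ : Set X) ⊆ interior T := by
    refine ⟨K₀ • (∅ : Set X), ⟨K₀, ∅, hK₀c, hK₀n, ⟨isCompact_empty, ?_⟩, rfl⟩, by simp⟩
    simp [Set.InjOn]
  -- constants
  have hd1 : (0:ℝ) < (d:ℝ) + 1 := by positivity
  set η : ℝ := min (1 / (2 * ((d:ℝ) + 1))) (ε / (20 * ((d:ℝ) + 1))) with hηdef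
  have hη0 : 0 < η := lt_min (by positivity) (by positivity)
  have hη1 : ((d:ℝ) + 1) * η ≤ 1/2 := by
    have h := min_le_left (1 / (2 * ((d:ℝ) + 1))) (ε / (20 * ((d:ℝ) + 1)))
    rw [← hηdef] at h
    have h2 : ((d:ℝ)+1) * η ≤ ((d:ℝ)+1) * (1 / (2 * ((d:ℝ) + 1))) := by nlinarith
    have h3 : ((d:ℝ)+1) * (1 / (2 * ((d:ℝ) + 1))) = 1/2 := by field_simp
    linarith
  have hη2 : ((d:ℝ) + 1) * η ≤ ε/20 := by
    have h := min_le_right (1 / (2 * ((d:ℝ) + 1))) (ε / (20 * ((d:ℝ) + 1)))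
    rw [← hηdef] at h
    have h2 : ((d:ℝ)+1) * η ≤ ((d:ℝ)+1) * (ε / (20 * ((d:ℝ) + 1))) := by nlinarith
    have h3 : ((d:ℝ)+1) * (ε / (20 * ((d:ℝ) + 1))) = ε/20 := by field_simp
    linarith
  set δ : ℝ := ε / 10 with hδdef
  have hδ0 : 0 < δ := by positivity
  -- Følner set
  obtain ⟨B, hBc, hBpos, hBF⟩ := hFolner K hK δ hδ0
  have hBfin : m B ≠ ⊤ := hBc.measure_lt_top.ne
  have hBr : (0:ℝ) < (m B).toReal := ENNReal.toReal_pos (ne_of_gt hBpos) hBfin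
  have hBmeas : MeasurableSet B := hBc.isClosed.measurableSet
  have hFol : ∀ h ∈ K, m ((h⁻¹ • B) ∆ B) ≤ ENNReal.ofReal δ * m B := by
    intro h hh
    have e1 : (h⁻¹ • B) ∆ B = h⁻¹ • (B ∆ (h • B)) := by
      rw [Set.smul_set_symmDiff, inv_smul_smul]
    rw [e1, measure_smul, symmDiff_comm]
    exact hBF h hh
  -- tube-dimension cover
  set C : Set G := B * B⁻¹ with hCdef
  have hCc : IsCompact C := hBc.mul hBc.inv
  obtain ⟨𝒰, hcov, hopen, hmult⟩ := htube C hCc A hA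
  -- openness of "cores"
  have hOopen : ∀ (L : Set G), IsCompact L → ∀ (W : Set X), IsOpen W →
      IsOpen {x : X | ∀ g ∈ L, g • x ∈ W} := by
    intro L hL W hW
    rw [isOpen_iff_forall_mem_open]
    intro x hx
    have hsub : L ×ˢ ({x} : Set X) ⊆ (fun p : G × X => p.1 • p.2) ⁻¹' W := by
      rintro ⟨g, y⟩ ⟨hg, hy⟩
      have hyx : y = x := hy
      subst hyx
      exact hx g hg
    obtain ⟨u, w, hu, hw, hLu, hxw, huw⟩ :=
      generalized_tube_lemma hL isCompact_singleton (hW.preimage continuous_smul) hsub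
    refine ⟨w, fun y hy g hg => ?_, hw, hxw rfl⟩
    have hmem : (g, y) ∈ u ×ˢ w := ⟨hLu hg, hy⟩
    exact huw hmem
  -- per-point data
  have hpt : ∀ a : ↥A, ∃ (Q : Set X) (W : Set X), W ∈ 𝒰 ∧ IsCompact Q ∧
      (a : X) ∈ interior Q ∧ Q ⊆ {x : X | ∀ g ∈ C, g • x ∈ W} := by
    rintro ⟨a, ha⟩
    obtain ⟨W, hW𝒰, hWa⟩ := hcov a ha
    have hO : IsOpen {x : X | ∀ g ∈ C, g • x ∈ W} := hOopen C hCc W (hopen W hW𝒰).1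
    obtain ⟨Q, hQc, haQ, hQsub⟩ := exists_compact_subset hO hWa
    exact ⟨Q, W, hW𝒰, hQc, haQ, hQsub⟩
  choose Q Uof hU𝒰 hQc hQint hQsub using hpt
  have hAcov : A ⊆ ⋃ a : ↥A, interior (Q a) :=
    fun x hx => Set.mem_iUnion.2 ⟨⟨x, hx⟩, hQint ⟨x, hx⟩⟩
  obtain ⟨J, hJ⟩ := hA.elim_finite_subcover (fun a : ↥A => interior (Q a))
    (fun a => isOpen_interior) hAcov
  -- index the distinct U's
  set 𝒯 : Finset (Set X) := J.image Uof with h𝒯def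
  set n : ℕ := 𝒯.card with hndef
  set e : ↥𝒯 ≃ Fin n := Fintype.equivFinOfCardEq (Fintype.card_coe 𝒯) with hedef
  set U : Fin n → Set X := fun k => ((e.symm k : ↥𝒯) : Set X) with hUdef
  have hUinj : Function.Injective U := fun k l h => e.symm.injective (Subtype.ext h)
  have hUmem : ∀ k, U k ∈ 𝒰 := by
    intro k
    have h1 : U k ∈ 𝒯 := (e.symm k).2
    rw [h𝒯def] at h1
    obtain ⟨a, haJ, hEq⟩ := Finset.mem_image.1 h1
    rw [← hEq]
    exact hU𝒰 a
  have hUopen : ∀ k, IsOpen (U k) := fun k => (hopen _ (hUmem k)).1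
  set AA : Fin n → Set X := fun k => ⋃ a ∈ J.filter (fun a => Uof a = U k), Q a with hAAdef
  have hAAc : ∀ k, IsCompact (AA k) := by
    intro k
    apply (J.filter (fun a => Uof a = U k)).finite_toSet.isCompact_biUnion
    exact fun a _ => hQc a
  have hAAO : ∀ k, ∀ x ∈ AA k, ∀ g ∈ C, g • x ∈ U k := by
    intro k x hx g hg
    obtain ⟨a, ha, hxa⟩ := Set.mem_iUnion₂.1 hx
    have h1 := Finset.mem_filter.1 ha
    have h2 := hQsub a hxa g hg
    rw [h1.2] at h2
    exact h2
  have hAcov' : ∀ x ∈ A, ∃ k, x ∈ AA k := by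
    intro x hx
    obtain ⟨a, haJ, hxa⟩ := Set.mem_iUnion₂.1 (hJ hx)
    have hmem : Uof a ∈ 𝒯 := by rw [h𝒯def]; exact Finset.mem_image_of_mem _ haJ
    refine ⟨e ⟨Uof a, hmem⟩, ?_⟩
    have hUk : U (e ⟨Uof a, hmem⟩) = Uof a := by
      simp only [hUdef, Equiv.symm_apply_apply]
    refine Set.mem_iUnion₂.2 ⟨a, ?_, interior_subset hxa⟩
    exact Finset.mem_filter.2 ⟨haJ, hUk.symm⟩
  -- cores, compact sets, Urysohn functions
  set V : Fin n → Set X := fun k => {y : X | ∀ b ∈ B, b • y ∈ U k} with hVdef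
  have hVopen : ∀ k, IsOpen (V k) := fun k => hOopen B hBc (U k) (hUopen k)
  set D : Fin n → Set X := fun k => B⁻¹ • AA k with hDdef
  have hDc : ∀ k, IsCompact (D k) := fun k => hBc.inv.smul_set (hAAc k)
  have hDV : ∀ k, D k ⊆ V k := by
    intro k y hy
    obtain ⟨g, hg, a, ha, rfl⟩ := hy
    intro b hb
    rw [smul_smul]
    exact hAAO k a ha (b * g) (Set.mul_mem_mul hb hg)
  have hUry : ∀ k, ∃ f : C(X, ℝ), Set.EqOn f 1 (D k) ∧ Set.EqOn f 0 ((V k)ᶜ) ∧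
      ∀ x, f x ∈ Set.Icc (0:ℝ) 1 := by
    intro k
    obtain ⟨f, h1, h0, _, hicc⟩ := exists_continuous_one_zero_of_isCompact (hDc k)
      (hVopen k).isClosed_compl (Set.disjoint_left.2 fun {x} hxD hxV => hxV (hDV k hxD))
    exact ⟨f, h1, h0, hicc⟩
  choose f hf1 hf0 hficc using hUry
  -- averaged functions
  set ψ : Fin n → X → ℝ := fun k x => (m B).toReal⁻¹ * ∫ g in B, f k (g⁻¹ • x) ∂m with hψdef
  have hcontg : ∀ k (x : X), Continuous fun g : G => f k (g⁻¹ • x) :=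
    fun k x => (f k).continuous.comp (continuous_inv.smul continuous_const)
  have hbd : ∀ k (y : X), ‖f k y‖ ≤ 1 := by
    intro k y
    rw [Real.norm_eq_abs, abs_of_nonneg (hficc k y).1]
    exact (hficc k y).2
  have hIntOn : ∀ k (x : X) (s : Set G), m s ≠ ⊤ →
      IntegrableOn (fun g => f k (g⁻¹ • x)) s m := by
    intro k x s hs
    refine Integrable.mono' (g := fun _ => (1:ℝ)) (integrableOn_const hs)
      ((hcontg k x).aestronglyMeasurable.restrict) ?_
    exact Filter.Eventually.of_forall fun g => hbd k _
  have hψ0 : ∀ k x, 0 ≤ ψ k x := by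
    intro k x
    apply mul_nonneg (inv_nonneg.2 ENNReal.toReal_nonneg)
    exact setIntegral_nonneg hBmeas fun g _ => (hficc k _).1
  have hintB : ∀ k x, ∫ g in B, f k (g⁻¹ • x) ∂m ≤ (m B).toReal := by
    intro k x
    have h1 : ∫ g in B, f k (g⁻¹ • x) ∂m ≤ ∫ _ in B, (1:ℝ) ∂m := by
      apply setIntegral_mono_on (hIntOn k x B hBfin)
        (integrableOn_const hBc.measure_lt_top.ne) hBmeas
      exact fun g _ => (hficc k _).2
    rwa [setIntegral_const, smul_eq_mul, mul_one] at h1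
  have hψ1 : ∀ k x, ψ k x ≤ 1 := by
    intro k x
    have h2 : ψ k x ≤ (m B).toReal⁻¹ * (m B).toReal :=
      mul_le_mul_of_nonneg_left (hintB k x) (inv_nonneg.2 ENNReal.toReal_nonneg)
    rwa [inv_mul_cancel₀ (ne_of_gt hBr)] at h2
  have hψcont : ∀ k, Continuous (ψ k) := by
    intro k
    rw [continuous_iff_continuousAt]
    intro x₀
    apply Metric.tendsto_nhds.2
    intro ε' hε'
    set ε₂ : ℝ := ε' / 2 with hε₂def
    have hε₂ : 0 < ε₂ := by positivity
    have hHcont : Continuous fun q : G × X => f k (q.1⁻¹ • q.2) - f k (q.1⁻¹ • x₀) := by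
      apply Continuous.sub
      · exact (f k).continuous.comp ((continuous_fst.inv).smul continuous_snd)
      · exact (f k).continuous.comp ((continuous_fst.inv).smul continuous_const)
    have hsub : B ×ˢ ({x₀} : Set X) ⊆
        (fun q : G × X => f k (q.1⁻¹ • q.2) - f k (q.1⁻¹ • x₀)) ⁻¹' Metric.ball 0 ε₂ := by
      rintro ⟨g, y⟩ ⟨hg, hy⟩
      have hyx : y = x₀ := hy
      subst hyx
      simp [Metric.mem_ball, hε₂]
    obtain ⟨u, w, hu, hw, hBu, hxw, huw⟩ := generalized_tube_lemma hBc isCompact_singleton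
      (Metric.isOpen_ball.preimage hHcont) hsub
    apply Filter.eventually_of_mem (hw.mem_nhds (hxw rfl))
    intro x hxwmem
    have hptw : ∀ g ∈ B, |f k (g⁻¹ • x) - f k (g⁻¹ • x₀)| < ε₂ := by
      intro g hg
      have hmem : (g, x) ∈ u ×ˢ w := ⟨hBu hg, hxwmem⟩
      have h2 := huw hmem
      simpa [Real.dist_eq] using h2
    have hintdiff : |(∫ g in B, f k (g⁻¹ • x) ∂m) - ∫ g in B, f k (g⁻¹ • x₀) ∂m|
        ≤ ε₂ * (m B).toReal := by
      rw [← integral_sub (hIntOn k x B hBfin) (hIntOn k x₀ B hBfin)]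
      have h3 := norm_setIntegral_le_of_norm_le_const (μ := m) hBc.measure_lt_top
        (C := ε₂) (f := fun g => f k (g⁻¹ • x) - f k (g⁻¹ • x₀)) ?_
      · rwa [Real.norm_eq_abs] at h3
      · intro g hg
        rw [Real.norm_eq_abs]
        exact (hptw g hg).le
    rw [Real.dist_eq]
    show |(m B).toReal⁻¹ * ∫ g in B, f k (g⁻¹ • x) ∂m
        - (m B).toReal⁻¹ * ∫ g in B, f k (g⁻¹ • x₀) ∂m| < ε'
    rw [← mul_sub, abs_mul, abs_of_nonneg (inv_nonneg.2 ENNReal.toReal_nonneg)]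
    calc (m B).toReal⁻¹ * |(∫ g in B, f k (g⁻¹ • x) ∂m) - ∫ g in B, f k (g⁻¹ • x₀) ∂m|
        ≤ (m B).toReal⁻¹ * (ε₂ * (m B).toReal) :=
          mul_le_mul_of_nonneg_left hintdiff (inv_nonneg.2 ENNReal.toReal_nonneg)
      _ = ε₂ := by field_simp
      _ < ε' := by rw [hε₂def]; linarith
  have hψsupp : ∀ k x, ψ k x ≠ 0 → x ∈ U k := by
    intro k x hne
    by_contra hxU
    apply hne
    have hzero : Set.EqOn (fun g : G => f k (g⁻¹ • x)) (fun _ => (0:ℝ)) B := by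
      intro g hg
      simp only
      apply hf0 k
      intro hmem
      exact hxU (by simpa using hmem g hg)
    show (m B).toReal⁻¹ * ∫ g in B, f k (g⁻¹ • x) ∂m = 0
    rw [setIntegral_congr_fun hBmeas hzero]
    simp
  have hψone : ∀ x ∈ A, ∃ k, ψ k x = 1 := by
    intro x hx
    obtain ⟨k, hxAA⟩ := hAcov' x hx
    refine ⟨k, ?_⟩
    have hone : Set.EqOn (fun g : G => f k (g⁻¹ • x)) (fun _ => (1:ℝ)) B := by
      intro g hg
      simp only
      apply hf1 k
      exact Set.mem_smul.2 ⟨g⁻¹, Set.inv_mem_inv.2 hg, x, hxAA, rfl⟩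
    show (m B).toReal⁻¹ * ∫ g in B, f k (g⁻¹ • x) ∂m = 1
    rw [setIntegral_congr_fun hBmeas hone, setIntegral_const, smul_eq_mul, mul_one, measureReal_def,
      inv_mul_cancel₀ (ne_of_gt hBr)]
  -- Følner property of ψ
  have hψFol : ∀ k, ∀ h ∈ K, ∀ x, |ψ k (h • x) - ψ k x| ≤ δ := by
    intro k h hh x
    set S : Set G := h⁻¹ • B with hSdef
    have hSc : IsCompact S := by
      rw [hSdef, ← Set.image_smul]
      exact hBc.image (continuous_const_smul _)
    have hSmeas : MeasurableSet S := hSc.isClosed.measurableSet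
    have hSfin : m S ≠ ⊤ := hSc.measure_lt_top.ne
    have hchg : ∫ g in S, f k (g⁻¹ • x) ∂m = ∫ g in B, f k (g⁻¹ • (h • x)) ∂m := by
      have hme : MeasurableEmbedding (fun g : G => h⁻¹ * g) :=
        (Homeomorph.mulLeft h⁻¹).measurableEmbedding
      have hmp := measurePreserving_mul_left m h⁻¹
      conv_lhs => rw [← hmp.map_eq]
      rw [hme.setIntegral_map]
      have hpre : (fun g : G => h⁻¹ * g) ⁻¹' S = B := by
        ext g
        show h⁻¹ * g ∈ h⁻¹ • B ↔ g ∈ B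
        rw [← smul_eq_mul]
        exact Set.smul_mem_smul_set_iff
      rw [hpre]
      apply setIntegral_congr_fun hBmeas
      intro g _
      simp only
      congr 1
      rw [mul_inv_rev, inv_inv, mul_smul]
    have hISB : IntegrableOn (fun g => f k (g⁻¹ • x)) (S \ B) m :=
      (hIntOn k x S hSfin).mono_set Set.diff_subset
    have hIBS : IntegrableOn (fun g => f k (g⁻¹ • x)) (B \ S) m :=
      (hIntOn k x B hBfin).mono_set Set.diff_subset
    have hISiB : IntegrableOn (fun g => f k (g⁻¹ • x)) (S ∩ B) m :=
      (hIntOn k x B hBfin).mono_set Set.inter_subset_right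
    have e1 : ∫ g in S, f k (g⁻¹ • x) ∂m
        = (∫ g in S \ B, f k (g⁻¹ • x) ∂m) + ∫ g in S ∩ B, f k (g⁻¹ • x) ∂m := by
      rw [← setIntegral_union (Set.disjoint_left.2 fun {g} hx1 hx2 => hx1.2 hx2.2)
        (hSmeas.inter hBmeas) hISB hISiB, Set.diff_union_inter]
    have e2 : ∫ g in B, f k (g⁻¹ • x) ∂m
        = (∫ g in B \ S, f k (g⁻¹ • x) ∂m) + ∫ g in S ∩ B, f k (g⁻¹ • x) ∂m := by
      rw [← setIntegral_union (Set.disjoint_left.2 fun {g} hx1 hx2 => hx1.2 hx2.1)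
        (hSmeas.inter hBmeas) hIBS hISiB]
      rw [show B \ S ∪ S ∩ B = B by rw [Set.inter_comm, Set.diff_union_inter]]
    have hSBfin : m (S \ B) < ⊤ := lt_of_le_of_lt (measure_mono Set.diff_subset) hSc.measure_lt_top
    have hBSfin : m (B \ S) < ⊤ := lt_of_le_of_lt (measure_mono Set.diff_subset) hBc.measure_lt_top
    have hb1 : ‖∫ g in S \ B, f k (g⁻¹ • x) ∂m‖ ≤ 1 * (m (S \ B)).toReal :=
      norm_setIntegral_le_of_norm_le_const hSBfin (fun g _ => hbd k _)
    have hb2 : ‖∫ g in B \ S, f k (g⁻¹ • x) ∂m‖ ≤ 1 * (m (B \ S)).toReal :=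
      norm_setIntegral_le_of_norm_le_const hBSfin (fun g _ => hbd k _)
    have hsymm : m (S \ B) + m (B \ S) = m (S ∆ B) := by
      rw [Set.symmDiff_def, measure_union disjoint_sdiff_sdiff (hBmeas.diff hSmeas)]
    have hle : m (S ∆ B) ≤ ENNReal.ofReal δ * m B := hFol h hh
    have hfin2 : (ENNReal.ofReal δ * m B) ≠ ⊤ := ENNReal.mul_ne_top ENNReal.ofReal_ne_top hBfin
    have htoR : (m (S ∆ B)).toReal ≤ δ * (m B).toReal := by
      have h2 := ENNReal.toReal_mono hfin2 hle
      rwa [ENNReal.toReal_mul, ENNReal.toReal_ofReal hδ0.le] at h2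
    have hkey : |ψ k (h • x) - ψ k x|
        = (m B).toReal⁻¹ * |∫ g in S, f k (g⁻¹ • x) ∂m - ∫ g in B, f k (g⁻¹ • x) ∂m| := by
      show |(m B).toReal⁻¹ * ∫ g in B, f k (g⁻¹ • (h • x)) ∂m
          - (m B).toReal⁻¹ * ∫ g in B, f k (g⁻¹ • x) ∂m| = _
      rw [← hchg, ← mul_sub, abs_mul, abs_of_nonneg (inv_nonneg.2 ENNReal.toReal_nonneg)]
    rw [hkey]
    have hdiff : |∫ g in S, f k (g⁻¹ • x) ∂m - ∫ g in B, f k (g⁻¹ • x) ∂m|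
        ≤ (m (S \ B)).toReal + (m (B \ S)).toReal := by
      rw [e1, e2]
      have e3 : (∫ g in S \ B, f k (g⁻¹ • x) ∂m) + (∫ g in S ∩ B, f k (g⁻¹ • x) ∂m)
          - ((∫ g in B \ S, f k (g⁻¹ • x) ∂m) + ∫ g in S ∩ B, f k (g⁻¹ • x) ∂m)
          = (∫ g in S \ B, f k (g⁻¹ • x) ∂m) - ∫ g in B \ S, f k (g⁻¹ • x) ∂m := by ring
      rw [e3]
      calc |(∫ g in S \ B, f k (g⁻¹ • x) ∂m) - ∫ g in B \ S, f k (g⁻¹ • x) ∂m|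
          ≤ |∫ g in S \ B, f k (g⁻¹ • x) ∂m| + |∫ g in B \ S, f k (g⁻¹ • x) ∂m| := abs_sub _ _
        _ ≤ (m (S \ B)).toReal + (m (B \ S)).toReal := by
            rw [Real.norm_eq_abs] at hb1 hb2
            linarith
    calc (m B).toReal⁻¹ * |∫ g in S, f k (g⁻¹ • x) ∂m - ∫ g in B, f k (g⁻¹ • x) ∂m|
        ≤ (m B).toReal⁻¹ * ((m (S \ B)).toReal + (m (B \ S)).toReal) :=
          mul_le_mul_of_nonneg_left hdiff (inv_nonneg.2 ENNReal.toReal_nonneg)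
      _ = (m B).toReal⁻¹ * (m (S ∆ B)).toReal := by
          rw [← ENNReal.toReal_add hSBfin.ne hBSfin.ne, hsymm]
      _ ≤ (m B).toReal⁻¹ * (δ * (m B).toReal) :=
          mul_le_mul_of_nonneg_left htoR (inv_nonneg.2 ENNReal.toReal_nonneg)
      _ = δ := by field_simp
  -- multiplicity
  have hmultk : ∀ x : X, ((Finset.univ.filter fun k => 0 < ψ k x).card ≤ d + 1) := by
    intro x
    by_contra hcon
    push_neg at hcon
    set P : Finset (Fin n) := Finset.univ.filter fun k => 0 < ψ k x with hPdef
    have himg : ↑(P.image U) ⊆ 𝒰 := by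
      intro W hW
      obtain ⟨k, hk, rfl⟩ := Finset.mem_image.1 (Finset.mem_coe.1 hW)
      exact hUmem k
    have hcard : d + 2 ≤ (P.image U).card := by
      rw [Finset.card_image_of_injective _ hUinj]
      omega
    have hempty := hmult (P.image U) himg hcard
    have hxmem : x ∈ ⋂₀ (↑(P.image U) : Set (Set X)) := by
      rw [Set.mem_sInter]
      intro W hW
      obtain ⟨k, hk, rfl⟩ := Finset.mem_image.1 (Finset.mem_coe.1 hW)
      exact hψsupp k x (ne_of_gt (Finset.mem_filter.1 hk).2)
    rw [hempty] at hxmem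
    exact hxmem
  -- assembly
  set θ : Finset (Fin n) → X → ℝ := fun M x => thF d η (fun k => ψ k x) M with hθdef
  have hθcont : ∀ M, Continuous (θ M) := fun M => cont_thF d η M ψ hψcont
  have hθnn : ∀ M x, 0 ≤ θ M x := fun M x => thF_nonneg
  set SS : X → ℝ := fun x => ∑ M : Finset (Fin n), θ M x with hSSdef
  have hSScont : Continuous SS := continuous_finset_sum _ fun M _ => hθcont M
  have hθleSS : ∀ M x, θ M x ≤ SS x := fun M x =>
    Finset.single_le_sum (f := fun M => θ M x) (fun M _ => hθnn M x) (Finset.mem_univ M)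
  have hcomb : ∀ x : X, (SS x ≤ mxF (fun k => ψ k x) ∅) ∧
      (mxF (fun k => ψ k x) ∅ - ((Finset.univ.filter fun k => 0 < ψ k x).card : ℝ) * η ≤ SS x) :=
    fun x => comb d η hη0.le _ (fun k => ψ k x) (fun k => hψ0 k x) (fun k => hψ1 k x) rfl
      (hmultk x)
  have hmx1 : ∀ x, mxF (fun k => ψ k x) ∅ ≤ 1 := fun x => mxF_le zero_le_one fun k _ => hψ1 k x
  have hSSub : ∀ x, SS x ≤ 1 := fun x => le_trans (hcomb x).1 (hmx1 x)
  have hSSlb : ∀ x, mxF (fun k => ψ k x) ∅ - ((d:ℝ)+1) * η ≤ SS x := by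
    intro x
    have h1 := (hcomb x).2
    have h2 : ((Finset.univ.filter fun k => 0 < ψ k x).card : ℝ) * η ≤ ((d:ℝ)+1) * η := by
      apply mul_le_mul_of_nonneg_right _ hη0.le
      have h3 := hmultk x
      exact_mod_cast h3
    linarith
  set co : ℝ := 1 - ((d:ℝ)+1) * η with hcodef
  have hco2 : (1:ℝ)/2 ≤ co := by rw [hcodef]; linarith
  have hco0 : 0 < co := by linarith
  set s : X → ℝ := fun x => max co (SS x) with hsdef
  have hscont : Continuous s := continuous_const.max hSScont
  have hsge : ∀ x, co ≤ s x := fun x => le_max_left _ _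
  have hspos : ∀ x, 0 < s x := fun x => lt_of_lt_of_le hco0 (hsge x)
  have hSSles : ∀ x, SS x ≤ s x := fun x => le_max_right _ _
  have hAeq : ∀ x ∈ A, s x = SS x := by
    intro x hx
    obtain ⟨k, hk⟩ := hψone x hx
    have h1 : (1:ℝ) ≤ mxF (fun k => ψ k x) ∅ := by
      rw [← hk]; exact le_mxF (f := fun k' => ψ k' x) (Finset.notMem_empty k)
    have h2 : co ≤ SS x := by
      have h3 := hSSlb x
      rw [hcodef]
      linarith
    exact max_eq_right h2
  -- supports
  have hZ : ∀ M : Finset (Fin n), M.Nonempty ∧ M.card ≤ d + 1 →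
      tsupport (fun x => θ M x / s x) ⊆
        {x : X | η ≤ mnF (fun k => ψ k x) M - mxF (fun k => ψ k x) M} := by
    intro M hM
    apply closure_minimal ?_ (isClosed_le continuous_const
      ((cont_mnF M ψ hψcont).sub (cont_mxF M ψ hψcont)))
    intro x hx
    have hxne : θ M x / s x ≠ 0 := hx
    have hθne : θ M x ≠ 0 := fun h0 => hxne (by rw [h0, zero_div])
    have hpos : 0 < mnF (fun k => ψ k x) M - mxF (fun k => ψ k x) M - η := by
      by_contra hle
      push_neg at hle
      apply hθne
      show thF d η (fun k => ψ k x) M = 0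
      rw [thF, if_pos hM]
      exact max_eq_left hle
    simp only [Set.mem_setOf_eq, Pi.sub_apply]
    linarith
  have hzero : ∀ M : Finset (Fin n), ¬(M.Nonempty ∧ M.card ≤ d + 1) →
      (fun x => θ M x / s x) = fun _ => (0:ℝ) := by
    intro M hM
    funext x
    show thF d η (fun k => ψ k x) M / s x = 0
    rw [thF, if_neg hM, zero_div]
  have htsupp0 : tsupport (fun _ : X => (0:ℝ)) = ∅ := by
    simp [tsupport]
  have hZU : ∀ (M : Finset (Fin n)) (k : Fin n), k ∈ M →
      {x : X | η ≤ mnF (fun k => ψ k x) M - mxF (fun k => ψ k x) M} ⊆ U k := by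
    intro M k hk x hx
    simp only [Set.mem_setOf_eq] at hx
    have h1 : mnF (fun k => ψ k x) M ≤ ψ k x := mnF_le (f := fun k => ψ k x) hk
    have h2 : (0:ℝ) ≤ mxF (fun k => ψ k x) M := mxF_nonneg
    exact hψsupp k x (ne_of_gt (by linarith))
  -- final data
  set Nn : ℕ := Fintype.card (Finset (Fin n)) with hNndef
  set E : Finset (Fin n) ≃ Fin Nn := Fintype.equivFin _ with hEdef
  have hsum_eq : ∀ x : X, (∑ i : Fin Nn, θ (E.symm i) x / s x) = SS x / s x := by
    intro x
    rw [← Finset.sum_div]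
    have h := Equiv.sum_comp E.symm (fun M => θ M x)
    rw [h]
  refine ⟨Nn, fun i x => θ (E.symm i) x / s x,
    fun i => if h : (E.symm i).Nonempty ∧ (E.symm i).card ≤ d + 1
      then ⟨(E.symm i).card - 1, by have := h.2; omega⟩ else ⟨0, by omega⟩,
    ?_, ?_, ?_, ?_, ?_, ?_, ?_⟩
  · intro i
    exact (hθcont _).div hscont fun x => ne_of_gt (hspos x)
  · intro i x
    constructor
    · exact div_nonneg (hθnn _ _) (hspos x).le
    · rw [div_le_one (hspos x)]
      exact le_trans (hθleSS _ x) (hSSles x)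
  · intro x
    rw [hsum_eq x]
    rw [div_le_one (hspos x)]
    exact hSSles x
  · intro x hx
    rw [hsum_eq x, hAeq x hx]
    have h1 : co ≤ SS x := by
      have h2 := hsge x
      rwa [hAeq x hx] at h2
    exact div_self (ne_of_gt (lt_of_lt_of_le hco0 h1))
  · intro i g hg x
    have h1 : |θ (E.symm i) (g • x) - θ (E.symm i) x| ≤ 2 * δ :=
      thF_lip hδ0.le fun k => hψFol k g hg x
    have hm : |mxF (fun k => ψ k (g • x)) ∅ - mxF (fun k => ψ k x) ∅| ≤ δ :=
      mxF_lip hδ0.le fun k => hψFol k g hg x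
    have h2 : |SS (g • x) - SS x| ≤ δ + ((d:ℝ)+1) * η := by
      have i1 := (hcomb (g • x)).1
      have i2 := hSSlb (g • x)
      have i3 := (hcomb x).1
      have i4 := hSSlb x
      rw [abs_sub_le_iff] at hm ⊢
      exact ⟨by linarith [hm.1], by linarith [hm.2]⟩
    have h3 : |s (g • x) - s x| ≤ δ + ((d:ℝ)+1) * η := by
      have := abs_max_sub_max_le_max co (SS (g • x)) co (SS x)
      rw [sub_self, abs_zero] at this
      calc |s (g • x) - s x| ≤ max 0 |SS (g • x) - SS x| := this
        _ ≤ δ + ((d:ℝ)+1) * η := max_le (by positivity) h2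
    have h4 := div_lip (a₁ := θ (E.symm i) (g • x)) hco0 (hsge (g • x)) (hsge x) (hθnn (E.symm i) x)
      (le_trans (hθleSS _ x) (hSSles x))
    have h5 : (0:ℝ) ≤ 2 * δ + (δ + ((d:ℝ)+1) * η) := by positivity
    calc |θ (E.symm i) (g • x) / s (g • x) - θ (E.symm i) x / s x|
        ≤ (|θ (E.symm i) (g • x) - θ (E.symm i) x| + |s (g • x) - s x|) / co := h4
      _ ≤ (2 * δ + (δ + ((d:ℝ)+1) * η)) / co := by
          gcongr
      _ ≤ (2 * δ + (δ + ((d:ℝ)+1) * η)) / (1/2) :=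
          div_le_div_of_nonneg_left h5 (by norm_num) hco2
      _ = 2 * (3 * δ + ((d:ℝ)+1) * η) := by ring
      _ < ε := by linarith [hη2, hδdef]
  · intro i
    show ∃ T : Set X, IsTube G T ∧ tsupport (fun x => θ (E.symm i) x / s x) ⊆ interior T
    by_cases hM : (E.symm i).Nonempty ∧ (E.symm i).card ≤ d + 1
    · obtain ⟨k, hk⟩ := hM.1
      obtain ⟨T, hT, hsubT⟩ := (hopen _ (hUmem k)).2
      refine ⟨T, hT, ?_⟩
      exact ((hZ (E.symm i) hM).trans (hZU _ k hk)).trans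
        (interior_maximal hsubT (hUopen k))
    · obtain ⟨T, hT, h0⟩ := htriv
      refine ⟨T, hT, ?_⟩
      rw [hzero _ hM, htsupp0]
      exact Set.empty_subset _
  · intro i j hij hcls
    show Disjoint (tsupport fun x => θ (E.symm i) x / s x)
      (tsupport fun x => θ (E.symm j) x / s x)
    have hMM' : E.symm i ≠ E.symm j := fun h => hij (E.symm.injective h)
    by_cases h1 : (E.symm i).Nonempty ∧ (E.symm i).card ≤ d + 1
    · by_cases h2 : (E.symm j).Nonempty ∧ (E.symm j).card ≤ d + 1
      · have hcard : (E.symm i).card = (E.symm j).card := by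
          simp only [dif_pos h1, dif_pos h2] at hcls
          have hv := congrArg Fin.val hcls
          simp only at hv
          have hp1 : 0 < (E.symm i).card := Finset.card_pos.2 h1.1
          have hp2 : 0 < (E.symm j).card := Finset.card_pos.2 h2.1
          omega
        have hab : ∃ a ∈ E.symm i, a ∉ E.symm j := by
          by_contra hcon
          push_neg at hcon
          exact hMM' (Finset.eq_of_subset_of_card_le hcon (le_of_eq hcard.symm))
        have hba : ∃ b ∈ E.symm j, b ∉ E.symm i := by
          by_contra hcon
          push_neg at hcon
          exact hMM' (Finset.eq_of_subset_of_card_le hcon (le_of_eq hcard)).symm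
        obtain ⟨a, haM, haM'⟩ := hab
        obtain ⟨b, hbM', hbM⟩ := hba
        rw [Set.disjoint_left]
        intro x hxi hxj
        have hx1 := hZ (E.symm i) h1 hxi
        have hx2 := hZ (E.symm j) h2 hxj
        simp only [Set.mem_setOf_eq] at hx1 hx2
        have e1 : mnF (fun k => ψ k x) (E.symm i) ≤ ψ a x := mnF_le (f := fun k => ψ k x) haM
        have e2 : ψ b x ≤ mxF (fun k => ψ k x) (E.symm i) := le_mxF (f := fun k => ψ k x) hbM
        have e3 : mnF (fun k => ψ k x) (E.symm j) ≤ ψ b x := mnF_le (f := fun k => ψ k x) hbM'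
        have e4 : ψ a x ≤ mxF (fun k => ψ k x) (E.symm j) := le_mxF (f := fun k => ψ k x) haM'
        linarith
      · rw [hzero _ h2, htsupp0]
        exact Set.disjoint_empty _
    · rw [hzero _ h1, htsupp0]
      exact Set.empty_disjoint _
end

section
/- Let G be a locally compact, second countable Hausdorff group acting continuously on a locally compact Hausdorff space X, and let d ∈ ℕ. Suppose that for every compact K ⊆ G, every ε > 0, and every compact A ⊆ X there is a finite partition of unity (φ_i)_{i∈I} for A ⊆ X consisting of (K, ε)-Følner functions, each supported in the interior of a tube, and with a partition I = I⁽⁰⁾ ⊔ … ⊔ I⁽ᵈ⁾ such that within each class the supports are pairwise disjoint. Then for every pair of compact subsets K, L ⊆ G, every ε > 0, and every compact A ⊆ X there is a finite partition of unity (φ_i)_{i∈I} for A ⊆ X such that: (a) each φ_i is (K, ε)-Følner; (b) L·supp(φ_i) is contained in the interior of a tube for every i; (c) there is a partition I = I⁽⁰⁾ ⊔ … ⊔ I⁽ᵈ⁾ such that for every l ∈ {0,…,d} and all distinct i, j ∈ I⁽ˡ⁾ the sets L·supp(φ_i) and L·supp(φ_j) are disjoint. -/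
open scoped Pointwise

/-- **From plain Følner partitions of unity to fattened ones.**
Suppose that for all compact `K ⊆ G`, `ε > 0` and compact `A ⊆ X` there is a finite
partition of unity for `A` consisting of `(K, ε)`-Følner functions supported in interiors
of tubes, with a colouring into `d+1` classes having pairwise disjoint supports in each
class.  Then for all compact `K, L ⊆ G`, `ε > 0` and compact `A ⊆ X` there is a finite
partition of unity `(φ_i)` for `A` of `(K, ε)`-Følner functions such that each
`L·supp φ_i` is contained in the interior of a tube and, within each of the `d+1` classes
of a colouring, the sets `L·supp φ_i` are pairwise disjoint. -/
theorem stmt_14 {G : Type*} [Group G] [TopologicalSpace G] [IsTopologicalGroup G]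
    [LocallyCompactSpace G] [T2Space G] [SecondCountableTopology G]
    {X : Type*} [TopologicalSpace X] [LocallyCompactSpace X] [T2Space X]
    [MulAction G X] [ContinuousSMul G X]
    (d : ℕ)
    (hyp : ∀ K : Set G, IsCompact K → ∀ ε : ℝ, 0 < ε → ∀ A : Set X, IsCompact A →
      ∃ (n : ℕ) (φ : Fin n → X → ℝ) (cls : Fin n → Fin (d + 1)),
        (∀ i, Continuous (φ i)) ∧
        (∀ i, ∀ x : X, 0 ≤ φ i x ∧ φ i x ≤ 1) ∧
        (∀ x : X, ∑ i, φ i x ≤ 1) ∧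
        (∀ x ∈ A, ∑ i, φ i x = 1) ∧
        (∀ i, ∀ g ∈ K, ∀ x : X, |φ i (g • x) - φ i x| < ε) ∧
        (∀ i, ∃ T : Set X, IsTube G T ∧ tsupport (φ i) ⊆ interior T) ∧
        (∀ i j, i ≠ j → cls i = cls j → Disjoint (tsupport (φ i)) (tsupport (φ j))))
    (K : Set G) (hK : IsCompact K) (L : Set G) (hL : IsCompact L)
    (ε : ℝ) (hε : 0 < ε) (A : Set X) (hA : IsCompact A) :
    ∃ (n : ℕ) (φ : Fin n → X → ℝ) (cls : Fin n → Fin (d + 1)),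
      (∀ i, Continuous (φ i)) ∧
      (∀ i, ∀ x : X, 0 ≤ φ i x ∧ φ i x ≤ 1) ∧
      (∀ x : X, ∑ i, φ i x ≤ 1) ∧
      (∀ x ∈ A, ∑ i, φ i x = 1) ∧
      (∀ i, ∀ g ∈ K, ∀ x : X, |φ i (g • x) - φ i x| < ε) ∧
      (∀ i, ∃ T : Set X, IsTube G T ∧ L • tsupport (φ i) ⊆ interior T) ∧
      (∀ i j, i ≠ j → cls i = cls j →
        Disjoint (L • tsupport (φ i)) (L • tsupport (φ j))) := by
  classical
  -- enlarged compact sets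
  set L' : Set G := insert 1 L with hL'def
  have hL'c : IsCompact L' := hL.insert 1
  have h1L' : (1:G) ∈ L' := Set.mem_insert _ _
  have hLL' : L ⊆ L' := Set.subset_insert _ _
  set K' : Set G := L' * insert 1 K * L'⁻¹ with hK'def
  have hK'c : IsCompact K' := (hL'c.mul (hK.insert 1)).mul hL'c.inv
  have hmem : ∀ h ∈ L', ∀ g ∈ insert (1:G) K, h * g * h⁻¹ ∈ K' := by
    intro h hh g hg
    exact Set.mul_mem_mul (Set.mul_mem_mul hh hg) (Set.inv_mem_inv.mpr hh)
  have hmem2 : ∀ h ∈ L', h ∈ K' := by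
    intro h hh
    have e : h = h * 1 * (1:G)⁻¹ := by group
    rw [e]
    exact Set.mul_mem_mul (Set.mul_mem_mul hh (Set.mem_insert _ _)) (Set.inv_mem_inv.mpr h1L')
  -- choice of δ
  set D : ℝ := 8*(d:ℝ)+13 with hDdef
  have hD : (0:ℝ) < D := by positivity
  set δ : ℝ := min (ε/D) (1/(2*((d:ℝ)+1))) with hδdef
  have hδpos : 0 < δ := lt_min (div_pos hε hD) (by positivity)
  have hd1 : (0:ℝ) < (d:ℝ)+1 := by positivity
  have hδd : ((d:ℝ)+1)*δ ≤ 1/2 := by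
    have h1 : δ ≤ 1/(2*((d:ℝ)+1)) := min_le_right _ _
    have h2 : ((d:ℝ)+1)*δ ≤ ((d:ℝ)+1)*(1/(2*((d:ℝ)+1))) :=
      mul_le_mul_of_nonneg_left h1 hd1.le
    have h3 : ((d:ℝ)+1)*(1/(2*((d:ℝ)+1))) = 1/2 := by field_simp
    linarith
  have hδε : δ * D ≤ ε := by
    have h1 : δ ≤ ε/D := min_le_left _ _
    rw [← le_div_iff₀ hD]
    exact h1
  obtain ⟨n, φ, cls, hcont, h01, hsumle, hsumA, hFol, htube, hdisj⟩ := hyp K' hK'c δ hδpos A hA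
  -- the shrunk functions
  set m : Fin n → X → ℝ := fun i x => sInf ((fun h => φ i (h • x)) '' L') with hmdef
  have himne : ∀ (i : Fin n) (x : X), ((fun h => φ i (h • x)) '' L').Nonempty :=
    fun i x => ⟨_, Set.mem_image_of_mem _ h1L'⟩
  have hbdd : ∀ (i : Fin n) (x : X), BddBelow ((fun h => φ i (h • x)) '' L') := by
    intro i x
    refine ⟨0, ?_⟩
    rintro y ⟨h, -, rfl⟩
    exact (h01 i _).1
  have hm_le : ∀ (i : Fin n) (x : X), ∀ h ∈ L', m i x ≤ φ i (h • x) := fun i x h hh =>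
    csInf_le (hbdd i x) (Set.mem_image_of_mem _ hh)
  have hm_nonneg : ∀ (i : Fin n) (x : X), 0 ≤ m i x := by
    intro i x
    apply le_csInf (himne i x)
    rintro y ⟨h, -, rfl⟩
    exact (h01 i _).1
  have hm_le_phi : ∀ (i : Fin n) (x : X), m i x ≤ φ i x := by
    intro i x
    have := hm_le i x 1 h1L'
    simpa using this
  have hm_ge : ∀ (i : Fin n) (x : X), φ i x - δ ≤ m i x := by
    intro i x
    apply le_csInf (himne i x)
    rintro y ⟨h, hh, rfl⟩
    have h2 := abs_lt.mp (hFol i h (hmem2 h hh) x)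
    linarith [h2.1]
  have hm_cont : ∀ i, Continuous (m i) := fun i =>
    hL'c.continuous_sInf ((hcont i).comp (continuous_snd.smul continuous_fst))
  -- almost invariance of m
  have key : ∀ (i : Fin n), ∀ g ∈ K, ∀ (x : X), ∀ h ∈ L',
      |φ i (h • g • x) - φ i (h • x)| < δ := by
    intro i g hg x h hh
    have hmemK : h * g * h⁻¹ ∈ K' := hmem h hh g (Set.mem_insert_of_mem _ hg)
    have hf := hFol i _ hmemK (h • x)
    have e : (h * g * h⁻¹) • (h • x) = h • g • x := by
      simp [smul_smul, mul_assoc]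
    rwa [e] at hf
  have hm_shift : ∀ (i : Fin n), ∀ g ∈ K, ∀ (x : X), |m i (g • x) - m i x| ≤ δ := by
    intro i g hg x
    rw [abs_le]
    constructor
    · have h1 : m i x - δ ≤ m i (g • x) := by
        apply le_csInf (himne i _)
        rintro y ⟨h, hh, rfl⟩
        have h2 := abs_lt.mp (key i g hg x h hh)
        have h3 := hm_le i x h hh
        simp only []
        linarith [h2.1]
      linarith
    · have h1 : m i (g • x) - δ ≤ m i x := by
        apply le_csInf (himne i x)
        rintro y ⟨h, hh, rfl⟩
        have h2 := abs_lt.mp (key i g hg x h hh)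
        have h3 := hm_le i (g • x) h hh
        simp only []
        linarith [h2.2]
      linarith
  -- at most d+1 functions are nonzero at a point
  have hcard : ∀ x : X, (Finset.univ.filter (fun i => φ i x ≠ 0)).card ≤ d+1 := by
    intro x
    have h1 : (Finset.univ.filter (fun i => φ i x ≠ 0)).card
        ≤ (Finset.univ : Finset (Fin (d+1))).card := by
      apply Finset.card_le_card_of_injOn cls (fun i _ => Finset.mem_univ _)
      intro i hi j hj hij
      by_contra hne
      have hd' := hdisj i j hne hij
      have hxi : x ∈ tsupport (φ i) :=
        subset_closure (Function.mem_support.mpr (by simpa using (Finset.mem_filter.mp hi).2))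
      have hxj : x ∈ tsupport (φ j) :=
        subset_closure (Function.mem_support.mpr (by simpa using (Finset.mem_filter.mp hj).2))
      exact Set.disjoint_left.mp hd' hxi hxj
    simpa using h1
  -- the sum s of the m i
  set s : X → ℝ := fun x => ∑ i, m i x with hsdef
  have hs_cont : Continuous s := continuous_finset_sum _ fun i _ => hm_cont i
  have hs_le1 : ∀ x, s x ≤ 1 := fun x =>
    le_trans (Finset.sum_le_sum fun i _ => hm_le_phi i x) (hsumle x)
  have hm_le_s : ∀ (i : Fin n) (x : X), m i x ≤ s x := fun i x =>
    Finset.single_le_sum (fun j _ => hm_nonneg j x) (Finset.mem_univ i)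
  have hsub : ∀ x : X, ∑ i, (φ i x - m i x) ≤ ((d:ℝ)+1)*δ := by
    intro x
    have e : ∑ i ∈ Finset.univ.filter (fun i => φ i x ≠ 0), (φ i x - m i x)
        = ∑ i, (φ i x - m i x) := by
      apply Finset.sum_filter_of_ne
      intro i _ hfne
      intro h0
      have hm0 : m i x = 0 := le_antisymm (h0 ▸ hm_le_phi i x) (hm_nonneg i x)
      exact hfne (by rw [h0, hm0, sub_zero])
    calc ∑ i, (φ i x - m i x)
        = ∑ i ∈ Finset.univ.filter (fun i => φ i x ≠ 0), (φ i x - m i x) := e.symm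
      _ ≤ ∑ _i ∈ Finset.univ.filter (fun i => φ i x ≠ 0), δ :=
          Finset.sum_le_sum fun i _ => by linarith [hm_ge i x]
      _ = (Finset.univ.filter (fun i => φ i x ≠ 0)).card * δ := by
          rw [Finset.sum_const, nsmul_eq_mul]
      _ ≤ ((d:ℝ)+1)*δ := by
          have h1 : ((Finset.univ.filter (fun i => φ i x ≠ 0)).card : ℝ) ≤ (d:ℝ)+1 := by
            exact_mod_cast hcard x
          exact mul_le_mul_of_nonneg_right h1 hδpos.le
  have hs_geA : ∀ x ∈ A, 1 - ((d:ℝ)+1)*δ ≤ s x := by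
    intro x hx
    have h1 := hsumA x hx
    have h2 := hsub x
    rw [Finset.sum_sub_distrib] at h2
    simp only [hsdef]
    linarith
  -- almost invariance of s
  have hs_shift : ∀ g ∈ K, ∀ x : X, |s (g • x) - s x| ≤ 2*((d:ℝ)+1)*δ := by
    intro g hg x
    have habs : |s (g • x) - s x| ≤ ∑ i, |m i (g • x) - m i x| := by
      simp only [hsdef]
      rw [← Finset.sum_sub_distrib]
      exact Finset.abs_sum_le_sum_abs _ _
    set F := Finset.univ.filter (fun i => φ i x ≠ 0 ∨ φ i (g • x) ≠ 0) with hFdef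
    have e : ∑ i ∈ F, |m i (g • x) - m i x| = ∑ i, |m i (g • x) - m i x| := by
      apply Finset.sum_filter_of_ne
      intro i _ hfne
      by_contra h0
      push_neg at h0
      have m1 : m i x = 0 := le_antisymm (h0.1 ▸ hm_le_phi i x) (hm_nonneg i x)
      have m2 : m i (g • x) = 0 := le_antisymm (h0.2 ▸ hm_le_phi i (g • x)) (hm_nonneg i (g • x))
      exact hfne (by rw [m1, m2]; simp)
    have hFcard : F.card ≤ 2*(d+1) := by
      have hsubF : F ⊆ (Finset.univ.filter fun i => φ i x ≠ 0)
          ∪ (Finset.univ.filter fun i => φ i (g • x) ≠ 0) := by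
        intro i hi
        rcases (Finset.mem_filter.mp hi).2 with h | h
        · exact Finset.mem_union_left _ (Finset.mem_filter.mpr ⟨Finset.mem_univ _, h⟩)
        · exact Finset.mem_union_right _ (Finset.mem_filter.mpr ⟨Finset.mem_univ _, h⟩)
      calc F.card ≤ _ := Finset.card_le_card hsubF
        _ ≤ _ := Finset.card_union_le _ _
        _ ≤ (d+1) + (d+1) := add_le_add (hcard x) (hcard (g • x))
        _ = 2*(d+1) := by ring
    calc |s (g • x) - s x| ≤ ∑ i, |m i (g • x) - m i x| := habs
      _ = ∑ i ∈ F, |m i (g • x) - m i x| := e.symm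
      _ ≤ ∑ _i ∈ F, δ := Finset.sum_le_sum fun i _ => hm_shift i g hg x
      _ = F.card * δ := by rw [Finset.sum_const, nsmul_eq_mul]
      _ ≤ 2*((d:ℝ)+1)*δ := by
          have h1 : (F.card : ℝ) ≤ 2*((d:ℝ)+1) := by exact_mod_cast hFcard
          exact mul_le_mul_of_nonneg_right h1 hδpos.le
  -- normalization
  set c : ℝ := 1 - ((d:ℝ)+1)*δ with hcdef
  have hc2 : 1/2 ≤ c := by simp only [hcdef]; linarith
  have hc1 : c ≤ 1 := by
    have : 0 ≤ ((d:ℝ)+1)*δ := by positivity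
    simp only [hcdef]; linarith
  set den : X → ℝ := fun x => max c (s x) with hdendef
  have hden_ge : ∀ x, 1/2 ≤ den x := fun x => le_trans hc2 (le_max_left _ _)
  have hden_pos : ∀ x, 0 < den x := fun x => lt_of_lt_of_le (by norm_num) (hden_ge x)
  have hden_le1 : ∀ x, den x ≤ 1 := fun x => max_le hc1 (hs_le1 x)
  have hs_le_den : ∀ x, s x ≤ den x := fun x => le_max_right _ _
  have hden_cont : Continuous den := continuous_const.max hs_cont
  set ψ : Fin n → X → ℝ := fun i x => m i x / den x with hψdef
  -- supports
  have hsupp_eq : ∀ i, Function.support (ψ i) = Function.support (m i) := by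
    intro i
    ext x
    simp only [Function.mem_support, hψdef]
    constructor
    · intro h h0
      exact h (by rw [h0, zero_div])
    · intro h h0
      exact h ((div_eq_zero_iff.mp h0).resolve_right (hden_pos x).ne')
  have hts_eq : ∀ i, tsupport (ψ i) = tsupport (m i) := by
    intro i
    unfold tsupport
    rw [hsupp_eq i]
  have hLsupp : ∀ i, L • tsupport (ψ i) ⊆ tsupport (φ i) := by
    intro i
    have hC : tsupport (m i) ⊆ {x | ∀ h ∈ L', h • x ∈ tsupport (φ i)} := by
      apply closure_minimal
      · intro x hx h hh
        have hmx : 0 < m i x := lt_of_le_of_ne (hm_nonneg i x) (Ne.symm hx)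
        have hpos : 0 < φ i (h • x) := lt_of_lt_of_le hmx (hm_le i x h hh)
        exact subset_closure (Function.mem_support.mpr hpos.ne')
      · have e : {x | ∀ h ∈ L', h • x ∈ tsupport (φ i)}
            = ⋂ h ∈ L', (fun x : X => h • x) ⁻¹' tsupport (φ i) := by
          ext x
          simp [Set.mem_iInter]
        rw [e]
        exact isClosed_biInter fun h _ => (isClosed_tsupport _).preimage (continuous_const_smul h)
    intro y hy
    rw [Set.mem_smul] at hy
    obtain ⟨g, hg, x, hx, rfl⟩ := hy
    rw [hts_eq i] at hx
    exact hC hx g (hLL' hg)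
  -- conclusion
  refine ⟨n, ψ, cls, ?_, ?_, ?_, ?_, ?_, ?_, ?_⟩
  · exact fun i => (hm_cont i).div hden_cont fun x => (hden_pos x).ne'
  · intro i x
    constructor
    · exact div_nonneg (hm_nonneg i x) (hden_pos x).le
    · exact (div_le_one (hden_pos x)).mpr (le_trans (hm_le_s i x) (hs_le_den x))
  · intro x
    simp only [hψdef]
    rw [← Finset.sum_div]
    exact (div_le_one (hden_pos x)).mpr (hs_le_den x)
  · intro x hx
    have h1 : den x = s x := max_eq_right (by have := hs_geA x hx; simp only [hcdef]; linarith)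
    have h2 : s x ≠ 0 := by
      have := hs_geA x hx
      have h3 := hδd
      intro h0
      rw [h0] at this
      linarith
    simp only [hψdef]
    rw [← Finset.sum_div, h1]
    exact div_self h2
  · intro i g hg x
    have ha : |m i (g • x) - m i x| ≤ δ := hm_shift i g hg x
    have hdd : |den (g • x) - den x| ≤ 2*((d:ℝ)+1)*δ := by
      have h1 : |max (s (g • x)) c - max (s x) c| ≤ |s (g • x) - s x| :=
        abs_max_sub_max_le_abs _ _ _
      simp only [hdendef]
      rw [max_comm c, max_comm c]
      exact le_trans h1 (hs_shift g hg x)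
    set a := m i (g • x) with hadef
    set b := m i x with hbdef
    set u := den (g • x) with hudef
    set v := den x with hvdef
    have hu2 : 1/2 ≤ u := hden_ge _
    have hv2 : 1/2 ≤ v := hden_ge _
    have hu1 : u ≤ 1 := hden_le1 _
    have hv1 : v ≤ 1 := hden_le1 _
    have hupos : 0 < u := hden_pos _
    have hvpos : 0 < v := hden_pos _
    have hb0 : 0 ≤ b := hm_nonneg i x
    have hb1 : b ≤ 1 := le_trans (le_trans (hm_le_s i x) (hs_le_den x)) hv1
    have habs2 : |a*v - u*b| ≤ (2*(d:ℝ)+3)*δ := by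
      have e2 : a*v - u*b = (a-b)*v + b*(v-u) := by ring
      rw [e2]
      calc |(a-b)*v + b*(v-u)| ≤ |(a-b)*v| + |b*(v-u)| := abs_add_le _ _
        _ = |a-b| * |v| + |b| * |v-u| := by rw [abs_mul, abs_mul]
        _ ≤ δ*1 + 1*(2*((d:ℝ)+1)*δ) := by
            apply add_le_add
            · exact mul_le_mul ha (by rw [abs_of_pos hvpos]; exact hv1)
                (abs_nonneg _) hδpos.le
            · have h3 : |v - u| ≤ 2*((d:ℝ)+1)*δ := by rwa [abs_sub_comm]
              exact mul_le_mul (by rwa [abs_of_nonneg hb0]) h3 (abs_nonneg _) (by norm_num)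
        _ = (2*(d:ℝ)+3)*δ := by ring
    have hgoal : |a*v - u*b| < ε * (u*v) := by
      have huv : (1/2:ℝ)*(1/2) ≤ u*v :=
        mul_le_mul hu2 hv2 (by norm_num) (le_trans (by norm_num) hu2)
      have h4 : ε/4 ≤ ε*(u*v) := by nlinarith [mul_le_mul_of_nonneg_left huv hε.le]
      have h5 : (2*(d:ℝ)+3)*δ < ε/4 := by
        simp only [hDdef] at hδε
        nlinarith
      linarith
    show |a/u - b/v| < ε
    rw [div_sub_div a b hupos.ne' hvpos.ne', abs_div, abs_of_pos (mul_pos hupos hvpos),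
      div_lt_iff₀ (mul_pos hupos hvpos)]
    exact hgoal
  · intro i
    obtain ⟨T, hT, hsubT⟩ := htube i
    exact ⟨T, hT, (hLsupp i).trans hsubT⟩
  · intro i j hne hcls
    exact (hdisj i j hne hcls).mono (hLsupp i) (hLsupp j)
end

section
/- Let G be a locally compact Hausdorff group with left Haar measure m acting continuously on a locally compact Hausdorff space X, let φ : X → ℂ be a bounded continuous function with φ ≠ 0, let K ⊆ G be compact and ε > 0. Suppose B ⊆ G is a compact set with m(B) > 0 such that m(gB △ B) ≤ (ε/‖φ‖_∞)·m(B) for all g ∈ K. Then the function ψ : X → ℂ defined by ψ(x) = (1/m(B)) ∫_B φ(g⁻¹·x) dm(g) is continuous and (K, ε)-Følner, i.e. |ψ(g·x) − ψ(x)| ≤ ε for all g ∈ K and all x ∈ X. -/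
open scoped Pointwise symmDiff BoundedContinuousFunction
open MeasureTheory

/-- Continuity of a parametric integral over a compact set, without countability
assumptions on the parameter space. -/
lemma cont_param_integral {G : Type*} [TopologicalSpace G] [MeasurableSpace G]
    [T2Space G] [OpensMeasurableSpace G]
    {X : Type*} [TopologicalSpace X]
    (m : Measure G) [IsFiniteMeasureOnCompacts m]
    {f : G × X → ℂ} (hf : Continuous f) {B : Set G} (hBc : IsCompact B) :
    Continuous (fun x => ∫ g in B, f (g, x) ∂m) := by
  rw [continuous_iff_continuousAt]
  intro x₀
  rw [ContinuousAt, Metric.tendsto_nhds]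
  intro ε hε
  set M : ℝ := (m B).toReal + 1 with hM
  have hMpos : 0 < M := by positivity
  set δ : ℝ := ε / (2 * M) with hδ
  have hδpos : 0 < δ := by positivity
  -- tube lemma
  have hopen : IsOpen {p : G × X | ‖f p - f (p.1, x₀)‖ < δ} := by
    have : Continuous fun p : G × X => ‖f p - f (p.1, x₀)‖ := by fun_prop
    exact isOpen_lt this continuous_const
  have hsub : B ×ˢ ({x₀} : Set X) ⊆ {p : G × X | ‖f p - f (p.1, x₀)‖ < δ} := by
    rintro ⟨g, x⟩ ⟨hg, hx⟩
    simp only [Set.mem_singleton_iff] at hx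
    subst hx
    simpa using hδpos
  obtain ⟨u, v, _, hv, _, hx₀v, huv⟩ :=
    generalized_tube_lemma hBc isCompact_singleton hopen hsub
  filter_upwards [hv.mem_nhds (hx₀v rfl)] with x hx
  have hint : ∀ y : X, IntegrableOn (fun g => f (g, y)) B m := fun y =>
    ((hf.comp (by fun_prop : Continuous fun g : G => (g, y))).continuousOn).integrableOn_compact hBc
  rw [dist_eq_norm, ← integral_sub (hint x) (hint x₀)]
  have hb : ‖∫ g in B, (f (g, x) - f (g, x₀)) ∂m‖ ≤ δ * (m B).toReal := by
    apply norm_setIntegral_le_of_norm_le_const_ae hBc.measure_lt_top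
    filter_upwards [ae_restrict_mem hBc.isClosed.measurableSet] with g hg
    exact le_of_lt (huv ⟨Set.mem_of_subset_of_mem ‹B ⊆ u› hg, hx⟩)
  calc ‖∫ g in B, (f (g, x) - f (g, x₀)) ∂m‖ ≤ δ * (m B).toReal := hb
    _ ≤ δ * M := mul_le_mul_of_nonneg_left (by simp [hM]) hδpos.le
    _ = ε / 2 := by rw [hδ]; field_simp
    _ < ε := by linarith

/-- **Averaging over a Følner set produces Følner functions.**
Let `G` be a locally compact Hausdorff group with left Haar measure `m` acting continuously
on a locally compact Hausdorff space `X`, let `φ : X → ℂ` be a bounded continuous function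
with `φ ≠ 0`, `K ⊆ G` compact and `ε > 0`.  If `B ⊆ G` is compact with `m(B) > 0` and
`m(gB △ B) ≤ (ε/‖φ‖_∞)·m(B)` for all `g ∈ K`, then
`ψ(x) = (1/m(B)) ∫_B φ(g⁻¹·x) dm(g)` is continuous and `(K, ε)`-Følner, i.e.
`|ψ(g·x) − ψ(x)| ≤ ε` for all `g ∈ K`, `x ∈ X`. -/
theorem stmt_15 {G : Type*} [Group G] [TopologicalSpace G] [IsTopologicalGroup G]
    [LocallyCompactSpace G] [T2Space G] [MeasurableSpace G] [BorelSpace G]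
    (m : Measure G) [m.IsHaarMeasure]
    {X : Type*} [TopologicalSpace X] [LocallyCompactSpace X] [T2Space X]
    [MulAction G X] [ContinuousSMul G X]
    (φ : X →ᵇ ℂ) (hφ : φ ≠ 0)
    (K : Set G) (hK : IsCompact K) (ε : ℝ) (hε : 0 < ε)
    (B : Set G) (hBc : IsCompact B) (hBpos : 0 < m B)
    (hFolner : ∀ g ∈ K, m ((g • B) ∆ B) ≤ ENNReal.ofReal (ε / ‖φ‖) * m B)
    (ψ : X → ℂ) (hψ : ∀ x : X, ψ x = ((m B).toReal)⁻¹ • ∫ g in B, φ (g⁻¹ • x) ∂m) :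
    Continuous ψ ∧ ∀ g ∈ K, ∀ x : X, ‖ψ (g • x) - ψ x‖ ≤ ε := by
  have hψeq : ψ = fun x => ((m B).toReal)⁻¹ • ∫ g in B, φ (g⁻¹ • x) ∂m := funext hψ
  have hφpos : 0 < ‖φ‖ := norm_pos_iff.2 hφ
  have hBfin : m B < ⊤ := hBc.measure_lt_top
  have hBMpos : 0 < (m B).toReal := ENNReal.toReal_pos hBpos.ne' hBfin.ne
  have hfc : Continuous fun p : G × X => (φ (p.1⁻¹ • p.2) : ℂ) := by
    apply φ.continuous.comp
    fun_prop
  constructor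
  · rw [hψeq]
    exact (cont_param_integral m hfc hBc).const_smul ((m B).toReal)⁻¹
  · intro g hg x
    -- change of variables
    have hintc : ∀ y : X, Continuous fun k : G => (φ (k⁻¹ • y) : ℂ) := fun y =>
      hfc.comp (by fun_prop : Continuous fun k : G => (k, y))
    set A : Set G := g⁻¹ • B with hA
    have hAc : IsCompact A := hBc.smul g⁻¹
    have hAfin : m A < ⊤ := hAc.measure_lt_top
    have hchg : ∫ h in B, (φ (h⁻¹ • (g • x)) : ℂ) ∂m = ∫ k in A, (φ (k⁻¹ • x) : ℂ) ∂m := by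
      have hmp : MeasurePreserving (fun h : G => g⁻¹ * h) m m :=
        measurePreserving_mul_left m g⁻¹
      have hemb : MeasurableEmbedding (fun h : G => g⁻¹ * h) :=
        (MeasurableEquiv.mulLeft g⁻¹).measurableEmbedding
      have himg : (fun h : G => g⁻¹ * h) '' B = A := by
        rw [hA, ← Set.image_smul]; rfl
      rw [← himg, hmp.setIntegral_image_emb hemb]
      congr 1
      ext h
      rw [mul_inv_rev, inv_inv, mul_smul]
    -- measure of the symmetric difference of A and B
    have hABsd : m (A ∆ B) = m ((g • B) ∆ B) := by
      have : (fun h : G => g * h) ⁻¹' ((g • B) ∆ B) = B ∆ A := by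
        rw [Set.preimage_symmDiff]
        congr 1
        · ext h; simp [Set.mem_smul_set]
        · ext h; simp [hA, Set.mem_smul_set]
          constructor
          · intro hh; exact ⟨g * h, hh, by group⟩
          · rintro ⟨b, hb, rfl⟩; simpa [mul_assoc] using hb
      rw [symmDiff_comm, ← this, measure_preimage_mul]
    have hAm : MeasurableSet A := hAc.isClosed.measurableSet
    have hBm : MeasurableSet B := hBc.isClosed.measurableSet
    have hsd : m (A ∆ B) = m (A \ B) + m (B \ A) :=
      measure_symmDiff_eq hAm.nullMeasurableSet hBm.nullMeasurableSet
    -- integrability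
    have hintA : IntegrableOn (fun k : G => (φ (k⁻¹ • x) : ℂ)) A m :=
      (hintc x).continuousOn.integrableOn_compact hAc
    have hintB : IntegrableOn (fun k : G => (φ (k⁻¹ • x) : ℂ)) B m :=
      (hintc x).continuousOn.integrableOn_compact hBc
    -- the difference of the two integrals
    have hdiff : (∫ k in A, (φ (k⁻¹ • x) : ℂ) ∂m) - ∫ k in B, (φ (k⁻¹ • x) : ℂ) ∂m
        = (∫ k in A \ B, (φ (k⁻¹ • x) : ℂ) ∂m) - ∫ k in B \ A, (φ (k⁻¹ • x) : ℂ) ∂m := by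
      rw [← integral_inter_add_diff hBm hintA, ← integral_inter_add_diff hAm hintB,
        Set.inter_comm A B]
      ring
    -- norm bounds
    have hbound : ∀ (s : Set G), m s < ⊤ →
        ‖∫ k in s, (φ (k⁻¹ • x) : ℂ) ∂m‖ ≤ ‖φ‖ * (m s).toReal := fun s hs => by
      apply norm_setIntegral_le_of_norm_le_const_ae hs
      filter_upwards with k using φ.norm_coe_le_norm _
    have hAB1 : m (A \ B) < ⊤ := lt_of_le_of_lt (measure_mono Set.diff_subset) hAfin
    have hAB2 : m (B \ A) < ⊤ := lt_of_le_of_lt (measure_mono Set.diff_subset) hBfin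
    -- Følner bound in real numbers
    have hsdle : (m (A ∆ B)).toReal ≤ ε / ‖φ‖ * (m B).toReal := by
      have h1 := hFolner g hg
      rw [← hABsd] at h1
      have h2 : (m (A ∆ B)).toReal ≤ (ENNReal.ofReal (ε / ‖φ‖) * m B).toReal :=
        ENNReal.toReal_mono (by finiteness) h1
      rwa [ENNReal.toReal_mul, ENNReal.toReal_ofReal (by positivity)] at h2
    -- put everything together
    rw [hψ, hψ, hchg, ← smul_sub, hdiff]
    rw [norm_smul, Real.norm_eq_abs, abs_of_nonneg (by positivity)]
    have key : ‖(∫ k in A \ B, (φ (k⁻¹ • x) : ℂ) ∂m) - ∫ k in B \ A, (φ (k⁻¹ • x) : ℂ) ∂m‖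
        ≤ ‖φ‖ * (m (A ∆ B)).toReal := by
      calc _ ≤ ‖∫ k in A \ B, (φ (k⁻¹ • x) : ℂ) ∂m‖ + ‖∫ k in B \ A, (φ (k⁻¹ • x) : ℂ) ∂m‖ :=
            norm_sub_le _ _
        _ ≤ ‖φ‖ * (m (A \ B)).toReal + ‖φ‖ * (m (B \ A)).toReal :=
            add_le_add (hbound _ hAB1) (hbound _ hAB2)
        _ = ‖φ‖ * ((m (A \ B)).toReal + (m (B \ A)).toReal) := by ring
        _ = ‖φ‖ * (m (A ∆ B)).toReal := by
            rw [hsd, ENNReal.toReal_add hAB1.ne hAB2.ne]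
    calc ((m B).toReal)⁻¹ * ‖(∫ k in A \ B, (φ (k⁻¹ • x) : ℂ) ∂m)
          - ∫ k in B \ A, (φ (k⁻¹ • x) : ℂ) ∂m‖
        ≤ ((m B).toReal)⁻¹ * (‖φ‖ * (m (A ∆ B)).toReal) := by
          exact mul_le_mul_of_nonneg_left key (by positivity)
      _ ≤ ((m B).toReal)⁻¹ * (‖φ‖ * (ε / ‖φ‖ * (m B).toReal)) := by
          apply mul_le_mul_of_nonneg_left _ (by positivity)
          exact mul_le_mul_of_nonneg_left hsdle (by positivity)
      _ = ε := by field_simp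
end

section
/- Let G be a locally compact Hausdorff group acting freely and continuously on a locally compact Hausdorff space X, let K ⊆ G be a compact identity neighbourhood and let S be a K-slice. Let proj : K·S → S denote the tube projection (the composition of the inverse of the homeomorphism K × S → K·S with the projection onto S), and let boxint(S) = S ∩ (K·S)°. Define τ : K × K × S → G × X by τ(g, h, x) = (g·h⁻¹, h·x). Then: (1) τ is continuous and injective; (2) the image of τ equals {(g, x) ∈ G × X : x ∈ K·S, g·x ∈ K·S, proj(x) = proj(g·x)}, and τ(K° × K° × boxint(S)) = {(g, x) ∈ G × X : x ∈ (K·S)°, g·x ∈ (K·S)°, proj(x) = proj(g·x)}; (3) the set τ(K° × K° × boxint(S)) is clopen in the subspace {(g, x) ∈ G × X : x ∈ (K·S)°, g·x ∈ (K·S)°}. -/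
open scoped Pointwise
open Filter Topology

/-- Limit identification for slices: if a net of points `c a • t a` with `c a ∈ K`, `t a ∈ S`
converges to `k • s` with `k ∈ K`, `s ∈ S`, then `(c a, t a) → (k, s)`. -/
private lemma slice_lim {G X : Type*} [Group G] [TopologicalSpace G] [TopologicalSpace X]
    [T2Space X] [MulAction G X] [ContinuousSMul G X]
    {K : Set G} (hKc : IsCompact K) {S : Set X} (hS : IsSlice K S)
    {α : Type*} {U : Ultrafilter α} {c : α → G} {t : α → X}
    (hmem : ∀ᶠ a in (U : Filter α), c a ∈ K ∧ t a ∈ S)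
    {k : G} {s : X} (hk : k ∈ K) (hs : s ∈ S)
    (hlim : Tendsto (fun a => c a • t a) (U : Filter α) (𝓝 (k • s))) :
    Tendsto (fun a => (c a, t a)) (U : Filter α) (𝓝 (k, s)) := by
  have hVP : (↑(U.map fun a => (c a, t a)) : Filter (G × X)) ≤ 𝓟 (K ×ˢ S) := by
    rw [Ultrafilter.coe_map, le_principal_iff, mem_map]
    filter_upwards [hmem] with a ha
    exact ⟨ha.1, ha.2⟩
  obtain ⟨p, hpmem, hpV⟩ := (hKc.prod hS.1).ultrafilter_le_nhds _ hVP
  rw [Ultrafilter.coe_map] at hpV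
  have hT : Tendsto (fun a => (c a, t a)) (U : Filter α) (𝓝 p) := hpV
  have h1 : Tendsto (fun a => c a • t a) (U : Filter α) (𝓝 (p.1 • p.2)) :=
    (continuous_smul.tendsto p).comp hT
  have hval : p.1 • p.2 = k • s := tendsto_nhds_unique h1 hlim
  have hps : p = (k, s) := hS.2 hpmem ⟨hk, hs⟩ hval
  rwa [hps] at hT

/-- Translation lemma: if `k • s` is in the interior of the tube and `b * k` is in the
interior of `K`, then `b • (k • s)` is in the interior of the tube. -/
private lemma tube_trans {G X : Type*} [Group G] [TopologicalSpace G]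
    [IsTopologicalGroup G] [TopologicalSpace X] [T2Space X] [MulAction G X] [ContinuousSMul G X]
    {K : Set G} (hKc : IsCompact K) {S : Set X} (hS : IsSlice K S)
    {k : G} {s : X} (hk : k ∈ K) (hs : s ∈ S) (hW : k • s ∈ interior (K • S))
    {b : G} (hbk : b * k ∈ interior K) : b • (k • s) ∈ interior (K • S) := by
  classical
  by_contra hcon
  have h1 : b • (k • s) ∈ closure ((K • S)ᶜ) := by rw [closure_compl]; exact hcon
  have hne : (𝓝 (b • (k • s)) ⊓ 𝓟 ((K • S)ᶜ)).NeBot := mem_closure_iff_clusterPt.1 h1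
  obtain ⟨U, hU⟩ := Filter.exists_ultrafilter_le (𝓝 (b • (k • s)) ⊓ 𝓟 ((K • S)ᶜ))
  have hUn : (U : Filter X) ≤ 𝓝 (b • (k • s)) := hU.trans inf_le_left
  have hUc : ∀ᶠ y in (U : Filter X), y ∈ (K • S)ᶜ :=
    le_principal_iff.1 (hU.trans inf_le_right)
  have htd : Tendsto (fun y : X => b⁻¹ • y) (U : Filter X) (𝓝 (k • s)) := by
    have hc := (continuous_const_smul b⁻¹ : Continuous fun y : X => b⁻¹ • y).tendsto
      (b • (k • s))
    rw [inv_smul_smul] at hc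
    exact hc.mono_left hUn
  have hmemW : ∀ᶠ y in (U : Filter X), b⁻¹ • y ∈ K • S := by
    filter_upwards [htd.eventually_mem (isOpen_interior.mem_nhds hW)] with y hy
    exact interior_subset hy
  have hrep : ∀ y : X, ∃ p : G × X, y ∈ K • S → p.1 ∈ K ∧ p.2 ∈ S ∧ p.1 • p.2 = y := by
    intro y
    by_cases hy : y ∈ K • S
    · rcases Set.mem_smul.1 hy with ⟨g, hg, x, hx, hgx⟩
      exact ⟨(g, x), fun _ => ⟨hg, hx, hgx⟩⟩
    · exact ⟨(1, y), fun h => absurd h hy⟩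
  choose f hf using hrep
  have hf1 : ∀ y ∈ K • S, (f y).1 ∈ K := fun y hy => (hf y hy).1
  have hf2 : ∀ y ∈ K • S, (f y).2 ∈ S := fun y hy => (hf y hy).2.1
  have hf3 : ∀ y ∈ K • S, (f y).1 • (f y).2 = y := fun y hy => (hf y hy).2.2
  have hmem2 : ∀ᶠ y in (U : Filter X), (f (b⁻¹ • y)).1 ∈ K ∧ (f (b⁻¹ • y)).2 ∈ S :=
    hmemW.mono fun y hy => ⟨hf1 _ hy, hf2 _ hy⟩
  have hlim2 : Tendsto (fun y => (f (b⁻¹ • y)).1 • (f (b⁻¹ • y)).2)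
      (U : Filter X) (𝓝 (k • s)) := by
    refine Filter.Tendsto.congr' ?_ htd
    filter_upwards [hmemW] with y hy
    exact (hf3 _ hy).symm
  have hct := slice_lim hKc hS hmem2 hk hs hlim2
  have hc1 : Tendsto (fun y => (f (b⁻¹ • y)).1) (U : Filter X) (𝓝 k) :=
    (continuous_fst.tendsto (k, s)).comp hct
  have hcb : Tendsto (fun y => b * (f (b⁻¹ • y)).1) (U : Filter X) (𝓝 (b * k)) :=
    ((continuous_mul_left b).tendsto k).comp hc1
  have hbK : ∀ᶠ y in (U : Filter X), b * (f (b⁻¹ • y)).1 ∈ K := by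
    filter_upwards [hcb.eventually_mem (isOpen_interior.mem_nhds hbk)] with y hy
    exact interior_subset hy
  have hfin : ∀ᶠ y in (U : Filter X), y ∈ K • S := by
    filter_upwards [hbK, hmemW] with y h1 h2
    have hy : y = (b * (f (b⁻¹ • y)).1) • (f (b⁻¹ • y)).2 := by
      rw [mul_smul, hf3 _ h2, smul_inv_smul]
    rw [hy]
    exact Set.smul_mem_smul h1 (hf2 _ h2)
  rcases (hfin.and hUc).exists with ⟨y, hy1, hy2⟩
  exact hy2 hy1

/-- If `k • s` is in the interior of the tube with `k ∈ K`, `s ∈ S`, then `k ∈ interior K`. -/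
private lemma slice_mem_interior_K {G X : Type*} [Group G] [TopologicalSpace G]
    [IsTopologicalGroup G] [TopologicalSpace X] [T2Space X] [MulAction G X] [ContinuousSMul G X]
    {K : Set G} (hKc : IsCompact K) (hKn : K ∈ 𝓝 (1 : G)) {S : Set X} (hS : IsSlice K S)
    {k : G} {s : X} (hk : k ∈ K) (hs : s ∈ S) (hW : k • s ∈ interior (K • S)) :
    k ∈ interior K := by
  classical
  by_contra hcon
  have h1 : k ∈ closure Kᶜ := by rw [closure_compl]; exact hcon
  have hne : (𝓝 k ⊓ 𝓟 Kᶜ).NeBot := mem_closure_iff_clusterPt.1 h1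
  obtain ⟨U, hU⟩ := Filter.exists_ultrafilter_le (𝓝 k ⊓ 𝓟 Kᶜ)
  have hUn : (U : Filter G) ≤ 𝓝 k := hU.trans inf_le_left
  have hUc : ∀ᶠ a in (U : Filter G), a ∈ Kᶜ := le_principal_iff.1 (hU.trans inf_le_right)
  have hid : Tendsto (fun a : G => a) (U : Filter G) (𝓝 k) := tendsto_id'.2 hUn
  have htd : Tendsto (fun a : G => a • s) (U : Filter G) (𝓝 (k • s)) :=
    ((continuous_id.smul continuous_const).tendsto k).mono_left hUn
  have hmemW : ∀ᶠ a in (U : Filter G), a • s ∈ K • S := by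
    filter_upwards [htd.eventually_mem (isOpen_interior.mem_nhds hW)] with a ha
    exact interior_subset ha
  have hrep : ∀ y : X, ∃ p : G × X, y ∈ K • S → p.1 ∈ K ∧ p.2 ∈ S ∧ p.1 • p.2 = y := by
    intro y
    by_cases hy : y ∈ K • S
    · rcases Set.mem_smul.1 hy with ⟨g, hg, x, hx, hgx⟩
      exact ⟨(g, x), fun _ => ⟨hg, hx, hgx⟩⟩
    · exact ⟨(1, y), fun h => absurd h hy⟩
  choose f hf using hrep
  have hf1 : ∀ y ∈ K • S, (f y).1 ∈ K := fun y hy => (hf y hy).1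
  have hf2 : ∀ y ∈ K • S, (f y).2 ∈ S := fun y hy => (hf y hy).2.1
  have hf3 : ∀ y ∈ K • S, (f y).1 • (f y).2 = y := fun y hy => (hf y hy).2.2
  have hmem2 : ∀ᶠ a in (U : Filter G), (f (a • s)).1 ∈ K ∧ (f (a • s)).2 ∈ S :=
    hmemW.mono fun a ha => ⟨hf1 _ ha, hf2 _ ha⟩
  have hlim2 : Tendsto (fun a => (f (a • s)).1 • (f (a • s)).2)
      (U : Filter G) (𝓝 (k • s)) := by
    refine Filter.Tendsto.congr' ?_ htd
    filter_upwards [hmemW] with a ha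
    exact (hf3 _ ha).symm
  have hct := slice_lim hKc hS hmem2 hk hs hlim2
  have hc : Tendsto (fun a => (f (a • s)).1) (U : Filter G) (𝓝 k) :=
    (continuous_fst.tendsto (k, s)).comp hct
  have hd : Tendsto (fun a => ((f (a • s)).1)⁻¹ * a) (U : Filter G) (𝓝 1) := by
    have := (hc.inv).mul hid
    rwa [inv_mul_cancel] at this
  have hdK : ∀ᶠ a in (U : Filter G), ((f (a • s)).1)⁻¹ * a ∈ K := hd.eventually_mem hKn
  have h1K : (1 : G) ∈ K := mem_of_mem_nhds hKn
  have hfin : ∀ᶠ a in (U : Filter G), a ∈ K := by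
    filter_upwards [hdK, hmemW] with a h1' h2'
    have hts : (((f (a • s)).1)⁻¹ * a) • s = (1 : G) • ((f (a • s)).2) := by
      rw [one_smul, mul_smul, inv_smul_eq_iff]
      exact (hf3 _ h2').symm
    have heq := hS.2 (Set.mk_mem_prod h1' hs) (Set.mk_mem_prod h1K (hf2 _ h2')) hts
    have hca : ((f (a • s)).1)⁻¹ * a = 1 := congrArg Prod.fst heq
    have ha : a = (f (a • s)).1 := (inv_mul_eq_one.1 hca).symm
    rw [ha]
    exact hf1 _ h2'
  rcases (hfin.and hUc).exists with ⟨a, ha1, ha2⟩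
  exact ha2 ha1

/-- **The pair groupoid inside the restriction of the transformation groupoid to a tube.**
Let `G` act freely on `X`, let `K` be a compact identity neighbourhood, `S` a `K`-slice,
`proj : K·S → S` the tube projection (characterised by `proj (g • s) = s` for `g ∈ K`,
`s ∈ S`), and `boxint S = S ∩ (K·S)°`.  Let `τ(g, h, x) = (g·h⁻¹, h·x)`.  Then:
(1) `τ` is continuous and injective on `K × K × S`;
(2) `τ(K × K × S) = {(g,x) : x ∈ K·S, g·x ∈ K·S, proj x = proj (g·x)}` and
    `τ(K° × K° × boxint S) = {(g,x) : x ∈ (K·S)°, g·x ∈ (K·S)°, proj x = proj (g·x)}`;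
(3) `τ(K° × K° × boxint S)` is clopen in the subspace
    `{(g,x) : x ∈ (K·S)°, g·x ∈ (K·S)°}` of `G × X`. -/
theorem stmt_17 {G : Type*} [Group G] [TopologicalSpace G] [IsTopologicalGroup G]
    [LocallyCompactSpace G] [T2Space G]
    {X : Type*} [TopologicalSpace X] [LocallyCompactSpace X] [T2Space X]
    [MulAction G X] [ContinuousSMul G X]
    (hfree : ∀ (g : G) (x : X), g • x = x → g = 1)
    (K : Set G) (hKc : IsCompact K) (hKn : K ∈ nhds (1 : G))
    (S : Set X) (hS : IsSlice K S)
    (proj : X → X) (hproj : ∀ g ∈ K, ∀ s ∈ S, proj (g • s) = s)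
    (τ : G × G × X → G × X) (hτ : ∀ p : G × G × X, τ p = (p.1 * p.2.1⁻¹, p.2.1 • p.2.2)) :
    (Continuous τ ∧ Set.InjOn τ (K ×ˢ K ×ˢ S)) ∧
    (τ '' (K ×ˢ K ×ˢ S)
        = {p : G × X | p.2 ∈ K • S ∧ p.1 • p.2 ∈ K • S ∧ proj p.2 = proj (p.1 • p.2)} ∧
      τ '' (interior K ×ˢ interior K ×ˢ (S ∩ interior (K • S)))
        = {p : G × X | p.2 ∈ interior (K • S) ∧ p.1 • p.2 ∈ interior (K • S) ∧
            proj p.2 = proj (p.1 • p.2)}) ∧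
    IsClopen {q : {p : G × X // p.2 ∈ interior (K • S) ∧ p.1 • p.2 ∈ interior (K • S)} |
      (q : G × X) ∈ τ '' (interior K ×ˢ interior K ×ˢ (S ∩ interior (K • S)))} := by
  classical
  have hτfun : τ = fun p : G × G × X => (p.1 * p.2.1⁻¹, p.2.1 • p.2.2) := funext hτ
  subst hτfun
  have h1K : (1 : G) ∈ K := mem_of_mem_nhds hKn
  have h1int : (1 : G) ∈ interior K := mem_interior_iff_mem_nhds.2 hKn
  have hfree' : ∀ (c c' : G) (x : X), c • x = c' • x → c = c' := by
    intro c c' x h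
    have h2 : (c'⁻¹ * c) • x = x := by rw [mul_smul, h, inv_smul_smul]
    exact (inv_mul_eq_one.1 (hfree _ _ h2)).symm
  -- choice of representation on the tube
  have hrep : ∀ y : X, ∃ p : G × X, y ∈ K • S → p.1 ∈ K ∧ p.2 ∈ S ∧ p.1 • p.2 = y := by
    intro y
    by_cases hy : y ∈ K • S
    · rcases Set.mem_smul.1 hy with ⟨g, hg, x, hx, hgx⟩
      exact ⟨(g, x), fun _ => ⟨hg, hx, hgx⟩⟩
    · exact ⟨(1, y), fun h => absurd h hy⟩
  choose f hf using hrep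
  have hf1 : ∀ y ∈ K • S, (f y).1 ∈ K := fun y hy => (hf y hy).1
  have hf2 : ∀ y ∈ K • S, (f y).2 ∈ S := fun y hy => (hf y hy).2.1
  have hf3 : ∀ y ∈ K • S, (f y).1 • (f y).2 = y := fun y hy => (hf y hy).2.2
  set π : X → G := fun y => (f y).1 with hπdef
  have hprojf : ∀ y ∈ K • S, proj y = (f y).2 := by
    intro y hy
    conv_lhs => rw [← hf3 y hy]
    exact hproj _ (hf1 y hy) _ (hf2 y hy)
  have hπK : ∀ y ∈ K • S, π y ∈ K := fun y hy => hf1 y hy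
  have hπS : ∀ y ∈ K • S, proj y ∈ S := fun y hy => (hprojf y hy) ▸ hf2 y hy
  have hπsmul : ∀ y ∈ K • S, π y • proj y = y := fun y hy => by
    rw [hprojf y hy]; exact hf3 y hy
  -- D : interior points of K move interior points of the tube into the interior
  have hD : ∀ b ∈ interior K, ∀ x ∈ S, x ∈ interior (K • S) → b • x ∈ interior (K • S) := by
    intro b hb x hxS hxW
    have := tube_trans hKc hS h1K hxS (by rwa [one_smul])
      (b := b) (by rwa [mul_one])
    rwa [one_smul] at this
  -- C : the projection of an interior point of the tube is an interior point
  have hC : ∀ y ∈ K • S, y ∈ interior (K • S) → proj y ∈ interior (K • S) := by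
    intro y hyT hyW
    have := tube_trans hKc hS (hπK _ hyT) (hπS _ hyT)
      (by rw [hπsmul _ hyT]; exact hyW) (b := (π y)⁻¹)
      (by rw [inv_mul_cancel]; exact h1int)
    rwa [inv_smul_smul] at this
  -- key computation for the reverse inclusions
  have hkey : ∀ a : G, ∀ y : X, y ∈ K • S → a • y ∈ K • S → proj y = proj (a • y) →
      a * π y = π (a • y) := by
    intro a y hy hay hpe
    have h1 : (a * π y) • proj y = π (a • y) • proj y := by
      rw [mul_smul, hπsmul _ hy, hpe, hπsmul _ hay]
    exact hfree' _ _ _ h1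
  -- continuity of (π, proj) on the tube
  have hpair : ContinuousOn (fun y => (π y, proj y)) (K • S) := by
    intro y₀ hy₀
    rw [ContinuousWithinAt, tendsto_iff_ultrafilter]
    intro U hUle
    have hmemT : ∀ᶠ y in (U : Filter X), y ∈ K • S := hUle self_mem_nhdsWithin
    have hid : Tendsto (fun y : X => y) (U : Filter X) (𝓝 y₀) :=
      tendsto_id'.2 (hUle.trans nhdsWithin_le_nhds)
    have hlim : Tendsto (fun y => π y • proj y) (U : Filter X) (𝓝 (π y₀ • proj y₀)) := by
      rw [hπsmul _ hy₀]
      refine Filter.Tendsto.congr' ?_ hid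
      filter_upwards [hmemT] with y hy
      exact (hπsmul _ hy).symm
    exact slice_lim hKc hS (hmemT.mono fun y hy => ⟨hπK _ hy, hπS _ hy⟩)
      (hπK _ hy₀) (hπS _ hy₀) hlim
  -- Part (1)
  have hcont : Continuous fun p : G × G × X => (p.1 * p.2.1⁻¹, p.2.1 • p.2.2) := by
    fun_prop
  have hinj : Set.InjOn (fun p : G × G × X => (p.1 * p.2.1⁻¹, p.2.1 • p.2.2))
      (K ×ˢ K ×ˢ S) := by
    rintro ⟨g, h, x⟩ ⟨hg, hh, hx⟩ ⟨g', h', x'⟩ ⟨hg', hh', hx'⟩ heq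
    have h1 : g * h⁻¹ = g' * h'⁻¹ := congrArg Prod.fst heq
    have h2 : h • x = h' • x' := congrArg Prod.snd heq
    have h3 := hS.2 (Set.mk_mem_prod hh hx) (Set.mk_mem_prod hh' hx') h2
    have hh2 : h = h' := congrArg Prod.fst h3
    have hx2 : x = x' := congrArg Prod.snd h3
    subst hh2; subst hx2
    have : g = g' := by
      have := mul_right_cancel (a := g) (b := h⁻¹) (c := g') h1
      exact this
    subst this
    rfl
  -- Part (2a)
  have himage1 : (fun p : G × G × X => (p.1 * p.2.1⁻¹, p.2.1 • p.2.2)) '' (K ×ˢ K ×ˢ S)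
      = {p : G × X | p.2 ∈ K • S ∧ p.1 • p.2 ∈ K • S ∧ proj p.2 = proj (p.1 • p.2)} := by
    ext ⟨a, y⟩
    constructor
    · rintro ⟨⟨g, h, x⟩, ⟨hg, hh, hx⟩, heq⟩
      obtain ⟨ha, hy⟩ := Prod.mk.inj heq
      subst ha; subst hy
      have hval : (g * h⁻¹) • h • x = g • x := by
        rw [smul_smul, inv_mul_cancel_right]
      refine ⟨Set.smul_mem_smul hh hx, ?_, ?_⟩
      · rw [hval]; exact Set.smul_mem_smul hg hx
      · rw [hval, hproj h hh x hx, hproj g hg x hx]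
    · rintro ⟨hy, hay, hpe⟩
      refine ⟨(π (a • y), π y, proj y),
        Set.mk_mem_prod (hπK _ hay) (Set.mk_mem_prod (hπK _ hy) (hπS _ hy)), ?_⟩
      have h5 : a * π y = π (a • y) := hkey a y hy hay hpe
      simp only [Prod.mk.injEq]
      refine ⟨?_, hπsmul _ hy⟩
      rw [← h5, mul_inv_cancel_right]
  -- Part (2b)
  have himage2 : (fun p : G × G × X => (p.1 * p.2.1⁻¹, p.2.1 • p.2.2)) ''
      (interior K ×ˢ interior K ×ˢ (S ∩ interior (K • S)))
      = {p : G × X | p.2 ∈ interior (K • S) ∧ p.1 • p.2 ∈ interior (K • S) ∧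
          proj p.2 = proj (p.1 • p.2)} := by
    ext ⟨a, y⟩
    constructor
    · rintro ⟨⟨g, h, x⟩, ⟨hg, hh, hxS, hxW⟩, heq⟩
      obtain ⟨ha, hy⟩ := Prod.mk.inj heq
      subst ha; subst hy
      have hval : (g * h⁻¹) • h • x = g • x := by
        rw [smul_smul, inv_mul_cancel_right]
      refine ⟨hD h hh x hxS hxW, ?_, ?_⟩
      · rw [hval]; exact hD g hg x hxS hxW
      · rw [hval, hproj h (interior_subset hh) x hxS, hproj g (interior_subset hg) x hxS]
    · rintro ⟨hy, hay, hpe⟩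
      have hyT : y ∈ K • S := interior_subset hy
      have hayT : a • y ∈ K • S := interior_subset hay
      refine ⟨(π (a • y), π y, proj y),
        Set.mk_mem_prod ?_ (Set.mk_mem_prod ?_ ⟨hπS _ hyT, hC y hyT hy⟩), ?_⟩
      · exact slice_mem_interior_K hKc hKn hS (hπK _ hayT) (hπS _ hayT)
          (by rw [hπsmul _ hayT]; exact hay)
      · exact slice_mem_interior_K hKc hKn hS (hπK _ hyT) (hπS _ hyT)
          (by rw [hπsmul _ hyT]; exact hy)
      · have h5 : a * π y = π (a • y) := hkey a y hyT hayT hpe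
        simp only [Prod.mk.injEq]
        refine ⟨?_, hπsmul _ hyT⟩
        rw [← h5, mul_inv_cancel_right]
  refine ⟨⟨hcont, hinj⟩, ⟨himage1, himage2⟩, ?_⟩
  -- Part (3)
  have hπcont : ContinuousOn π (K • S) := hpair.fst
  have hψcont : Continuous fun q :
      {p : G × X // p.2 ∈ interior (K • S) ∧ p.1 • p.2 ∈ interior (K • S)} =>
      (q : G × X).1 * π (q : G × X).2 := by
    have hin : Continuous fun q :
        {p : G × X // p.2 ∈ interior (K • S) ∧ p.1 • p.2 ∈ interior (K • S)} =>
        π (q : G × X).2 := by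
      refine hπcont.comp_continuous (continuous_snd.comp continuous_subtype_val) ?_
      intro q
      exact interior_subset q.2.1
    exact (continuous_fst.comp continuous_subtype_val).mul hin
  -- the two descriptions of the set
  have hiff : ∀ q : {p : G × X // p.2 ∈ interior (K • S) ∧ p.1 • p.2 ∈ interior (K • S)},
      ((q : G × X) ∈ (fun p : G × G × X => (p.1 * p.2.1⁻¹, p.2.1 • p.2.2)) ''
        (interior K ×ˢ interior K ×ˢ (S ∩ interior (K • S)))
      ↔ proj (q : G × X).2 = proj ((q : G × X).1 • (q : G × X).2)) := by
    rintro ⟨⟨a, y⟩, hy, hay⟩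
    rw [himage2]
    simp only [Set.mem_setOf_eq]
    exact ⟨fun h => h.2.2, fun h => ⟨hy, hay, h⟩⟩
  have hsub1 : {q : {p : G × X // p.2 ∈ interior (K • S) ∧ p.1 • p.2 ∈ interior (K • S)} |
      (q : G × X) ∈ (fun p : G × G × X => (p.1 * p.2.1⁻¹, p.2.1 • p.2.2)) ''
        (interior K ×ˢ interior K ×ˢ (S ∩ interior (K • S)))}
      = (fun q : {p : G × X // p.2 ∈ interior (K • S) ∧ p.1 • p.2 ∈ interior (K • S)} =>
          (q : G × X).1 * π (q : G × X).2) ⁻¹' (interior K) := by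
    ext q
    obtain ⟨⟨a, y⟩, hy, hay⟩ := q
    simp only [Set.mem_setOf_eq, Set.mem_preimage]
    rw [hiff ⟨(a, y), hy, hay⟩]
    have hyT : y ∈ K • S := interior_subset hy
    have hayT : a • y ∈ K • S := interior_subset hay
    constructor
    · intro hpe
      have h5 : a * π y = π (a • y) := hkey a y hyT hayT hpe
      rw [h5]
      exact slice_mem_interior_K hKc hKn hS (hπK _ hayT) (hπS _ hayT)
        (by rw [hπsmul _ hayT]; exact hay)
    · intro hmem
      have hK : a * π y ∈ K := interior_subset hmem
      have : proj (a • y) = proj y := by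
        have hval : a • y = (a * π y) • proj y := by
          rw [mul_smul, hπsmul _ hyT]
        rw [hval]
        exact hproj _ hK _ (hπS _ hyT)
      exact this.symm
  have hsub2 : {q : {p : G × X // p.2 ∈ interior (K • S) ∧ p.1 • p.2 ∈ interior (K • S)} |
      (q : G × X) ∈ (fun p : G × G × X => (p.1 * p.2.1⁻¹, p.2.1 • p.2.2)) ''
        (interior K ×ˢ interior K ×ˢ (S ∩ interior (K • S)))}
      = (fun q : {p : G × X // p.2 ∈ interior (K • S) ∧ p.1 • p.2 ∈ interior (K • S)} =>
          (q : G × X).1 * π (q : G × X).2) ⁻¹' K := by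
    ext q
    obtain ⟨⟨a, y⟩, hy, hay⟩ := q
    simp only [Set.mem_setOf_eq, Set.mem_preimage]
    rw [hiff ⟨(a, y), hy, hay⟩]
    have hyT : y ∈ K • S := interior_subset hy
    have hayT : a • y ∈ K • S := interior_subset hay
    constructor
    · intro hpe
      have h5 : a * π y = π (a • y) := hkey a y hyT hayT hpe
      rw [h5]
      exact hπK _ hayT
    · intro hK
      have : proj (a • y) = proj y := by
        have hval : a • y = (a * π y) • proj y := by
          rw [mul_smul, hπsmul _ hyT]
        rw [hval]
        exact hproj _ hK _ (hπS _ hyT)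
      exact this.symm
  constructor
  · rw [hsub2]
    exact hKc.isClosed.preimage hψcont
  · rw [hsub1]
    exact isOpen_interior.preimage hψcont
end
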